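/- arXiv:1804.04576 — 14 statements merged into one kernel-verified Lean document; each statement's English description precedes it below -/
import Mathlib

section
/- Suppose x̂ ∈ P. Let ‖·‖ be any norm on ℝ^n with dual norm ‖a‖_* = sup{vᵀ a : ‖v‖ ≤ 1}, for each i ∈ I let v̂(a_i) be a maximizer of vᵀ a_i over {v ∈ ℝ^n : ‖v‖ = 1}, and set π_i(x̂) = x̂ − ((a_iᵀ x̂ − b_i)/‖a_i‖_*) · v̂(a_i). Let i* ∈ argmin_{i ∈ I} (a_iᵀ x̂ − b_i)/‖a_i‖_*. Then (c*, y*, ε*) = (a_{i*}/‖a_{i*}‖', e_{i*}/‖a_{i*}‖', x̂ − π_{i*}(x̂)) is an optimal solution of GSIO(x̂): it is feasible and its objective value ‖ε*‖ = min_{i ∈ I} (a_iᵀ x̂ − b_i)/‖a_i‖_* equals the infimum of ‖ε‖ over all feasible (c, y, ε). -/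
/-!
On the feasible set, `cᵀ ε = yᵀ (A x̂ − b) = ∑ yᵢ (aᵢᵀ x̂ − bᵢ)`, while the dual-norm inequality gives
`cᵀ ε = ∑ yᵢ aᵢᵀ ε ≤ ‖ε‖ ∑ yᵢ ‖aᵢ‖_*`. Since every gap `aᵢᵀ x̂ − bᵢ` is at least
`r ‖aᵢ‖_*` with `r` the minimal normalized gap, and `∑ yᵢ ‖aᵢ‖_* > 0` (`y ≥ 0` is nonzero because
`‖Aᵀ y‖' = 1`), this forces `‖ε‖ ≥ r`. The candidate built from the row `i*` attains `r`, because
`v̂(a_{i*})` realizes the dual norm of `a_{i*}`.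
-/

open Matrix

/-- Feasibility for the single-point generalized inverse linear optimization
problem `GSIO(x̂)`: `Aᵀ y = c`, `y ≥ 0`, `cᵀ x̂ = bᵀ y + cᵀ ε`, `‖c‖' = 1`. -/
def GSIOFeas {m n : ℕ} (A : Matrix (Fin m) (Fin n) ℝ) (b : Fin m → ℝ)
    (N : (Fin n → ℝ) → ℝ) (xhat : Fin n → ℝ)
    (c : Fin n → ℝ) (y : Fin m → ℝ) (ε : Fin n → ℝ) : Prop :=
  Aᵀ.mulVec y = c ∧ (∀ i, 0 ≤ y i) ∧ c ⬝ᵥ xhat = b ⬝ᵥ y + c ⬝ᵥ ε ∧ N c = 1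

lemma map_zero_of_abs_homogeneous {E : Type*} [AddCommGroup E] [Module ℝ E] {M : E → ℝ}
    (hsmul : ∀ (t : ℝ) x, M (t • x) = |t| * M x) : M 0 = 0 := by
  simpa using hsmul 0 0

section AbsHomogeneous

variable {ι : Type*} [Fintype ι] {M : (ι → ℝ) → ℝ}

lemma dotProduct_le_mul_of_forall_unit (hsmul : ∀ (t : ℝ) x, M (t • x) = |t| * M x)
    (hpos : ∀ x, x ≠ 0 → 0 < M x) {a : ι → ℝ} {K : ℝ} (hK : ∀ u, M u = 1 → u ⬝ᵥ a ≤ K)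
    (v : ι → ℝ) : v ⬝ᵥ a ≤ K * M v := by
  rcases eq_or_ne v 0 with rfl | hv
  · simp [map_zero_of_abs_homogeneous hsmul]
  have hMv : 0 < M v := hpos v hv
  have hunit : M ((M v)⁻¹ • v) = 1 := by
    rw [hsmul, abs_of_pos (inv_pos.mpr hMv), inv_mul_cancel₀ hMv.ne']
  have := hK _ hunit
  rw [smul_dotProduct, smul_eq_mul, inv_mul_le_iff₀ hMv] at this
  linarith

variable {a : ι → ℝ} {d : ℝ}

lemma dotProduct_le_dualNorm_mul (hsmul : ∀ (t : ℝ) x, M (t • x) = |t| * M x)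
    (hpos : ∀ x, x ≠ 0 → 0 < M x) (hd : IsLUB {t | ∃ v, M v ≤ 1 ∧ t = v ⬝ᵥ a} d)
    (v : ι → ℝ) : v ⬝ᵥ a ≤ d * M v :=
  dotProduct_le_mul_of_forall_unit hsmul hpos (fun u hu => hd.1 ⟨u, hu.le, rfl⟩) v

lemma dualNorm_pos (hsmul : ∀ (t : ℝ) x, M (t • x) = |t| * M x)
    (hpos : ∀ x, x ≠ 0 → 0 < M x) (hd : IsLUB {t | ∃ v, M v ≤ 1 ∧ t = v ⬝ᵥ a} d)
    (ha : a ≠ 0) : 0 < d := by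
  have haa : 0 < a ⬝ᵥ a :=
    lt_of_le_of_ne (Finset.sum_nonneg fun i _ => mul_self_nonneg (a i))
      (Ne.symm (dotProduct_self_eq_zero.not.mpr ha))
  have := dotProduct_le_dualNorm_mul hsmul hpos hd a
  exact pos_of_mul_pos_left (haa.trans_le this) (hpos a ha).le

lemma dotProduct_eq_dualNorm_of_forall_unit_le (hsmul : ∀ (t : ℝ) x, M (t • x) = |t| * M x)
    (hpos : ∀ x, x ≠ 0 → 0 < M x) (hd : IsLUB {t | ∃ v, M v ≤ 1 ∧ t = v ⬝ᵥ a} d)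
    {w : ι → ℝ} (hw : M w = 1)
    (hmax : ∀ u, M u = 1 → u ⬝ᵥ a ≤ w ⬝ᵥ a) : w ⬝ᵥ a = d := by
  refine le_antisymm (hd.1 ⟨w, hw.le, rfl⟩) (hd.2 ?_)
  rintro _ ⟨v, hv, rfl⟩
  -- `-w` is also a unit vector, so the maximum is nonnegative
  have hw_nonneg : 0 ≤ w ⬝ᵥ a := by
    have := hmax (-w) (by rw [← neg_one_smul ℝ w, hsmul, abs_neg, abs_one, one_mul, hw])
    rw [neg_dotProduct] at this
    linarith
  calc v ⬝ᵥ a ≤ w ⬝ᵥ a * M v := dotProduct_le_mul_of_forall_unit hsmul hpos hmax v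
    _ ≤ w ⬝ᵥ a * 1 := mul_le_mul_of_nonneg_left hv hw_nonneg
    _ = w ⬝ᵥ a := mul_one _

end AbsHomogeneous

lemma le_of_dotProduct_eq_of_bounds {ι : Type*} [Fintype ι] {y d g u : ι → ℝ} {r s : ℝ}
    (hy : ∀ i, 0 ≤ y i) (hy0 : y ≠ 0) (hd : ∀ i, 0 < d i)
    (hg : ∀ i, r * d i ≤ g i) (hu : ∀ i, u i ≤ s * d i) (heq : y ⬝ᵥ u = y ⬝ᵥ g) : r ≤ s := by
  obtain ⟨j, hj⟩ := Function.ne_iff.mp hy0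
  have hyd : 0 < y ⬝ᵥ d :=
    Finset.sum_pos' (fun i _ => mul_nonneg (hy i) (hd i).le)
      ⟨j, Finset.mem_univ j, mul_pos ((hy j).lt_of_ne' hj) (hd j)⟩
  have hlow : r * (y ⬝ᵥ d) ≤ y ⬝ᵥ g := by
    rw [dotProduct, Finset.mul_sum]
    exact Finset.sum_le_sum fun i _ => by nlinarith [hg i, hy i]
  have hup : y ⬝ᵥ u ≤ s * (y ⬝ᵥ d) := by
    rw [dotProduct, dotProduct, Finset.mul_sum]
    exact Finset.sum_le_sum fun i _ => by nlinarith [hu i, hy i]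
  exact le_of_mul_le_mul_right (by linarith) hyd

section GSIOFeas

variable {m n : ℕ} {A : Matrix (Fin m) (Fin n) ℝ} {b : Fin m → ℝ} {N : (Fin n → ℝ) → ℝ}
  {xhat : Fin n → ℝ}

lemma GSIOFeas.dotProduct_mulVec_eq {c : Fin n → ℝ} {y : Fin m → ℝ} {ε : Fin n → ℝ}
    (h : GSIOFeas A b N xhat c y ε) : y ⬝ᵥ A *ᵥ ε = y ⬝ᵥ (A *ᵥ xhat - b) := by
  obtain ⟨hc, -, heq, -⟩ := h
  have hdual : ∀ z, c ⬝ᵥ z = y ⬝ᵥ A *ᵥ z := fun z => by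
    rw [← hc, mulVec_transpose, dotProduct_mulVec]
  rw [dotProduct_sub, ← hdual, ← hdual, dotProduct_comm y b]
  linarith

lemma GSIOFeas.dual_ne_zero (hsmul : ∀ (t : ℝ) x, N (t • x) = |t| * N x) {c : Fin n → ℝ}
    {y : Fin m → ℝ} {ε : Fin n → ℝ} (h : GSIOFeas A b N xhat c y ε) : y ≠ 0 := by
  rintro rfl
  obtain ⟨hc, -, -, hN⟩ := h
  rw [← hc, mulVec_zero, map_zero_of_abs_homogeneous hsmul] at hN
  exact zero_ne_one hN

lemma gsioFeas_row (hsmul : ∀ (t : ℝ) x, N (t • x) = |t| * N x) {i : Fin m}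
    (hNa : 0 < N (A i)) {w : Fin n → ℝ} {d : ℝ} (hw : w ⬝ᵥ A i = d) (hd : d ≠ 0) :
    GSIOFeas A b N xhat ((N (A i))⁻¹ • A i) ((N (A i))⁻¹ • (Pi.single i 1 : Fin m → ℝ))
      (((A i ⬝ᵥ xhat - b i) / d) • w) := by
  have hs : 0 < (N (A i))⁻¹ := inv_pos.mpr hNa
  refine ⟨?_, fun j => ?_, ?_, ?_⟩
  · rw [mulVec_smul, mulVec_single_one, col_transpose]
    rfl
  · exact mul_nonneg hs.le
      ((Pi.single_nonneg.mpr zero_le_one : (0 : Fin m → ℝ) ≤ Pi.single i 1) j)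
  · rw [dotProduct_smul, dotProduct_single_one, smul_dotProduct, smul_dotProduct,
      dotProduct_smul, dotProduct_comm (A i) w, hw]
    simp only [smul_eq_mul]
    field_simp
    ring
  · rw [hsmul, abs_of_pos hs, inv_mul_cancel₀ hNa.ne']

end GSIOFeas

theorem stmt_0_general
    (m n : ℕ)
    (A : Matrix (Fin m) (Fin n) ℝ) (b : Fin m → ℝ)
    (hrows : ∀ i, A i ≠ 0)
    -- the normalization norm ‖·‖'
    (N : (Fin n → ℝ) → ℝ)
    (hN₂ : ∀ (a : ℝ) (x : Fin n → ℝ), N (a • x) = |a| * N x)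
    (hN₃ : ∀ x, x ≠ 0 → 0 < N x)
    -- the objective norm ‖·‖
    (M : (Fin n → ℝ) → ℝ)
    (hM₂ : ∀ (a : ℝ) (x : Fin n → ℝ), M (a • x) = |a| * M x)
    (hM₃ : ∀ x, x ≠ 0 → 0 < M x)
    -- the dual norm values ‖a_i‖_* = sup { vᵀ a_i : ‖v‖ ≤ 1 }
    (dstar : Fin m → ℝ)
    (hdstar : ∀ i, IsLUB {t : ℝ | ∃ v : Fin n → ℝ, M v ≤ 1 ∧ t = v ⬝ᵥ A i} (dstar i))
    -- maximizers v̂(a_i) of vᵀ a_i over { v : ‖v‖ = 1 }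
    (vhat : Fin m → Fin n → ℝ)
    (hvhatnorm : ∀ i, M (vhat i) = 1)
    (hvhatmax : ∀ i (v : Fin n → ℝ), M v = 1 → v ⬝ᵥ A i ≤ vhat i ⬝ᵥ A i)
    -- the observed decision x̂ ∈ P
    (xhat : Fin n → ℝ) (hxhatP : ∀ i, b i ≤ A.mulVec xhat i)
    -- the projections π_i(x̂) = x̂ − ((a_iᵀ x̂ − b_i)/‖a_i‖_*) • v̂(a_i)
    (proj : Fin m → Fin n → ℝ)
    (hproj : ∀ i, proj i = xhat - ((A i ⬝ᵥ xhat - b i) / dstar i) • vhat i)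
    -- i* ∈ argmin_i (a_iᵀ x̂ − b_i)/‖a_i‖_*
    (istar : Fin m)
    (histar : ∀ i, (A istar ⬝ᵥ xhat - b istar) / dstar istar ≤ (A i ⬝ᵥ xhat - b i) / dstar i) :
    GSIOFeas A b N xhat ((N (A istar))⁻¹ • A istar)
        ((N (A istar))⁻¹ • (Pi.single istar 1 : Fin m → ℝ)) (xhat - proj istar) ∧
    M (xhat - proj istar) = (A istar ⬝ᵥ xhat - b istar) / dstar istar ∧
    ∀ c y ε, GSIOFeas A b N xhat c y ε → M (xhat - proj istar) ≤ M ε := by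
  have hd : ∀ i, 0 < dstar i := fun i => dualNorm_pos hM₂ hM₃ (hdstar i) (hrows i)
  have hvhat : ∀ i, vhat i ⬝ᵥ A i = dstar i := fun i =>
    dotProduct_eq_dualNorm_of_forall_unit_le hM₂ hM₃ (hdstar i) (hvhatnorm i) (hvhatmax i)
  have hval : M (xhat - proj istar) = (A istar ⬝ᵥ xhat - b istar) / dstar istar := by
    rw [hproj, sub_sub_self, hM₂, hvhatnorm, mul_one, abs_of_nonneg]
    exact div_nonneg (sub_nonneg.mpr (hxhatP istar)) (hd istar).le
  rw [hproj, sub_sub_self] at hval ⊢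
  refine ⟨gsioFeas_row hN₂ (hN₃ _ (hrows istar)) (hvhat istar) (hd istar).ne', hval, ?_⟩
  rintro c y ε hfeas
  rw [hval]
  refine le_of_dotProduct_eq_of_bounds hfeas.2.1 (hfeas.dual_ne_zero hN₂) hd (fun i => ?_)
    (fun i => ?_) hfeas.dotProduct_mulVec_eq
  · exact (le_div_iff₀ (hd i)).mp (histar i)
  · rw [mul_comm, mulVec, dotProduct_comm]
    exact dotProduct_le_dualNorm_mul hM₂ hM₃ (hdstar i) ε

theorem stmt_0
    (m n : ℕ) (hm : 0 < m) (hn : 0 < n)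
    (A : Matrix (Fin m) (Fin n) ℝ) (b : Fin m → ℝ)
    (hrows : ∀ i, A i ≠ 0)
    (hPint : (interior {x : Fin n → ℝ | ∀ i, b i ≤ A.mulVec x i}).Nonempty)
    -- the normalization norm ‖·‖'
    (N : (Fin n → ℝ) → ℝ)
    (hN₁ : ∀ x y, N (x + y) ≤ N x + N y)
    (hN₂ : ∀ (a : ℝ) (x : Fin n → ℝ), N (a • x) = |a| * N x)
    (hN₃ : ∀ x, x ≠ 0 → 0 < N x)
    -- the objective norm ‖·‖
    (M : (Fin n → ℝ) → ℝ)
    (hM₁ : ∀ x y, M (x + y) ≤ M x + M y)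
    (hM₂ : ∀ (a : ℝ) (x : Fin n → ℝ), M (a • x) = |a| * M x)
    (hM₃ : ∀ x, x ≠ 0 → 0 < M x)
    -- the dual norm values ‖a_i‖_* = sup { vᵀ a_i : ‖v‖ ≤ 1 }
    (dstar : Fin m → ℝ)
    (hdstar : ∀ i, IsLUB {t : ℝ | ∃ v : Fin n → ℝ, M v ≤ 1 ∧ t = v ⬝ᵥ A i} (dstar i))
    -- maximizers v̂(a_i) of vᵀ a_i over { v : ‖v‖ = 1 }
    (vhat : Fin m → Fin n → ℝ)
    (hvhatnorm : ∀ i, M (vhat i) = 1)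
    (hvhatmax : ∀ i (v : Fin n → ℝ), M v = 1 → v ⬝ᵥ A i ≤ vhat i ⬝ᵥ A i)
    -- the observed decision x̂ ∈ P
    (xhat : Fin n → ℝ) (hxhatP : ∀ i, b i ≤ A.mulVec xhat i)
    -- the projections π_i(x̂) = x̂ − ((a_iᵀ x̂ − b_i)/‖a_i‖_*) • v̂(a_i)
    (proj : Fin m → Fin n → ℝ)
    (hproj : ∀ i, proj i = xhat - ((A i ⬝ᵥ xhat - b i) / dstar i) • vhat i)
    -- i* ∈ argmin_i (a_iᵀ x̂ − b_i)/‖a_i‖_*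
    (istar : Fin m)
    (histar : ∀ i, (A istar ⬝ᵥ xhat - b istar) / dstar istar ≤ (A i ⬝ᵥ xhat - b i) / dstar i) :
    GSIOFeas A b N xhat ((N (A istar))⁻¹ • A istar)
        ((N (A istar))⁻¹ • (Pi.single istar 1 : Fin m → ℝ)) (xhat - proj istar) ∧
    M (xhat - proj istar) = (A istar ⬝ᵥ xhat - b istar) / dstar istar ∧
    ∀ c y ε, GSIOFeas A b N xhat c y ε → M (xhat - proj istar) ≤ M ε :=
  stmt_0_general m n A b hrows N hN₂ hN₃ M hM₂ hM₃ dstar hdstar vhat hvhatnorm hvhatmax xhat hxhatP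
    proj hproj istar histar
end

section
/- Let c̄ be a function assigning to each c ∈ ℝ^n with ‖c‖' = 1 a vector c̄(c) ∈ ℝ^n satisfying ‖c̄(c)‖_∞ = 1 and c̄(c)ᵀ c = 1. Consider the problem GMIO_∞(X̂): minimize Σ_{q=1}^Q ‖ε_q‖_∞ over (c, y, ε_1, …, ε_Q) ∈ ℝ^n × ℝ^m × (ℝ^n)^Q subject to Aᵀ y = c, y ≥ 0, cᵀ x̂_q = bᵀ y + cᵀ ε_q for all q, ‖c‖' = 1, and ε_q ∈ {t · c̄(c) : t ∈ ℝ} for all q. Then (c*, y*, ε_1*, …, ε_Q*) is an optimal solution of GIO_A(X̂) if and only if (c*, y*, ε_1* · c̄(c*), …, ε_Q* · c̄(c*)) is an optimal solution of GMIO_∞(X̂). -/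
open Matrix

/-- Feasibility for the absolute duality gap inverse problem `GIO_A(X̂)`. -/
def FeasA {m n Q : ℕ} (A : Matrix (Fin m) (Fin n) ℝ) (b : Fin m → ℝ)
    (N : (Fin n → ℝ) → ℝ) (xhat : Fin Q → Fin n → ℝ)
    (c : Fin n → ℝ) (y : Fin m → ℝ) (ε : Fin Q → ℝ) : Prop :=
  Aᵀ.mulVec y = c ∧ (∀ i, 0 ≤ y i) ∧ (∀ q, c ⬝ᵥ xhat q = b ⬝ᵥ y + ε q) ∧ N c = 1

/-- Feasibility for `GMIO_∞(X̂)`: besides the general constraints, each `ε_q`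
is a scalar multiple of `c̄(c)`.  The objective uses the `∞`-norm (the sup norm
on `Fin n → ℝ`). -/
def FeasM {m n Q : ℕ} (A : Matrix (Fin m) (Fin n) ℝ) (b : Fin m → ℝ)
    (N : (Fin n → ℝ) → ℝ) (cbar : (Fin n → ℝ) → (Fin n → ℝ)) (xhat : Fin Q → Fin n → ℝ)
    (c : Fin n → ℝ) (y : Fin m → ℝ) (ε : Fin Q → Fin n → ℝ) : Prop :=
  Aᵀ.mulVec y = c ∧ (∀ i, 0 ≤ y i) ∧ (∀ q, c ⬝ᵥ xhat q = b ⬝ᵥ y + c ⬝ᵥ ε q) ∧ N c = 1 ∧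
    ∀ q, ∃ t : ℝ, ε q = t • cbar c

theorem stmt_1
    (m n Q : ℕ) (hm : 0 < m) (hn : 0 < n) (hQ : 0 < Q)
    (A : Matrix (Fin m) (Fin n) ℝ) (b : Fin m → ℝ)
    (hrows : ∀ i, A i ≠ 0)
    (hPint : (interior {x : Fin n → ℝ | ∀ i, b i ≤ A.mulVec x i}).Nonempty)
    -- the normalization norm ‖·‖'
    (N : (Fin n → ℝ) → ℝ)
    (hN₁ : ∀ x y, N (x + y) ≤ N x + N y)
    (hN₂ : ∀ (a : ℝ) (x : Fin n → ℝ), N (a • x) = |a| * N x)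
    (hN₃ : ∀ x, x ≠ 0 → 0 < N x)
    -- the function c̄ with ‖c̄(c)‖_∞ = 1 and c̄(c)ᵀ c = 1 on the unit sphere of ‖·‖'
    (cbar : (Fin n → ℝ) → (Fin n → ℝ))
    (hcbar : ∀ c : Fin n → ℝ, N c = 1 → ‖cbar c‖ = 1 ∧ cbar c ⬝ᵥ c = 1)
    -- the data set X̂
    (xhat : Fin Q → Fin n → ℝ)
    (cstar : Fin n → ℝ) (ystar : Fin m → ℝ) (εstar : Fin Q → ℝ) :
    -- (c*, y*, ε*) optimal for GIO_A(X̂)  ↔  mapped tuple optimal for GMIO_∞(X̂)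
    (FeasA A b N xhat cstar ystar εstar ∧
      ∀ c y ε, FeasA A b N xhat c y ε → ∑ q, |εstar q| ≤ ∑ q, |ε q|) ↔
    (FeasM A b N cbar xhat cstar ystar (fun q => εstar q • cbar cstar) ∧
      ∀ c y ε, FeasM A b N cbar xhat c y ε →
        ∑ q, ‖εstar q • cbar cstar‖ ≤ ∑ q, ‖ε q‖) := by
  constructor
  · rintro ⟨⟨h1, h2, h3, h4⟩, hopt⟩
    obtain ⟨hnorm, hdot⟩ := hcbar cstar h4
    have hsum : ∑ q, ‖εstar q • cbar cstar‖ = ∑ q, |εstar q| := by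
      refine Finset.sum_congr rfl fun q _ => ?_
      rw [norm_smul, hnorm, Real.norm_eq_abs, mul_one]
    refine ⟨⟨h1, h2, fun q => ?_, h4, fun q => ⟨εstar q, rfl⟩⟩, ?_⟩
    · rw [dotProduct_smul, dotProduct_comm cstar (cbar cstar), hdot, smul_eq_mul, mul_one]; exact h3 q
    · rintro c y ε ⟨g1, g2, g3, g4, g5⟩
      obtain ⟨hnorm', hdot'⟩ := hcbar c g4
      choose t ht using g5
      have hdt : ∀ q, c ⬝ᵥ ε q = t q := fun q => by
        rw [ht q, dotProduct_smul, dotProduct_comm c (cbar c), hdot', smul_eq_mul, mul_one]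
      have hfeas : FeasA A b N xhat c y t :=
        ⟨g1, g2, fun q => by rw [← hdt q]; exact g3 q, g4⟩
      calc ∑ q, ‖εstar q • cbar cstar‖ = ∑ q, |εstar q| := hsum
        _ ≤ ∑ q, |t q| := hopt c y t hfeas
        _ = ∑ q, ‖ε q‖ := by
            refine Finset.sum_congr rfl fun q _ => ?_
            rw [ht q, norm_smul, hnorm', Real.norm_eq_abs, mul_one]
  · rintro ⟨⟨h1, h2, h3, h4, _⟩, hopt⟩
    obtain ⟨hnorm, hdot⟩ := hcbar cstar h4
    have hsum : ∑ q, ‖εstar q • cbar cstar‖ = ∑ q, |εstar q| := by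
      refine Finset.sum_congr rfl fun q _ => ?_
      rw [norm_smul, hnorm, Real.norm_eq_abs, mul_one]
    refine ⟨⟨h1, h2, fun q => ?_, h4⟩, ?_⟩
    · have := h3 q
      rwa [dotProduct_smul, dotProduct_comm cstar (cbar cstar), hdot, smul_eq_mul, mul_one] at this
    · rintro c y ε ⟨g1, g2, g3, g4⟩
      obtain ⟨hnorm', hdot'⟩ := hcbar c g4
      have hfeas : FeasM A b N cbar xhat c y (fun q => ε q • cbar c) := by
        refine ⟨g1, g2, fun q => ?_, g4, fun q => ⟨ε q, rfl⟩⟩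
        rw [dotProduct_smul, dotProduct_comm c (cbar c), hdot', smul_eq_mul, mul_one]
        exact g3 q
      calc ∑ q, |εstar q| = ∑ q, ‖εstar q • cbar cstar‖ := hsum.symm
        _ ≤ ∑ q, ‖ε q • cbar c‖ := hopt c y _ hfeas
        _ = ∑ q, |ε q| := by
            refine Finset.sum_congr rfl fun q _ => ?_
            rw [norm_smul, hnorm', Real.norm_eq_abs, mul_one]
end

section
/- Suppose the normalization norm is ‖·‖' = ‖·‖_∞. Let (c*, y*, ε_1*, …, ε_Q*) be an optimal solution of GIO_A(X̂). Then there exists j ∈ {1, …, n} such that (c*, y*, ε_1*, …, ε_Q*) is also an optimal solution of the problem GIO_A(X̂; j) obtained from GIO_A(X̂) by replacing the constraint ‖c‖_∞ = 1 with the constraints (c_j = 1 or c_j = −1) and |c_k| ≤ 1 for all k ≠ j. -/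
open NNReal


open Matrix

/-- Feasibility for `GIO_A(X̂; j)`: the normalization `‖c‖_∞ = 1` is replaced by
`(c_j = 1 ∨ c_j = −1)` and `|c_k| ≤ 1` for `k ≠ j`. -/
def FeasAj {m n Q : ℕ} (A : Matrix (Fin m) (Fin n) ℝ) (b : Fin m → ℝ)
    (xhat : Fin Q → Fin n → ℝ) (j : Fin n)
    (c : Fin n → ℝ) (y : Fin m → ℝ) (ε : Fin Q → ℝ) : Prop :=
  Aᵀ.mulVec y = c ∧ (∀ i, 0 ≤ y i) ∧ (∀ q, c ⬝ᵥ xhat q = b ⬝ᵥ y + ε q) ∧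
    (c j = 1 ∨ c j = -1) ∧ ∀ k, k ≠ j → |c k| ≤ 1

theorem stmt_2
    (m n Q : ℕ) (hm : 0 < m) (hn : 0 < n) (hQ : 0 < Q)
    (A : Matrix (Fin m) (Fin n) ℝ) (b : Fin m → ℝ)
    (hrows : ∀ i, A i ≠ 0)
    (hPint : (interior {x : Fin n → ℝ | ∀ i, b i ≤ A.mulVec x i}).Nonempty)
    (xhat : Fin Q → Fin n → ℝ)
    (cstar : Fin n → ℝ) (ystar : Fin m → ℝ) (εstar : Fin Q → ℝ)
    -- (c*, y*, ε*) is optimal for GIO_A(X̂) with ‖·‖' = ‖·‖_∞ (the sup norm)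
    (hfeas : FeasA A b (fun v => ‖v‖) xhat cstar ystar εstar)
    (hopt : ∀ c y ε, FeasA A b (fun v => ‖v‖) xhat c y ε →
      ∑ q, |εstar q| ≤ ∑ q, |ε q|) :
    ∃ j : Fin n,
      FeasAj A b xhat j cstar ystar εstar ∧
      ∀ c y ε, FeasAj A b xhat j c y ε → ∑ q, |εstar q| ≤ ∑ q, |ε q| := by

  obtain ⟨h1, h2, h3, h4⟩ := hfeas
  simp only at h4
  -- find j achieving the sup norm
  have hne : (Finset.univ : Finset (Fin n)).Nonempty := ⟨⟨0, hn⟩, Finset.mem_univ _⟩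
  obtain ⟨j, -, hj⟩ := Finset.exists_mem_eq_sup Finset.univ hne (fun i => ‖cstar i‖₊)
  have hnorm : ∀ v : Fin n → ℝ, ‖v‖₊ = Finset.univ.sup (fun i => ‖v i‖₊) := fun v =>
    Pi.nnnorm_def v
  have hcj : |cstar j| = 1 := by
    have : ‖cstar‖₊ = ‖cstar j‖₊ := by rw [hnorm]; exact hj
    have h4' : ‖cstar‖₊ = 1 := by
      ext; simpa [coe_nnnorm] using h4
    rw [h4'] at this
    have := congrArg (fun x : ℝ≥0 => (x : ℝ)) this.symm
    simpa [coe_nnnorm, Real.norm_eq_abs] using this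
  have hle : ∀ k, |cstar k| ≤ 1 := by
    intro k
    have := norm_le_pi_norm cstar k
    rw [h4] at this
    simpa [Real.norm_eq_abs] using this
  refine ⟨j, ⟨h1, h2, h3, ?_, fun k _ => hle k⟩, ?_⟩
  · rcases abs_eq (by norm_num : (0:ℝ) ≤ 1) |>.mp hcj with h | h
    · exact Or.inl h
    · exact Or.inr h
  · intro c y ε hfj
    obtain ⟨g1, g2, g3, g4, g5⟩ := hfj
    apply hopt c y ε
    refine ⟨g1, g2, g3, ?_⟩
    have hcj1 : |c j| = 1 := by rcases g4 with h | h <;> simp [h]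
    have hub : ‖c‖ ≤ 1 := by
      apply pi_norm_le_iff_of_nonneg (by norm_num : (0:ℝ) ≤ 1) |>.mpr
      intro k
      by_cases hk : k = j
      · subst hk; simp [Real.norm_eq_abs, hcj1]
      · simpa [Real.norm_eq_abs] using g5 k hk
    have hlb : (1:ℝ) ≤ ‖c‖ := by
      have := norm_le_pi_norm c j
      simpa [Real.norm_eq_abs, hcj1] using this
    simp only
    linarith
end

section
/- Assume x̂_q ∈ P for all q ∈ {1, …, Q} and let x̄ = (1/Q) Σ_{q=1}^Q x̂_q. Then every feasible solution (c, y, ε_1, …, ε_Q) of GIO_A(X̂) satisfies Σ_{q=1}^Q |ε_q| = Q · (cᵀ x̄ − bᵀ y). Consequently, the optimal value of GIO_A(X̂) equals Q times the optimal value of the single-point problem GIO_A({x̄}), and a pair (c, y) is part of an optimal solution of GIO_A(X̂) if and only if it is part of an optimal solution of GIO_A({x̄}). -/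
open Matrix Pointwise

/-- Optimality for `GIO_A(X̂)`. -/
def OptA {m n Q : ℕ} (A : Matrix (Fin m) (Fin n) ℝ) (b : Fin m → ℝ)
    (N : (Fin n → ℝ) → ℝ) (xhat : Fin Q → Fin n → ℝ)
    (c : Fin n → ℝ) (y : Fin m → ℝ) (ε : Fin Q → ℝ) : Prop :=
  FeasA A b N xhat c y ε ∧
    ∀ c' y' ε', FeasA A b N xhat c' y' ε' → ∑ q, |ε q| ≤ ∑ q, |ε' q|

lemma eps_aux {m n Q : ℕ} {A : Matrix (Fin m) (Fin n) ℝ} {b : Fin m → ℝ}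
    {N : (Fin n → ℝ) → ℝ} {xh : Fin Q → Fin n → ℝ} {c : Fin n → ℝ}
    {y : Fin m → ℝ} {ε : Fin Q → ℝ}
    (hx : ∀ q i, b i ≤ A.mulVec (xh q) i)
    (h : FeasA A b N xh c y ε) (q : Fin Q) :
    ε q = c ⬝ᵥ xh q - b ⬝ᵥ y ∧ 0 ≤ ε q := by
  obtain ⟨hc, hy, he, -⟩ := h
  have h1 : ε q = c ⬝ᵥ xh q - b ⬝ᵥ y := by linarith [he q]
  have h2 : c ⬝ᵥ xh q = y ⬝ᵥ A.mulVec (xh q) := by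
    rw [← hc, Matrix.mulVec_transpose, ← Matrix.dotProduct_mulVec]
  have h3 : b ⬝ᵥ y ≤ y ⬝ᵥ A.mulVec (xh q) := by
    rw [dotProduct_comm]
    exact Finset.sum_le_sum fun i _ => mul_le_mul_of_nonneg_left (hx q i) (hy i)
  exact ⟨h1, by rw [h1, h2]; linarith⟩

lemma sum_abs_aux {m n Q : ℕ} {A : Matrix (Fin m) (Fin n) ℝ} {b : Fin m → ℝ}
    {N : (Fin n → ℝ) → ℝ} {xh : Fin Q → Fin n → ℝ} {c : Fin n → ℝ}
    {y : Fin m → ℝ} {ε : Fin Q → ℝ}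
    (hx : ∀ q i, b i ≤ A.mulVec (xh q) i)
    (h : FeasA A b N xh c y ε) :
    ∑ q, |ε q| = c ⬝ᵥ (∑ q, xh q) - (Q : ℝ) * (b ⬝ᵥ y) := by
  have h1 : ∀ q, |ε q| = c ⬝ᵥ xh q - b ⬝ᵥ y := fun q => by
    obtain ⟨he, hn⟩ := eps_aux hx h q
    rw [abs_of_nonneg hn, he]
  rw [Finset.sum_congr rfl fun q _ => h1 q, Finset.sum_sub_distrib,
    Finset.sum_const, Finset.card_univ]
  simp only [Fintype.card_fin, nsmul_eq_mul]
  congr 1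
  simp only [dotProduct, Finset.sum_apply, Finset.mul_sum]
  exact Finset.sum_comm

theorem stmt_3
    (m n Q : ℕ) (hm : 0 < m) (hn : 0 < n) (hQ : 0 < Q)
    (A : Matrix (Fin m) (Fin n) ℝ) (b : Fin m → ℝ)
    (hrows : ∀ i, A i ≠ 0)
    (hPint : (interior {x : Fin n → ℝ | ∀ i, b i ≤ A.mulVec x i}).Nonempty)
    -- the normalization norm ‖·‖'
    (N : (Fin n → ℝ) → ℝ)
    (hN₁ : ∀ x y, N (x + y) ≤ N x + N y)
    (hN₂ : ∀ (a : ℝ) (x : Fin n → ℝ), N (a • x) = |a| * N x)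
    (hN₃ : ∀ x, x ≠ 0 → 0 < N x)
    -- all observed decisions are feasible: x̂_q ∈ P
    (xhat : Fin Q → Fin n → ℝ)
    (hfeasX : ∀ q i, b i ≤ A.mulVec (xhat q) i)
    -- the centroid x̄
    (xbar : Fin n → ℝ) (hxbar : xbar = (Q : ℝ)⁻¹ • ∑ q, xhat q) :
    -- 1. every feasible solution satisfies Σ|ε_q| = Q (cᵀ x̄ − bᵀ y)
    (∀ c y ε, FeasA A b N xhat c y ε →
      ∑ q, |ε q| = (Q : ℝ) * (c ⬝ᵥ xbar - b ⬝ᵥ y)) ∧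
    -- 2. the optimal value of GIO_A(X̂) is Q times that of GIO_A({x̄})
    sInf {v : ℝ | ∃ c y ε, FeasA A b N xhat c y ε ∧ v = ∑ q, |ε q|} =
      (Q : ℝ) * sInf {v : ℝ | ∃ (c : Fin n → ℝ) (y : Fin m → ℝ) (ε : Fin 1 → ℝ),
        FeasA A b N (fun _ : Fin 1 => xbar) c y ε ∧ v = ∑ q, |ε q|} ∧
    -- 3. (c, y) is part of an optimal solution of GIO_A(X̂) iff of GIO_A({x̄})
    ∀ c y, (∃ ε, OptA A b N xhat c y ε) ↔
      (∃ ε : Fin 1 → ℝ, OptA A b N (fun _ : Fin 1 => xbar) c y ε) := by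
  have hQ0 : (Q : ℝ) ≠ 0 := Nat.cast_ne_zero.mpr hQ.ne'
  -- x̄ is feasible
  have hxbarP : ∀ q : Fin 1, ∀ i, b i ≤ A.mulVec (xbar) i := by
    intro _ i
    have hlin : A.mulVec xbar i = (Q : ℝ)⁻¹ * ∑ q, A.mulVec (xhat q) i := by
      rw [hxbar]
      simp only [Matrix.mulVec, dotProduct, Pi.smul_apply, Finset.sum_apply,
        smul_eq_mul, Finset.mul_sum]
      rw [Finset.sum_comm]
      congr 1; ext q; congr 1; ext j; ring
    have hsum : (Q : ℝ) * b i ≤ ∑ q, A.mulVec (xhat q) i := by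
      calc (Q : ℝ) * b i = ∑ _q : Fin Q, b i := by
            rw [Finset.sum_const, Finset.card_univ, Fintype.card_fin, nsmul_eq_mul]
        _ ≤ _ := Finset.sum_le_sum fun q _ => hfeasX q i
    rw [hlin]
    have hQpos : (0:ℝ) < (Q:ℝ) := by exact_mod_cast hQ
    calc b i = (Q:ℝ)⁻¹ * ((Q:ℝ) * b i) := by field_simp
      _ ≤ (Q:ℝ)⁻¹ * ∑ q, A.mulVec (xhat q) i :=
          mul_le_mul_of_nonneg_left hsum (by positivity)
  -- dot with xbar
  have hdot : ∀ c : Fin n → ℝ, c ⬝ᵥ xbar = (Q:ℝ)⁻¹ * (c ⬝ᵥ ∑ q, xhat q) := by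
    intro c
    rw [hxbar, dotProduct_smul, smul_eq_mul]
  -- part 1
  have part1 : ∀ c y ε, FeasA A b N xhat c y ε →
      ∑ q, |ε q| = (Q : ℝ) * (c ⬝ᵥ xbar - b ⬝ᵥ y) := by
    intro c y ε h
    rw [sum_abs_aux hfeasX h, hdot c]
    field_simp
  -- single-point version
  have part1' : ∀ c y (ε : Fin 1 → ℝ), FeasA A b N (fun _ : Fin 1 => xbar) c y ε →
      ∑ q, |ε q| = c ⬝ᵥ xbar - b ⬝ᵥ y := by
    intro c y ε h
    rw [sum_abs_aux hxbarP h]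
    simp
  refine ⟨part1, ?_, ?_⟩
  · -- part 2
    have hset : {v : ℝ | ∃ c y ε, FeasA A b N xhat c y ε ∧ v = ∑ q, |ε q|} =
        ((Q : ℝ) • {v : ℝ | ∃ (c : Fin n → ℝ) (y : Fin m → ℝ) (ε : Fin 1 → ℝ),
          FeasA A b N (fun _ : Fin 1 => xbar) c y ε ∧ v = ∑ q, |ε q|} : Set ℝ) := by
      ext v
      constructor
      · rintro ⟨c, y, ε, hf, rfl⟩
        rw [Set.mem_smul_set]
        refine ⟨c ⬝ᵥ xbar - b ⬝ᵥ y, ⟨c, y, fun _ => c ⬝ᵥ xbar - b ⬝ᵥ y,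
          ⟨hf.1, hf.2.1, fun _ => by ring, hf.2.2.2⟩, ?_⟩, ?_⟩
        · rw [part1' c y _ ⟨hf.1, hf.2.1, fun _ => by ring, hf.2.2.2⟩]
        · rw [smul_eq_mul, part1 c y ε hf]
      · intro hv
        rw [Set.mem_smul_set] at hv
        obtain ⟨w, ⟨c, y, ε, hf, rfl⟩, rfl⟩ := hv
        refine ⟨c, y, fun q => c ⬝ᵥ xhat q - b ⬝ᵥ y,
          ⟨hf.1, hf.2.1, fun q => by ring, hf.2.2.2⟩, ?_⟩
        rw [smul_eq_mul, part1' c y ε hf,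
          part1 c y _ ⟨hf.1, hf.2.1, fun q => by ring, hf.2.2.2⟩]
    rw [hset]
    exact Real.sInf_smul_of_nonneg (by positivity) _
  · -- part 3
    intro c y
    have hQpos : (0:ℝ) < (Q:ℝ) := by exact_mod_cast hQ
    constructor
    · rintro ⟨ε, hf, hopt⟩
      refine ⟨fun _ => c ⬝ᵥ xbar - b ⬝ᵥ y,
        ⟨hf.1, hf.2.1, fun _ => by ring, hf.2.2.2⟩, ?_⟩
      intro c' y' ε' hf'
      have hfX : FeasA A b N xhat c' y' (fun q => c' ⬝ᵥ xhat q - b ⬝ᵥ y') :=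
        ⟨hf'.1, hf'.2.1, fun q => by ring, hf'.2.2.2⟩
      have h1 := hopt c' y' _ hfX
      rw [part1 c y ε hf, part1 c' y' _ hfX] at h1
      have h2 : c ⬝ᵥ xbar - b ⬝ᵥ y ≤ c' ⬝ᵥ xbar - b ⬝ᵥ y' :=
        le_of_mul_le_mul_left h1 hQpos
      rw [part1' c y _ ⟨hf.1, hf.2.1, fun _ => by ring, hf.2.2.2⟩,
        part1' c' y' ε' hf']
      exact h2
    · rintro ⟨ε, hf, hopt⟩
      refine ⟨fun q => c ⬝ᵥ xhat q - b ⬝ᵥ y,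
        ⟨hf.1, hf.2.1, fun q => by ring, hf.2.2.2⟩, ?_⟩
      intro c' y' ε' hf'
      have hf1 : FeasA A b N (fun _ : Fin 1 => xbar) c' y'
          (fun _ => c' ⬝ᵥ xbar - b ⬝ᵥ y') :=
        ⟨hf'.1, hf'.2.1, fun _ => by ring, hf'.2.2.2⟩
      have h1 := hopt c' y' _ hf1
      rw [part1' c y ε hf, part1' c' y' _ hf1] at h1
      rw [part1 c y _ ⟨hf.1, hf.2.1, fun q => by ring, hf.2.2.2⟩,
        part1 c' y' ε' hf']
      exact mul_le_mul_of_nonneg_left h1 (by positivity)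
end

section
/- Suppose x̂ ∉ P and there exists i ∈ I with a_iᵀ x̂ > b_i. Then for such an i there exists i* ∈ I with a_{i*}ᵀ x̂ < b_{i*} such that, defining ỹ ∈ ℝ^m by ỹ_i = 1/(a_iᵀ x̂ − b_i), ỹ_{i*} = 1/(b_{i*} − a_{i*}ᵀ x̂), and ỹ_k = 0 for k ∉ {i, i*}, and setting c̃ = Aᵀ ỹ, one has c̃ ≠ 0 and the normalized triple (c̃/‖c̃‖', ỹ/‖c̃‖', 0) is an optimal solution of GIO_A({x̂}); in particular, the optimal value of GIO_A({x̂}) is 0. -/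
open Matrix

/-- Feasibility for the single-point absolute duality gap inverse problem
`GIO_A({x̂})`. -/
def FeasA1 {m n : ℕ} (A : Matrix (Fin m) (Fin n) ℝ) (b : Fin m → ℝ)
    (N : (Fin n → ℝ) → ℝ) (xhat : Fin n → ℝ)
    (c : Fin n → ℝ) (y : Fin m → ℝ) (ε : ℝ) : Prop :=
  Aᵀ.mulVec y = c ∧ (∀ i, 0 ≤ y i) ∧ c ⬝ᵥ xhat = b ⬝ᵥ y + ε ∧ N c = 1

lemma interior_strict {m n : ℕ} (A : Matrix (Fin m) (Fin n) ℝ) (b : Fin m → ℝ)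
    (x0 : Fin n → ℝ) (hx0 : x0 ∈ interior {x : Fin n → ℝ | ∀ i, b i ≤ A.mulVec x i})
    (k : Fin m) (hk : A k ≠ 0) : b k < A.mulVec x0 k := by
  have hx0S : ∀ j, b j ≤ A.mulVec x0 j := interior_subset hx0
  rcases Metric.mem_nhds_iff.mp (mem_interior_iff_mem_nhds.mp hx0) with ⟨ε, hε, hball⟩
  by_contra h
  have heq : A.mulVec x0 k = b k := le_antisymm (not_lt.mp h) (hx0S k)
  set v : Fin n → ℝ := A k with hv
  have hq : 0 < v ⬝ᵥ v := by
    have h1 : 0 ≤ v ⬝ᵥ v := Finset.sum_nonneg fun j _ => mul_self_nonneg _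
    rcases h1.lt_or_eq with h2 | h2
    · exact h2
    · exact absurd ((dotProduct_self_eq_zero).mp h2.symm) hk
  set t : ℝ := ε / (2 * (‖v‖ + 1)) with ht
  have hvnorm : 0 < ‖v‖ + 1 := by positivity
  have htpos : 0 < t := by positivity
  have hmem : x0 - t • v ∈ Metric.ball x0 ε := by
    rw [Metric.mem_ball, dist_eq_norm]
    have h3 : x0 - t • v - x0 = -(t • v) := by abel
    rw [h3, norm_neg, norm_smul, Real.norm_eq_abs, abs_of_pos htpos]
    calc t * ‖v‖ ≤ t * (‖v‖ + 1) := by nlinarith [norm_nonneg v]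
      _ = ε / 2 := by rw [ht]; field_simp
      _ < ε := by linarith
  have hle : b k ≤ A.mulVec (x0 - t • v) k := hball hmem k
  have h4 : A.mulVec (x0 - t • v) k = A.mulVec x0 k - t * (v ⬝ᵥ v) := by
    show A k ⬝ᵥ (x0 - t • v) = A k ⬝ᵥ x0 - t * (v ⬝ᵥ v)
    rw [dotProduct_sub, dotProduct_smul]
    rfl
  rw [h4, heq] at hle
  nlinarith

theorem stmt_4
    (m n : ℕ) (hm : 0 < m) (hn : 0 < n)
    (A : Matrix (Fin m) (Fin n) ℝ) (b : Fin m → ℝ)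
    (hrows : ∀ i, A i ≠ 0)
    (hPint : (interior {x : Fin n → ℝ | ∀ i, b i ≤ A.mulVec x i}).Nonempty)
    -- the normalization norm ‖·‖'
    (N : (Fin n → ℝ) → ℝ)
    (hN₁ : ∀ x y, N (x + y) ≤ N x + N y)
    (hN₂ : ∀ (a : ℝ) (x : Fin n → ℝ), N (a • x) = |a| * N x)
    (hN₃ : ∀ x, x ≠ 0 → 0 < N x)
    -- x̂ ∉ P and some constraint strictly satisfied
    (xhat : Fin n → ℝ) (hxnotP : ¬ ∀ i, b i ≤ A.mulVec xhat i)
    (i : Fin m) (hi : b i < A i ⬝ᵥ xhat) :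
    ∃ istar : Fin m, A istar ⬝ᵥ xhat < b istar ∧
      ∀ ytil : Fin m → ℝ,
        ytil = (fun k => if k = i then 1 / (A i ⬝ᵥ xhat - b i)
                else if k = istar then 1 / (b istar - A istar ⬝ᵥ xhat) else 0) →
        ∀ ctil : Fin n → ℝ, ctil = Aᵀ.mulVec ytil →
          ctil ≠ 0 ∧
          -- the normalized triple (c̃/‖c̃‖', ỹ/‖c̃‖', 0) is optimal for GIO_A({x̂})
          FeasA1 A b N xhat ((N ctil)⁻¹ • ctil) ((N ctil)⁻¹ • ytil) 0 ∧
          (∀ c y ε, FeasA1 A b N xhat c y ε → |(0 : ℝ)| ≤ |ε|) ∧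
          -- in particular the optimal value of GIO_A({x̂}) is 0
          sInf {v : ℝ | ∃ (c : Fin n → ℝ) (y : Fin m → ℝ) (ε : ℝ),
            FeasA1 A b N xhat c y ε ∧ v = |ε|} = 0 := by
  push_neg at hxnotP
  obtain ⟨istar, histar⟩ := hxnotP
  have hs : A istar ⬝ᵥ xhat < b istar := histar
  refine ⟨istar, hs, ?_⟩
  intro ytil hy ctil hc
  have hne : istar ≠ i := by
    intro h; rw [h] at hs; exact absurd hi (not_lt.mpr hs.le)
  set di : ℝ := A i ⬝ᵥ xhat - b i with hdi
  set ds : ℝ := b istar - A istar ⬝ᵥ xhat with hds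
  have hdip : 0 < di := by simp [hdi]; linarith
  have hdsp : 0 < ds := by simp [hds]; linarith
  -- the key sum computation
  have hsum : ∀ g : Fin m → ℝ, ytil ⬝ᵥ g = di⁻¹ * g i + ds⁻¹ * g istar := by
    intro g
    have hsupp : ∀ k ∈ Finset.univ, k ∉ ({i, istar} : Finset (Fin m)) →
        ytil k * g k = 0 := by
      intro k _ hk
      simp only [Finset.mem_insert, Finset.mem_singleton, not_or] at hk
      rw [hy]; simp [hk.1, hk.2]
    have h1 : ytil ⬝ᵥ g = ∑ k ∈ ({i, istar} : Finset (Fin m)), ytil k * g k :=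
      (Finset.sum_subset (Finset.subset_univ _) hsupp).symm
    rw [h1, Finset.sum_pair (fun h => hne h.symm), hy]
    simp [hne, one_div]
  have hytil_nonneg : ∀ k, 0 ≤ ytil k := by
    intro k
    rw [hy]
    by_cases h1 : k = i
    · simp [h1]; positivity
    · by_cases h2 : k = istar
      · simp [h1, h2]; positivity
      · simp [h1, h2]
  -- c̃ ⬝ x = ỹ ⬝ (A x)
  have hdot : ∀ x : Fin n → ℝ, ctil ⬝ᵥ x = ytil ⬝ᵥ A.mulVec x := by
    intro x
    rw [hc, Matrix.mulVec_transpose, ← Matrix.dotProduct_mulVec]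
  -- zero gap
  have hgap : ctil ⬝ᵥ xhat = b ⬝ᵥ ytil := by
    rw [hdot, hsum, dotProduct_comm, hsum]
    show di⁻¹ * (A i ⬝ᵥ xhat) + ds⁻¹ * (A istar ⬝ᵥ xhat) = di⁻¹ * b i + ds⁻¹ * b istar
    have e1 : A i ⬝ᵥ xhat = b i + di := by rw [hdi]; ring
    have e2 : A istar ⬝ᵥ xhat = b istar - ds := by rw [hds]; ring
    rw [e1, e2]
    field_simp
    ring
  -- c̃ ≠ 0
  obtain ⟨x0, hx0⟩ := hPint
  have hstrict : ∀ k, b k < A.mulVec x0 k := fun k =>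
    interior_strict A b x0 hx0 k (hrows k)
  have hcne : ctil ≠ 0 := by
    intro h0
    have h1 : ctil ⬝ᵥ x0 = 0 := by rw [h0, zero_dotProduct]
    have h2 : ctil ⬝ᵥ xhat = 0 := by rw [h0, zero_dotProduct]
    rw [hdot, hsum] at h1
    rw [hgap, dotProduct_comm, hsum] at h2
    have l1 := hstrict i
    have l2 := hstrict istar
    have m1 : di⁻¹ * b i < di⁻¹ * A.mulVec x0 i :=
      mul_lt_mul_of_pos_left l1 (inv_pos.mpr hdip)
    have m2 : ds⁻¹ * b istar < ds⁻¹ * A.mulVec x0 istar :=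
      mul_lt_mul_of_pos_left l2 (inv_pos.mpr hdsp)
    linarith
  have hNpos : 0 < N ctil := hN₃ ctil hcne
  have hNne : N ctil ≠ 0 := ne_of_gt hNpos
  refine ⟨hcne, ?_, ?_, ?_⟩
  · -- feasibility
    refine ⟨?_, ?_, ?_, ?_⟩
    · rw [Matrix.mulVec_smul, hc]
    · intro k
      exact mul_nonneg (inv_nonneg.mpr hNpos.le) (hytil_nonneg k)
    · rw [smul_dotProduct, dotProduct_smul, hgap]
      show (N ctil)⁻¹ • (b ⬝ᵥ ytil) = (N ctil)⁻¹ • (b ⬝ᵥ ytil) + 0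
      ring
    · rw [hN₂, abs_of_pos (inv_pos.mpr hNpos), inv_mul_cancel₀ hNne]
  · intro c y ε _
    simp only [abs_zero]
    exact abs_nonneg ε
  · -- sInf = 0
    have hmem : (0 : ℝ) ∈ {v : ℝ | ∃ (c : Fin n → ℝ) (y : Fin m → ℝ) (ε : ℝ),
        FeasA1 A b N xhat c y ε ∧ v = |ε|} := by
      refine ⟨(N ctil)⁻¹ • ctil, (N ctil)⁻¹ • ytil, 0, ?_, by simp⟩
      refine ⟨?_, ?_, ?_, ?_⟩
      · rw [Matrix.mulVec_smul, hc]
      · intro k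
        exact mul_nonneg (inv_nonneg.mpr hNpos.le) (hytil_nonneg k)
      · rw [smul_dotProduct, dotProduct_smul, hgap]
        show (N ctil)⁻¹ • (b ⬝ᵥ ytil) = (N ctil)⁻¹ • (b ⬝ᵥ ytil) + 0
        ring
      · rw [hN₂, abs_of_pos (inv_pos.mpr hNpos), inv_mul_cancel₀ hNne]
    have hlb : ∀ v ∈ {v : ℝ | ∃ (c : Fin n → ℝ) (y : Fin m → ℝ) (ε : ℝ),
        FeasA1 A b N xhat c y ε ∧ v = |ε|}, (0 : ℝ) ≤ v := by
      rintro v ⟨c, y, ε, _, rfl⟩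
      exact abs_nonneg ε
    exact le_antisymm (csInf_le ⟨0, hlb⟩ hmem) (le_csInf ⟨0, hmem⟩ hlb)
end

section
/- Suppose x̂ ∉ P and A x̂ ≤ b (componentwise). Then there exists i* ∈ I such that (c*, y*, ε*) = (a_{i*}/‖a_{i*}‖', e_{i*}/‖a_{i*}‖', (a_{i*}ᵀ x̂ − b_{i*})/‖a_{i*}‖') is an optimal solution of GIO_A({x̂}). -/
open Matrix

/-!
Every feasible `c = Aᵀ y` satisfies `1 = ‖c‖' ≤ ∑ yᵢ ‖aᵢ‖'`, while the duality gap is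
`ε = ∑ yᵢ (aᵢᵀ x̂ - bᵢ)`. Since `A x̂ ≤ b`, each term of the gap is at most
`-yᵢ ‖aᵢ‖' r`, where `r ≥ 0` is the smallest normalized slack `(bᵢ - aᵢᵀ x̂) / ‖aᵢ‖'`.
Hence `|ε| ≥ -ε ≥ r`, and the normalized row of a constraint attaining `r` is feasible
with gap exactly `-r`.
-/

lemma sublinear_sum_smul_le {ι E : Type*} [Fintype ι] [AddCommGroup E] [Module ℝ E]
    (N : E → ℝ) (hN_add : ∀ u v, N (u + v) ≤ N u + N v)
    (hN_smul : ∀ (a : ℝ) u, 0 ≤ a → N (a • u) = a * N u)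
    (v : ι → E) {y : ι → ℝ} (hy : ∀ i, 0 ≤ y i) :
    N (∑ i, y i • v i) ≤ ∑ i, y i * N (v i) := by
  have hN_zero : N 0 = 0 := by simpa using hN_smul 0 0 le_rfl
  calc N (∑ i, y i • v i) ≤ ∑ i, N (y i • v i) :=
        Finset.le_sum_of_subadditive N hN_zero.le hN_add _ _
    _ = ∑ i, y i * N (v i) := by simp only [hN_smul _ _ (hy _)]

namespace FeasA1

variable {m n : ℕ} {A : Matrix (Fin m) (Fin n) ℝ} {b : Fin m → ℝ}
  {N : (Fin n → ℝ) → ℝ} {xhat c : Fin n → ℝ} {y : Fin m → ℝ} {ε : ℝ}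

lemma gap_eq (h : FeasA1 A b N xhat c y ε) : ε = y ⬝ᵥ (A *ᵥ xhat - b) := by
  obtain ⟨hc, -, hgap, -⟩ := h
  rw [← hc, mulVec_transpose, ← dotProduct_mulVec] at hgap
  rw [dotProduct_sub, dotProduct_comm y b]
  linarith

lemma one_le_sum_mul (h : FeasA1 A b N xhat c y ε)
    (hN_add : ∀ u v, N (u + v) ≤ N u + N v)
    (hN_smul : ∀ (a : ℝ) u, 0 ≤ a → N (a • u) = a * N u) :
    1 ≤ ∑ i, y i * N (A i) := by
  obtain ⟨hc, hy, -, hNc⟩ := h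
  rw [← hNc, ← hc, mulVec_transpose, vecMul_eq_sum]
  exact sublinear_sum_smul_le N hN_add hN_smul _ hy

lemma le_neg_gap (h : FeasA1 A b N xhat c y ε)
    (hN_add : ∀ u v, N (u + v) ≤ N u + N v)
    (hN_smul : ∀ (a : ℝ) u, 0 ≤ a → N (a • u) = a * N u)
    {r : ℝ} (hr : 0 ≤ r) (hslack : ∀ i, r * N (A i) ≤ b i - A i ⬝ᵥ xhat) :
    r ≤ -ε := by
  have hy := h.2.1
  calc r = r * 1 := (mul_one r).symm
    _ ≤ r * ∑ i, y i * N (A i) :=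
        mul_le_mul_of_nonneg_left (h.one_le_sum_mul hN_add hN_smul) hr
    _ = ∑ i, y i * (r * N (A i)) := by
        rw [Finset.mul_sum]; exact Finset.sum_congr rfl fun i _ => by ring
    _ ≤ ∑ i, y i * (b i - A i ⬝ᵥ xhat) :=
        Finset.sum_le_sum fun i _ => mul_le_mul_of_nonneg_left (hslack i) (hy i)
    _ = -ε := by
        rw [h.gap_eq, ← dotProduct_neg, neg_sub]
        rfl

end FeasA1

lemma feasA1_normalized_row {m n : ℕ} (A : Matrix (Fin m) (Fin n) ℝ) (b : Fin m → ℝ)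
    {N : (Fin n → ℝ) → ℝ} (hN_smul : ∀ (a : ℝ) u, 0 ≤ a → N (a • u) = a * N u)
    (xhat : Fin n → ℝ) {i : Fin m} (hi : 0 < N (A i)) :
    FeasA1 A b N xhat ((N (A i))⁻¹ • A i) ((N (A i))⁻¹ • (Pi.single i 1 : Fin m → ℝ))
      ((A i ⬝ᵥ xhat - b i) / N (A i)) := by
  refine ⟨?_, fun j => ?_, ?_, ?_⟩
  · rw [mulVec_smul, mulVec_transpose, single_one_vecMul]
    rfl
  · have hsingle : (0 : Fin m → ℝ) ≤ Pi.single i 1 := Pi.single_nonneg.mpr zero_le_one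
    exact smul_nonneg (inv_nonneg.mpr hi.le) (hsingle j)
  · rw [smul_dotProduct, dotProduct_smul, dotProduct_single_one, smul_eq_mul, smul_eq_mul]
    field_simp
    ring
  · rw [hN_smul _ _ (inv_nonneg.mpr hi.le), inv_mul_cancel₀ hi.ne']

theorem stmt_5_general
    (m n : ℕ) (hm : 0 < m)
    (A : Matrix (Fin m) (Fin n) ℝ) (b : Fin m → ℝ)
    (hrows : ∀ i, A i ≠ 0)
    -- the normalization norm ‖·‖'
    (N : (Fin n → ℝ) → ℝ)
    (hN₁ : ∀ x y, N (x + y) ≤ N x + N y)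
    (hN₂ : ∀ (a : ℝ) (x : Fin n → ℝ), N (a • x) = |a| * N x)
    (hN₃ : ∀ x, x ≠ 0 → 0 < N x)
    -- x̂ ∉ P and A x̂ ≤ b
    (xhat : Fin n → ℝ)
    (hxle : ∀ i, A.mulVec xhat i ≤ b i) :
    ∃ istar : Fin m,
      FeasA1 A b N xhat ((N (A istar))⁻¹ • A istar)
        ((N (A istar))⁻¹ • (Pi.single istar 1 : Fin m → ℝ))
        ((A istar ⬝ᵥ xhat - b istar) / N (A istar)) ∧
      ∀ c y ε, FeasA1 A b N xhat c y ε →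
        |(A istar ⬝ᵥ xhat - b istar) / N (A istar)| ≤ |ε| := by
  have hpos : ∀ i, 0 < N (A i) := fun i => hN₃ _ (hrows i)
  have hN_smul : ∀ (a : ℝ) u, 0 ≤ a → N (a • u) = a * N u := fun a u ha => by
    rw [hN₂, abs_of_nonneg ha]
  obtain ⟨istar, -, hmin⟩ := Finset.exists_min_image Finset.univ
    (fun i => (b i - A i ⬝ᵥ xhat) / N (A i)) ⟨⟨0, hm⟩, Finset.mem_univ _⟩
  set r := (b istar - A istar ⬝ᵥ xhat) / N (A istar)
  have hr_nonneg : 0 ≤ r := div_nonneg (sub_nonneg.mpr (hxle istar)) (hpos istar).le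
  have habs : |(A istar ⬝ᵥ xhat - b istar) / N (A istar)| = r := by
    rw [← abs_neg, ← neg_div, neg_sub, abs_of_nonneg hr_nonneg]
  refine ⟨istar, feasA1_normalized_row A b hN_smul xhat (hpos istar), fun c y ε h => ?_⟩
  rw [habs]
  refine (h.le_neg_gap hN₁ hN_smul hr_nonneg fun i => ?_).trans (neg_le_abs ε)
  exact (le_div_iff₀ (hpos i)).mp (hmin i (Finset.mem_univ i))

theorem stmt_5
    (m n : ℕ) (hm : 0 < m) (hn : 0 < n)
    (A : Matrix (Fin m) (Fin n) ℝ) (b : Fin m → ℝ)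
    (hrows : ∀ i, A i ≠ 0)
    (hPint : (interior {x : Fin n → ℝ | ∀ i, b i ≤ A.mulVec x i}).Nonempty)
    -- the normalization norm ‖·‖'
    (N : (Fin n → ℝ) → ℝ)
    (hN₁ : ∀ x y, N (x + y) ≤ N x + N y)
    (hN₂ : ∀ (a : ℝ) (x : Fin n → ℝ), N (a • x) = |a| * N x)
    (hN₃ : ∀ x, x ≠ 0 → 0 < N x)
    -- x̂ ∉ P and A x̂ ≤ b
    (xhat : Fin n → ℝ) (hxnotP : ¬ ∀ i, b i ≤ A.mulVec xhat i)
    (hxle : ∀ i, A.mulVec xhat i ≤ b i) :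
    ∃ istar : Fin m,
      FeasA1 A b N xhat ((N (A istar))⁻¹ • A istar)
        ((N (A istar))⁻¹ • (Pi.single istar 1 : Fin m → ℝ))
        ((A istar ⬝ᵥ xhat - b istar) / N (A istar)) ∧
      ∀ c y ε, FeasA1 A b N xhat c y ε →
        |(A istar ⬝ᵥ xhat - b istar) / N (A istar)| ≤ |ε| :=
  stmt_5_general m n hm A b hrows N hN₁ hN₂ hN₃ xhat hxle
end

section
/- There exists K > 0 with the following property. Let z⁺ be the optimal value (+∞ if infeasible) of: minimize Σ_{q=1}^Q |ε_q − 1| over (c, y, ε_1, …, ε_Q) subject to Aᵀ y = c, y ≥ 0, cᵀ x̂_q = ε_q for all q, bᵀ y = 1, and ‖c‖' ≥ K. Let z⁻ be the optimal value (+∞ if infeasible) of the analogous problem with cᵀ x̂_q = −ε_q for all q and bᵀ y = −1. Let z⁰ = 0 if there exist (c, y) with Aᵀ y = c, y ≥ 0, cᵀ x̂_q = 0 for all q, bᵀ y = 0, yᵀ 1 = 1, and ‖c‖' ≥ K, and z⁰ = +∞ otherwise (with ε_q := 1 for all q in this sub-problem). Then the optimal value of GIO_R(X̂) equals min{z⁺,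 z⁻, z⁰}, and if (c*, y*, ε_1*, …, ε_Q*) is an optimal solution of a sub-problem attaining this minimum, then (c*/‖c*‖', y*/‖c*‖', ε_1*, …, ε_Q*) is an optimal solution of GIO_R(X̂). -/
open Matrix
open scoped ENNReal

/-- Feasibility for the relative duality gap inverse problem `GIO_R(X̂)`,
including the convention that `bᵀ y = 0` forces `ε_q = 1` for all `q`. -/
def FeasR {m n Q : ℕ} (A : Matrix (Fin m) (Fin n) ℝ) (b : Fin m → ℝ)
    (N : (Fin n → ℝ) → ℝ) (xhat : Fin Q → Fin n → ℝ)
    (c : Fin n → ℝ) (y : Fin m → ℝ) (ε : Fin Q → ℝ) : Prop :=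
  Aᵀ.mulVec y = c ∧ (∀ i, 0 ≤ y i) ∧ (∀ q, c ⬝ᵥ xhat q = ε q * (b ⬝ᵥ y)) ∧ N c = 1 ∧
    (b ⬝ᵥ y = 0 → ∀ q, ε q = 1)

/-- Feasibility for the sub-problem `GIO_R⁺(X̂; K)`. -/
def FeasP {m n Q : ℕ} (A : Matrix (Fin m) (Fin n) ℝ) (b : Fin m → ℝ)
    (N : (Fin n → ℝ) → ℝ) (xhat : Fin Q → Fin n → ℝ) (K : ℝ)
    (c : Fin n → ℝ) (y : Fin m → ℝ) (ε : Fin Q → ℝ) : Prop :=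
  Aᵀ.mulVec y = c ∧ (∀ i, 0 ≤ y i) ∧ (∀ q, c ⬝ᵥ xhat q = ε q) ∧ b ⬝ᵥ y = 1 ∧ K ≤ N c

/-- Feasibility for the sub-problem `GIO_R⁻(X̂; K)`. -/
def FeasNg {m n Q : ℕ} (A : Matrix (Fin m) (Fin n) ℝ) (b : Fin m → ℝ)
    (N : (Fin n → ℝ) → ℝ) (xhat : Fin Q → Fin n → ℝ) (K : ℝ)
    (c : Fin n → ℝ) (y : Fin m → ℝ) (ε : Fin Q → ℝ) : Prop :=
  Aᵀ.mulVec y = c ∧ (∀ i, 0 ≤ y i) ∧ (∀ q, c ⬝ᵥ xhat q = -(ε q)) ∧ b ⬝ᵥ y = -1 ∧ K ≤ N c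

/-- Feasibility for the sub-problem `GIO_R⁰(X̂; K)`. -/
def FeasZ {m n Q : ℕ} (A : Matrix (Fin m) (Fin n) ℝ) (b : Fin m → ℝ)
    (N : (Fin n → ℝ) → ℝ) (xhat : Fin Q → Fin n → ℝ) (K : ℝ)
    (c : Fin n → ℝ) (y : Fin m → ℝ) : Prop :=
  Aᵀ.mulVec y = c ∧ (∀ i, 0 ≤ y i) ∧ (∀ q, c ⬝ᵥ xhat q = 0) ∧ b ⬝ᵥ y = 0 ∧
    (∑ i, y i) = 1 ∧ K ≤ N c

/-- Optimal value (in `ℝ≥0∞`, `+∞` if infeasible) of `GIO_R⁺(X̂; K)`. -/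
noncomputable def zP {m n Q : ℕ} (A : Matrix (Fin m) (Fin n) ℝ) (b : Fin m → ℝ)
    (N : (Fin n → ℝ) → ℝ) (xhat : Fin Q → Fin n → ℝ) (K : ℝ) : ℝ≥0∞ :=
  sInf {v : ℝ≥0∞ | ∃ (c : Fin n → ℝ) (y : Fin m → ℝ) (ε : Fin Q → ℝ),
    FeasP A b N xhat K c y ε ∧ v = ENNReal.ofReal (∑ q, |ε q - 1|)}

/-- Optimal value (in `ℝ≥0∞`, `+∞` if infeasible) of `GIO_R⁻(X̂; K)`. -/
noncomputable def zN {m n Q : ℕ} (A : Matrix (Fin m) (Fin n) ℝ) (b : Fin m → ℝ)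
    (N : (Fin n → ℝ) → ℝ) (xhat : Fin Q → Fin n → ℝ) (K : ℝ) : ℝ≥0∞ :=
  sInf {v : ℝ≥0∞ | ∃ (c : Fin n → ℝ) (y : Fin m → ℝ) (ε : Fin Q → ℝ),
    FeasNg A b N xhat K c y ε ∧ v = ENNReal.ofReal (∑ q, |ε q - 1|)}

/-- Optimal value (in `ℝ≥0∞`; `0` if feasible and `+∞` otherwise) of
`GIO_R⁰(X̂; K)`. -/
noncomputable def zZ {m n Q : ℕ} (A : Matrix (Fin m) (Fin n) ℝ) (b : Fin m → ℝ)
    (N : (Fin n → ℝ) → ℝ) (xhat : Fin Q → Fin n → ℝ) (K : ℝ) : ℝ≥0∞ :=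
  sInf {v : ℝ≥0∞ | ∃ (c : Fin n → ℝ) (y : Fin m → ℝ),
    FeasZ A b N xhat K c y ∧ v = 0}

/-!
A feasible point `(c, y, ε)` of `GIO_R(X̂)` with `v = bᵀ y` is a rescaling of a feasible point of
a sub-problem: divide `(c, y)` by `v` if `v > 0`, by `-v` if `v < 0` and by `∑ yᵢ` if `v = 0`.
The rescaled `c` has norm `1/|v|` (resp. `1/∑ yᵢ`), so it meets `‖c‖' ≥ K` once these are at most
`1/K`; conversely, normalizing a sub-problem point gives a point of `GIO_R(X̂)` with the same
objective. A point `x₀` in the interior of `P`, with slack `δ`, gives `v + δ ∑ yᵢ ≤ cᵀ x₀`, which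
bounds `v` and `∑ yᵢ` whenever `v ≥ 0`.

This leaves the points with `v < -1/K`. If `y ≥ 0, Aᵀ y = 0` forces `y = 0`, then `‖c‖' = 1`
bounds `∑ yᵢ`, and there are no such points once `K` is small. Otherwise there is a ray `r ≥ 0`
with `Aᵀ r = 0` and `bᵀ r = -1`. The objective is at least `Q - ∑ ε_q`, where
`∑ ε_q = cᵀ (∑ x̂_q) / v` is `O(K)`, and even `≤ 0` when `(Aᵀ y)ᵀ ∑ x̂_q ≥ 0` for all `y ≥ 0`.
Padding a dual direction `c₀ = Aᵀ y₁` with multiples of `r` gives points of `GIO_R⁻` with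
objective `Q + τ c₀ᵀ ∑ x̂_q`, which is below that bound if `c₀ᵀ ∑ x̂_q < 0`, or if
`c₀ᵀ ∑ x̂_q = 0` in the second case.
-/

section Homogeneous

variable {E : Type*} [NormedAddCommGroup E] [NormedSpace ℝ E] {N : E → ℝ}

lemma map_zero_of_homogeneous (hN₂ : ∀ (a : ℝ) (x : E), N (a • x) = |a| * N x) :
    N 0 = 0 := by
  simpa using hN₂ 0 0

lemma convexOn_of_subadditive_of_homogeneous (hN₁ : ∀ x y, N (x + y) ≤ N x + N y)
    (hN₂ : ∀ (a : ℝ) (x : E), N (a • x) = |a| * N x) : ConvexOn ℝ Set.univ N := by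
  refine ⟨convex_univ, fun x _ y _ a b ha hb _ => ?_⟩
  calc N (a • x + b • y) ≤ N (a • x) + N (b • y) := hN₁ _ _
    _ = a • N x + b • N y := by rw [hN₂, hN₂, abs_of_nonneg ha, abs_of_nonneg hb]; rfl

variable [FiniteDimensional ℝ E]

lemma continuous_of_subadditive_of_homogeneous (hN₁ : ∀ x y, N (x + y) ≤ N x + N y)
    (hN₂ : ∀ (a : ℝ) (x : E), N (a • x) = |a| * N x) : Continuous N :=
  (convexOn_of_subadditive_of_homogeneous hN₁ hN₂).locallyLipschitz.continuous

lemma exists_pos_mul_norm_le_of_homogeneous (hN₁ : ∀ x y, N (x + y) ≤ N x + N y)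
    (hN₂ : ∀ (a : ℝ) (x : E), N (a • x) = |a| * N x) (hN₃ : ∀ x, x ≠ 0 → 0 < N x) :
    ∃ α > 0, ∀ x, α * ‖x‖ ≤ N x := by
  obtain ⟨α, hα, hαN⟩ := (isCompact_sphere (0 : E) 1).exists_forall_le'
    (continuous_of_subadditive_of_homogeneous hN₁ hN₂).continuousOn
    (fun x hx => hN₃ x (ne_zero_of_mem_unit_sphere ⟨x, hx⟩))
  refine ⟨α, hα, fun x => ?_⟩
  rcases eq_or_ne x 0 with rfl | hx
  · simp [map_zero_of_homogeneous hN₂]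
  have hunit := hαN (‖x‖⁻¹ • x) (by simp [norm_smul, norm_ne_zero_iff.mpr hx])
  rw [hN₂, abs_of_pos (inv_pos.mpr (norm_pos_iff.mpr hx))] at hunit
  rwa [le_inv_mul_iff₀ (norm_pos_iff.mpr hx), mul_comm] at hunit

lemma exists_abs_le_mul_of_homogeneous (hN₁ : ∀ x y, N (x + y) ≤ N x + N y)
    (hN₂ : ∀ (a : ℝ) (x : E), N (a • x) = |a| * N x) (hN₃ : ∀ x, x ≠ 0 → 0 < N x)
    (ℓ : E →ₗ[ℝ] ℝ) : ∃ C > 0, ∀ x, |ℓ x| ≤ C * N x := by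
  obtain ⟨α, hα, hαN⟩ := exists_pos_mul_norm_le_of_homogeneous hN₁ hN₂ hN₃
  set L := LinearMap.toContinuousLinearMap ℓ
  refine ⟨(‖L‖ + 1) / α, by positivity, fun x => ?_⟩
  calc |ℓ x| = ‖L x‖ := rfl
    _ ≤ (‖L‖ + 1) * ‖x‖ := (L.le_opNorm x).trans (by gcongr; linarith)
    _ ≤ (‖L‖ + 1) / α * N x := by
      rw [div_mul_eq_mul_div, le_div_iff₀ hα, mul_assoc]
      gcongr
      linarith [hαN x]

end Homogeneous

lemma exists_pos_forall_le_of_pos {ι : Type*} [Fintype ι] {f : ι → ℝ} (hf : ∀ i, 0 < f i) :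
    ∃ δ > 0, ∀ i, δ ≤ f i := by
  cases isEmpty_or_nonempty ι
  · exact ⟨1, one_pos, isEmptyElim⟩
  obtain ⟨i₀, -, hi₀⟩ := Finset.univ.exists_min_image f Finset.univ_nonempty
  exact ⟨f i₀, hf i₀, fun i => hi₀ i (Finset.mem_univ i)⟩

lemma lt_dotProduct_of_mem_interior {n : ℕ} {a x : Fin n → ℝ} {β : ℝ} (ha : a ≠ 0)
    (hx : x ∈ interior {x | β ≤ a ⬝ᵥ x}) : β < a ⬝ᵥ x := by
  set f := dotProductBilin ℝ ℝ a
  have hf : f ≠ 0 := fun h => ha (dotProduct_self_eq_zero.mp (LinearMap.congr_fun h a))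
  have hopen := f.isOpenMap_of_finiteDimensional (LinearMap.surjective hf)
  have hpre := hopen.preimage_interior_eq_interior_preimage f.continuous_of_finiteDimensional
    (Set.Ici β)
  rw [interior_Ici] at hpre
  exact (hpre ▸ hx : x ∈ f ⁻¹' Set.Ioi β)

lemma exists_slack {m n : ℕ} {A : Matrix (Fin m) (Fin n) ℝ} {b : Fin m → ℝ}
    (hrows : ∀ i, A i ≠ 0)
    (hPint : (interior {x : Fin n → ℝ | ∀ i, b i ≤ A.mulVec x i}).Nonempty) :
    ∃ x₀ : Fin n → ℝ, ∃ δ > 0, ∀ i, b i + δ ≤ (A *ᵥ x₀) i := by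
  obtain ⟨x₀, hx₀⟩ := hPint
  have hlt : ∀ i, 0 < (A *ᵥ x₀) i - b i := fun i =>
    sub_pos.mpr <| lt_dotProduct_of_mem_interior (hrows i) <|
      interior_mono (fun x (hx : ∀ i, b i ≤ (A *ᵥ x) i) => hx i) hx₀
  obtain ⟨δ, hδ, hδle⟩ := exists_pos_forall_le_of_pos hlt
  exact ⟨x₀, δ, hδ, fun i => by linarith [hδle i]⟩

lemma add_mul_sum_le_of_slack {m n : ℕ} {A : Matrix (Fin m) (Fin n) ℝ} {b : Fin m → ℝ}
    {x₀ : Fin n → ℝ} {δ : ℝ} (hslack : ∀ i, b i + δ ≤ (A *ᵥ x₀) i)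
    {y : Fin m → ℝ} (hy : ∀ i, 0 ≤ y i) :
    b ⬝ᵥ y + δ * ∑ i, y i ≤ (Aᵀ *ᵥ y) ⬝ᵥ x₀ := by
  rw [mulVec_transpose, ← dotProduct_mulVec]
  calc b ⬝ᵥ y + δ * ∑ i, y i = ∑ i, y i * (b i + δ) := by
        simp only [dotProduct, Finset.mul_sum, ← Finset.sum_add_distrib]
        exact Finset.sum_congr rfl fun i _ => by ring
    _ ≤ ∑ i, y i * (A *ᵥ x₀) i :=
        Finset.sum_le_sum fun i _ => mul_le_mul_of_nonneg_left (hslack i) (hy i)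

lemma neg_dotProduct_le_norm_mul_sum {m : ℕ} (b : Fin m → ℝ) {y : Fin m → ℝ} (hy : ∀ i, 0 ≤ y i) :
    -(b ⬝ᵥ y) ≤ ‖b‖ * ∑ i, y i := by
  rw [dotProduct, ← Finset.sum_neg_distrib, Finset.mul_sum]
  refine Finset.sum_le_sum fun i _ => ?_
  rw [← neg_mul]
  exact mul_le_mul_of_nonneg_right ((neg_le_abs _).trans (norm_le_pi_norm b i)) (hy i)

section GIO

variable {m n Q : ℕ} {A : Matrix (Fin m) (Fin n) ℝ} {b : Fin m → ℝ}
  {N : (Fin n → ℝ) → ℝ} {xhat : Fin Q → Fin n → ℝ} {K : ℝ}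
  {c : Fin n → ℝ} {y : Fin m → ℝ} {ε : Fin Q → ℝ}

variable (A b N xhat) in
noncomputable def zR : ℝ≥0∞ :=
  sInf {v : ℝ≥0∞ | ∃ (c : Fin n → ℝ) (y : Fin m → ℝ) (ε : Fin Q → ℝ),
    FeasR A b N xhat c y ε ∧ v = ENNReal.ofReal (∑ q, |ε q - 1|)}

variable (A b N xhat K) in
noncomputable def zMin : ℝ≥0∞ :=
  min (min (zP A b N xhat K) (zN A b N xhat K)) (zZ A b N xhat K)

-- The feasible points with `bᵀ y < -1/K` are those that no rescaling maps into a sub-problem.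
variable (A b N xhat K) in
def BoundsFarPoints : Prop :=
  ∀ c y ε, FeasR A b N xhat c y ε → b ⬝ᵥ y < -K⁻¹ →
    zMin A b N xhat K ≤ ENNReal.ofReal (∑ q, |ε q - 1|)

lemma feasR_inv_norm_smul (hN₂ : ∀ (a : ℝ) (x : Fin n → ℝ), N (a • x) = |a| * N x)
    (hc : Aᵀ *ᵥ y = c) (hy : ∀ i, 0 ≤ y i)
    (hε : ∀ q, c ⬝ᵥ xhat q = ε q * (b ⬝ᵥ y)) (hε₀ : b ⬝ᵥ y = 0 → ∀ q, ε q = 1)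
    (hNc : 0 < N c) :
    FeasR A b N xhat ((N c)⁻¹ • c) ((N c)⁻¹ • y) ε := by
  have hby : b ⬝ᵥ ((N c)⁻¹ • y) = (N c)⁻¹ * (b ⬝ᵥ y) := dotProduct_smul _ _ _
  refine ⟨by rw [mulVec_smul, hc], fun i => mul_nonneg (inv_nonneg.mpr hNc.le) (hy i),
    fun q => ?_, ?_, ?_⟩
  · rw [smul_dotProduct, hε, hby, smul_eq_mul]; ring
  · rw [hN₂, abs_of_pos (inv_pos.mpr hNc), inv_mul_cancel₀ hNc.ne']
  · rw [hby]
    exact fun h => hε₀ ((mul_eq_zero.mp h).resolve_left (inv_ne_zero hNc.ne'))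

lemma FeasP.normalize (hN₂ : ∀ (a : ℝ) (x : Fin n → ℝ), N (a • x) = |a| * N x) (hK : 0 < K)
    (h : FeasP A b N xhat K c y ε) :
    FeasR A b N xhat ((N c)⁻¹ • c) ((N c)⁻¹ • y) ε := by
  obtain ⟨hc, hy, hε, hby, hNc⟩ := h
  exact feasR_inv_norm_smul hN₂ hc hy (fun q => by rw [hε, hby, mul_one])
    (fun h => absurd (hby ▸ h) one_ne_zero) (hK.trans_le hNc)

lemma FeasNg.normalize (hN₂ : ∀ (a : ℝ) (x : Fin n → ℝ), N (a • x) = |a| * N x) (hK : 0 < K)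
    (h : FeasNg A b N xhat K c y ε) :
    FeasR A b N xhat ((N c)⁻¹ • c) ((N c)⁻¹ • y) ε := by
  obtain ⟨hc, hy, hε, hby, hNc⟩ := h
  exact feasR_inv_norm_smul hN₂ hc hy (fun q => by rw [hε, hby, mul_neg_one])
    (fun h => absurd (hby ▸ h) (by norm_num)) (hK.trans_le hNc)

lemma FeasZ.normalize (hN₂ : ∀ (a : ℝ) (x : Fin n → ℝ), N (a • x) = |a| * N x) (hK : 0 < K)
    (hε : ∀ q, ε q = 1) (h : FeasZ A b N xhat K c y) :
    FeasR A b N xhat ((N c)⁻¹ • c) ((N c)⁻¹ • y) ε := by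
  obtain ⟨hc, hy, hx, hby, -, hNc⟩ := h
  exact feasR_inv_norm_smul hN₂ hc hy (fun q => by rw [hx, hby, mul_zero]) (fun _ => hε)
    (hK.trans_le hNc)

lemma zR_le_zMin (hN₂ : ∀ (a : ℝ) (x : Fin n → ℝ), N (a • x) = |a| * N x) (hK : 0 < K) :
    zR A b N xhat ≤ zMin A b N xhat K := by
  refine le_min (le_min ?_ ?_) ?_ <;> apply sInf_le_sInf
  · rintro v ⟨c, y, ε, h, rfl⟩
    exact ⟨_, _, ε, h.normalize hN₂ hK, rfl⟩
  · rintro v ⟨c, y, ε, h, rfl⟩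
    exact ⟨_, _, ε, h.normalize hN₂ hK, rfl⟩
  · rintro v ⟨c, y, h, rfl⟩
    exact ⟨_, _, fun _ => 1, h.normalize hN₂ hK (fun _ => rfl), by simp⟩

lemma FeasR.inv_smul (hN₂ : ∀ (a : ℝ) (x : Fin n → ℝ), N (a • x) = |a| * N x)
    (h : FeasR A b N xhat c y ε) {t : ℝ} (ht : 0 < t) :
    Aᵀ *ᵥ (t⁻¹ • y) = t⁻¹ • c ∧ (∀ i, 0 ≤ (t⁻¹ • y) i) ∧ N (t⁻¹ • c) = t⁻¹ := by
  obtain ⟨hc, hy, -, hNc, -⟩ := h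
  refine ⟨by rw [mulVec_smul, hc], fun i => mul_nonneg (inv_nonneg.mpr ht.le) (hy i), ?_⟩
  rw [hN₂, hNc, mul_one, abs_of_pos (inv_pos.mpr ht)]

lemma zP_le_of_feasR (hN₂ : ∀ (a : ℝ) (x : Fin n → ℝ), N (a • x) = |a| * N x) (hK : 0 < K)
    (h : FeasR A b N xhat c y ε) (hpos : 0 < b ⬝ᵥ y) (hle : b ⬝ᵥ y ≤ K⁻¹) :
    zP A b N xhat K ≤ ENNReal.ofReal (∑ q, |ε q - 1|) := by
  obtain ⟨hc, hy, hN⟩ := h.inv_smul hN₂ hpos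
  refine sInf_le ⟨_, _, ε, ⟨hc, hy, fun q => ?_, ?_, ?_⟩, rfl⟩
  · rw [smul_dotProduct, h.2.2.1, smul_eq_mul]; field_simp
  · rw [dotProduct_smul, smul_eq_mul, inv_mul_cancel₀ hpos.ne']
  · rwa [hN, le_inv_comm₀ hK hpos]

lemma zN_le_of_feasR (hN₂ : ∀ (a : ℝ) (x : Fin n → ℝ), N (a • x) = |a| * N x) (hK : 0 < K)
    (h : FeasR A b N xhat c y ε) (hneg : b ⬝ᵥ y < 0) (hle : -K⁻¹ ≤ b ⬝ᵥ y) :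
    zN A b N xhat K ≤ ENNReal.ofReal (∑ q, |ε q - 1|) := by
  have hpos : 0 < -(b ⬝ᵥ y) := neg_pos.mpr hneg
  obtain ⟨hc, hy, hN⟩ := h.inv_smul hN₂ hpos
  refine sInf_le ⟨_, _, ε, ⟨hc, hy, fun q => ?_, ?_, ?_⟩, rfl⟩
  · rw [smul_dotProduct, h.2.2.1, smul_eq_mul]; field_simp [hneg.ne]
  · rw [dotProduct_smul, smul_eq_mul]; field_simp [hneg.ne]
  · rw [hN, le_inv_comm₀ hK hpos]; linarith

lemma zZ_eq_zero_of_feasR (hN₂ : ∀ (a : ℝ) (x : Fin n → ℝ), N (a • x) = |a| * N x)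
    (hK : 0 < K) (h : FeasR A b N xhat c y ε) (hzero : b ⬝ᵥ y = 0)
    (hle : ∑ i, y i ≤ K⁻¹) : zZ A b N xhat K = 0 := by
  have hy₀ : y ≠ 0 := by
    rintro rfl
    have hc : c = 0 := by rw [← h.1, mulVec_zero]
    have h1 := h.2.2.2.1
    rw [hc, map_zero_of_homogeneous hN₂] at h1
    exact zero_ne_one h1
  have hpos : 0 < ∑ i, y i := Fintype.sum_pos (lt_of_le_of_ne h.2.1 hy₀.symm)
  obtain ⟨hc, hy, hN⟩ := h.inv_smul hN₂ hpos
  refine nonpos_iff_eq_zero.mp (sInf_le ⟨_, _, ⟨hc, hy, fun q => ?_, ?_, ?_, ?_⟩, rfl⟩)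
  · rw [smul_dotProduct, h.2.2.1, hzero, mul_zero, smul_zero]
  · rw [dotProduct_smul, hzero, smul_zero]
  · simp only [Pi.smul_apply, smul_eq_mul, ← Finset.mul_sum, inv_mul_cancel₀ hpos.ne']
  · rwa [hN, le_inv_comm₀ hK hpos]

lemma zMin_le_of_feasR (hN₂ : ∀ (a : ℝ) (x : Fin n → ℝ), N (a • x) = |a| * N x) (hK : 0 < K)
    (hbound : ∀ y, (∀ i, 0 ≤ y i) → N (Aᵀ *ᵥ y) = 1 → 0 ≤ b ⬝ᵥ y →
      b ⬝ᵥ y ≤ K⁻¹ ∧ ∑ i, y i ≤ K⁻¹)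
    (hfar : BoundsFarPoints A b N xhat K) (h : FeasR A b N xhat c y ε) :
    zMin A b N xhat K ≤ ENNReal.ofReal (∑ q, |ε q - 1|) := by
  have hbound := hbound y h.2.1 (h.1 ▸ h.2.2.2.1)
  rcases lt_trichotomy (b ⬝ᵥ y) 0 with hneg | hzero | hpos
  · by_cases hfar' : b ⬝ᵥ y < -K⁻¹
    · exact hfar c y ε h hfar'
    · exact min_le_of_left_le <| min_le_of_right_le <|
        zN_le_of_feasR hN₂ hK h hneg (not_lt.mp hfar')
  · exact min_le_of_right_le <| (zZ_eq_zero_of_feasR hN₂ hK h hzero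
      (hbound hzero.ge).2).trans_le zero_le
  · exact min_le_of_left_le <| min_le_of_left_le <|
      zP_le_of_feasR hN₂ hK h hpos (hbound hpos.le).1

lemma exists_bound_of_slack (hN₁ : ∀ x y, N (x + y) ≤ N x + N y)
    (hN₂ : ∀ (a : ℝ) (x : Fin n → ℝ), N (a • x) = |a| * N x) (hN₃ : ∀ x, x ≠ 0 → 0 < N x)
    {x₀ : Fin n → ℝ} {δ : ℝ} (hδ : 0 < δ) (hslack : ∀ i, b i + δ ≤ (A *ᵥ x₀) i) :
    ∃ L > 0, ∀ y, (∀ i, 0 ≤ y i) → N (Aᵀ *ᵥ y) = 1 → 0 ≤ b ⬝ᵥ y →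
      b ⬝ᵥ y ≤ L ∧ ∑ i, y i ≤ L := by
  obtain ⟨C, hC, hCN⟩ := exists_abs_le_mul_of_homogeneous hN₁ hN₂ hN₃ (dotProductBilin ℝ ℝ x₀)
  refine ⟨max C (C / δ), lt_max_of_lt_left hC, fun y hy hNy hby => ?_⟩
  have hx₀ : (Aᵀ *ᵥ y) ⬝ᵥ x₀ ≤ C := by
    have := hCN (Aᵀ *ᵥ y)
    rw [dotProductBilin_apply_apply, dotProduct_comm, hNy, mul_one] at this
    exact (le_abs_self _).trans this
  have hsum_nonneg : 0 ≤ ∑ i, y i := Fintype.sum_nonneg hy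
  have key := add_mul_sum_le_of_slack hslack hy
  refine ⟨le_max_of_le_left (by nlinarith), le_max_of_le_right ?_⟩
  rw [le_div_iff₀ hδ]
  linarith

lemma zR_eq_zMin (hN₂ : ∀ (a : ℝ) (x : Fin n → ℝ), N (a • x) = |a| * N x) (hK : 0 < K)
    (hlow : ∀ c y ε, FeasR A b N xhat c y ε →
      zMin A b N xhat K ≤ ENNReal.ofReal (∑ q, |ε q - 1|)) :
    zR A b N xhat = zMin A b N xhat K :=
  le_antisymm (zR_le_zMin hN₂ hK) <| le_sInf <| by
    rintro v ⟨c, y, ε, h, rfl⟩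
    exact hlow c y ε h

lemma sum_mul_dotProduct_eq (h : FeasR A b N xhat c y ε) :
    (∑ q, ε q) * (b ⬝ᵥ y) = c ⬝ᵥ ∑ q, xhat q := by
  rw [dotProduct_sum, Finset.sum_mul]
  exact Finset.sum_congr rfl fun q _ => (h.2.2.1 q).symm

lemma card_sub_sum_le_sum_abs_sub_one (ε : Fin Q → ℝ) :
    (Q : ℝ) - ∑ q, ε q ≤ ∑ q, |ε q - 1| :=
  calc (Q : ℝ) - ∑ q, ε q = ∑ q, (1 - ε q) := by simp [Finset.sum_sub_distrib]
    _ ≤ ∑ q, |ε q - 1| := Finset.sum_le_sum fun q _ => by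
        rw [abs_sub_comm]; exact le_abs_self _

lemma boundsFarPoints_of_zN_le {t : ℝ} (hz : zN A b N xhat K ≤ ENNReal.ofReal (Q - t))
    (hε : ∀ c y ε, FeasR A b N xhat c y ε → b ⬝ᵥ y < -K⁻¹ → ∑ q, ε q ≤ t) :
    BoundsFarPoints A b N xhat K := fun c y ε h hfar =>
  min_le_of_left_le <| min_le_of_right_le <| hz.trans <| ENNReal.ofReal_le_ofReal <| by
    linarith [hε c y ε h hfar, card_sub_sum_le_sum_abs_sub_one ε]

-- Witness: `c = τ Aᵀ y₁` and `y = τ y₁ + (1 + τ bᵀ y₁) r`, the ray `r` restoring `bᵀ y = -1`.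
lemma exists_zN_le_of_ray (hN₂ : ∀ (a : ℝ) (x : Fin n → ℝ), N (a • x) = |a| * N x)
    {r : Fin m → ℝ} (hr : ∀ i, 0 ≤ r i) (hrA : Aᵀ *ᵥ r = 0) (hrb : b ⬝ᵥ r = -1)
    {y₁ : Fin m → ℝ} (hy₁ : ∀ i, 0 ≤ y₁ i) :
    ∃ τ > 0, ∀ K ≤ τ * N (Aᵀ *ᵥ y₁),
      zN A b N xhat K ≤ ENNReal.ofReal (Q + τ * ((Aᵀ *ᵥ y₁) ⬝ᵥ ∑ q, xhat q)) := by
  set c₀ := Aᵀ *ᵥ y₁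
  set D := 1 + |b ⬝ᵥ y₁| + ∑ q, |c₀ ⬝ᵥ xhat q|
  have hD : 0 < D := by positivity
  have hsmall : ∀ a, |a| ≤ D → 0 ≤ 1 + D⁻¹ * a := fun a ha => by
    have : D⁻¹ * |a| ≤ 1 := inv_mul_le_one_of_le₀ ha hD.le
    nlinarith [neg_abs_le a, inv_pos.mpr hD]
  have hpad : 0 ≤ 1 + D⁻¹ * (b ⬝ᵥ y₁) := hsmall _ <| by
    linarith [Finset.sum_nonneg fun q (_ : q ∈ Finset.univ) => abs_nonneg (c₀ ⬝ᵥ xhat q)]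
  have hx : ∀ q, 0 ≤ 1 + D⁻¹ * (c₀ ⬝ᵥ xhat q) := fun q => hsmall _ <| by
    linarith [abs_nonneg (b ⬝ᵥ y₁),
      Finset.single_le_sum (fun q _ => abs_nonneg (c₀ ⬝ᵥ xhat q)) (Finset.mem_univ q)]
  refine ⟨D⁻¹, inv_pos.mpr hD, fun K hK => sInf_le ⟨D⁻¹ • c₀,
    D⁻¹ • y₁ + (1 + D⁻¹ * (b ⬝ᵥ y₁)) • r, fun q => -(D⁻¹ * (c₀ ⬝ᵥ xhat q)),
    ⟨?_, fun i => ?_, fun q => ?_, ?_, ?_⟩, ?_⟩⟩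
  · rw [mulVec_add, mulVec_smul, mulVec_smul, hrA, smul_zero, add_zero]
  · exact add_nonneg (mul_nonneg (inv_pos.mpr hD).le (hy₁ i)) (mul_nonneg hpad (hr i))
  · rw [smul_dotProduct, smul_eq_mul, neg_neg]
  · rw [dotProduct_add, dotProduct_smul, dotProduct_smul, hrb, smul_eq_mul, smul_eq_mul]
    ring
  · rwa [hN₂, abs_of_pos (inv_pos.mpr hD)]
  · congr 1
    rw [dotProduct_sum, Finset.mul_sum]
    have : ∀ q, |-(D⁻¹ * (c₀ ⬝ᵥ xhat q)) - 1| = 1 + D⁻¹ * (c₀ ⬝ᵥ xhat q) := fun q => by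
      rw [← abs_neg, neg_sub, sub_neg_eq_add, abs_of_nonneg (by linarith [hx q])]
    simp_rw [this, Finset.sum_add_distrib]
    simp

lemma exists_boundsFarPoints_of_ray_of_neg (hN₁ : ∀ x y, N (x + y) ≤ N x + N y)
    (hN₂ : ∀ (a : ℝ) (x : Fin n → ℝ), N (a • x) = |a| * N x) (hN₃ : ∀ x, x ≠ 0 → 0 < N x)
    {r : Fin m → ℝ} (hr : ∀ i, 0 ≤ r i) (hrA : Aᵀ *ᵥ r = 0) (hrb : b ⬝ᵥ r = -1)
    {y₁ : Fin m → ℝ} (hy₁ : ∀ i, 0 ≤ y₁ i) (hneg : (Aᵀ *ᵥ y₁) ⬝ᵥ ∑ q, xhat q < 0) :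
    ∃ K₀ > 0, ∀ K, 0 < K → K ≤ K₀ → BoundsFarPoints A b N xhat K := by
  set s := ∑ q, xhat q
  set c₀ := Aᵀ *ᵥ y₁
  obtain ⟨τ, hτ, hzN⟩ := exists_zN_le_of_ray (xhat := xhat) hN₂ hr hrA hrb hy₁
  obtain ⟨W, hW, hWN⟩ := exists_abs_le_mul_of_homogeneous hN₁ hN₂ hN₃ (dotProductBilin ℝ ℝ s)
  have hc₀ : c₀ ≠ 0 := fun h => by rw [h, zero_dotProduct] at hneg; exact hneg.false
  refine ⟨min (τ * N c₀) (τ * -(c₀ ⬝ᵥ s) / W),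
    lt_min (mul_pos hτ (hN₃ _ hc₀)) (div_pos (mul_pos hτ (neg_pos.mpr hneg)) hW),
    fun K hK hKle => boundsFarPoints_of_zN_le (t := W * K)
      ((hzN K (hKle.trans (min_le_left _ _))).trans (ENNReal.ofReal_le_ofReal ?_)) ?_⟩
  · have := hKle.trans (min_le_right _ _)
    rw [le_div_iff₀ hW] at this
    linarith
  · intro c y ε h hfar
    have hsum := sum_mul_dotProduct_eq h
    have hcs : |c ⬝ᵥ s| ≤ W := by
      simpa [dotProduct_comm, h.2.2.2.1] using hWN c
    have hKinv := inv_pos.mpr hK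
    rw [← mul_inv_le_iff₀ hK]
    rcases le_or_gt (∑ q, ε q) 0 with hε | hε
    · nlinarith
    · nlinarith [neg_abs_le (c ⬝ᵥ s)]

lemma exists_nonneg_mulVec_eq_neg_row {r : Fin m → ℝ} (hr : ∀ i, 0 ≤ r i)
    (hrA : Aᵀ *ᵥ r = 0) {i₀ : Fin m} (hi₀ : 0 < r i₀) :
    ∃ y, (∀ i, 0 ≤ y i) ∧ Aᵀ *ᵥ y = -A i₀ := by
  refine ⟨(r i₀)⁻¹ • r - Pi.single i₀ 1, fun i => ?_, ?_⟩
  · rcases eq_or_ne i i₀ with rfl | hi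
    · simp [inv_mul_cancel₀ hi₀.ne']
    · simpa [hi] using mul_nonneg (inv_nonneg.mpr hi₀.le) (hr i)
  · rw [mulVec_sub, mulVec_smul, hrA, smul_zero, zero_sub, mulVec_single_one]
    rfl

lemma exists_boundsFarPoints_of_ray_of_nonneg
    (hN₂ : ∀ (a : ℝ) (x : Fin n → ℝ), N (a • x) = |a| * N x) (hN₃ : ∀ x, x ≠ 0 → 0 < N x)
    (hrows : ∀ i, A i ≠ 0)
    {r : Fin m → ℝ} (hr : ∀ i, 0 ≤ r i) (hrA : Aᵀ *ᵥ r = 0) (hrb : b ⬝ᵥ r = -1)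
    (hnonneg : ∀ y, (∀ i, 0 ≤ y i) → 0 ≤ (Aᵀ *ᵥ y) ⬝ᵥ ∑ q, xhat q) :
    ∃ K₀ > 0, ∀ K, 0 < K → K ≤ K₀ → BoundsFarPoints A b N xhat K := by
  obtain ⟨i₀, hi₀⟩ : ∃ i, 0 < r i := by
    by_contra! h
    rw [show r = 0 from funext fun i => le_antisymm (h i) (hr i), dotProduct_zero] at hrb
    norm_num at hrb
  have he : 0 ≤ (Pi.single i₀ 1 : Fin m → ℝ) := Pi.single_nonneg.mpr zero_le_one
  have hrow : Aᵀ *ᵥ Pi.single i₀ 1 = A i₀ := mulVec_single_one _ _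
  -- `A i₀` and `-A i₀` both lie in the dual cone, so `A i₀` is orthogonal to `∑ q, xhat q`.
  obtain ⟨y', hy', hy'A⟩ := exists_nonneg_mulVec_eq_neg_row hr hrA hi₀
  have hzero : A i₀ ⬝ᵥ ∑ q, xhat q = 0 := by
    have h₁ := hnonneg _ he
    have h₂ := hnonneg y' hy'
    rw [hrow] at h₁
    rw [hy'A, neg_dotProduct] at h₂
    linarith
  obtain ⟨τ, hτ, hzN⟩ := exists_zN_le_of_ray (xhat := xhat) hN₂ hr hrA hrb he
  refine ⟨τ * N (A i₀), mul_pos hτ (hN₃ _ (hrows i₀)), fun K hK hKle =>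
    boundsFarPoints_of_zN_le (t := 0) ?_ fun c y ε h hfar => ?_⟩
  · simpa [hrow, hzero] using hzN K (by rwa [hrow])
  · have hsum := sum_mul_dotProduct_eq h
    have hcs := hnonneg y h.2.1
    rw [h.1] at hcs
    nlinarith [inv_pos.mpr hK]

lemma exists_pos_mul_sum_le_of_no_ray (hN₁ : ∀ x y, N (x + y) ≤ N x + N y)
    (hN₂ : ∀ (a : ℝ) (x : Fin n → ℝ), N (a • x) = |a| * N x) (hN₃ : ∀ x, x ≠ 0 → 0 < N x)
    (hno : ∀ y, (∀ i, 0 ≤ y i) → Aᵀ *ᵥ y = 0 → y = 0) :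
    ∃ μ > 0, ∀ y, (∀ i, 0 ≤ y i) → μ * ∑ i, y i ≤ N (Aᵀ *ᵥ y) := by
  have hcont : Continuous fun y => N (Aᵀ *ᵥ y) :=
    (continuous_of_subadditive_of_homogeneous hN₁ hN₂).comp
      (continuous_const.matrix_mulVec continuous_id)
  obtain ⟨μ, hμ, hμN⟩ := (isCompact_stdSimplex ℝ (Fin m)).exists_forall_le' hcont.continuousOn
    fun y hy => hN₃ _ fun h => by simpa [hno y hy.1 h] using hy.2
  refine ⟨μ, hμ, fun y hy => ?_⟩
  rcases (Fintype.sum_nonneg (f := y) hy).eq_or_lt with hsum | hsum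
  · rw [← hsum, mul_zero]
    rcases eq_or_ne (Aᵀ *ᵥ y) 0 with h | h
    · rw [h, map_zero_of_homogeneous hN₂]
    · exact (hN₃ _ h).le
  · have hmem : (∑ i, y i)⁻¹ • y ∈ stdSimplex ℝ (Fin m) :=
      ⟨fun i => mul_nonneg (inv_nonneg.mpr hsum.le) (hy i), by
        simp [← Finset.mul_sum, inv_mul_cancel₀ hsum.ne']⟩
    have := hμN _ hmem
    rw [mulVec_smul, hN₂, abs_of_pos (inv_pos.mpr hsum), le_inv_mul_iff₀ hsum] at this
    linarith

lemma exists_boundsFarPoints_of_no_ray (hN₁ : ∀ x y, N (x + y) ≤ N x + N y)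
    (hN₂ : ∀ (a : ℝ) (x : Fin n → ℝ), N (a • x) = |a| * N x) (hN₃ : ∀ x, x ≠ 0 → 0 < N x)
    (hno : ∀ y, (∀ i, 0 ≤ y i) → Aᵀ *ᵥ y = 0 → y = 0) :
    ∃ K₀ > 0, ∀ K, 0 < K → K ≤ K₀ → BoundsFarPoints A b N xhat K := by
  obtain ⟨μ, hμ, hμN⟩ := exists_pos_mul_sum_le_of_no_ray hN₁ hN₂ hN₃ hno
  refine ⟨μ / (‖b‖ + 1), by positivity, fun K hK hKle c y ε h hfar => ?_⟩
  rw [le_div_iff₀ (by positivity)] at hKle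
  have hsum := hμN y h.2.1
  rw [h.1, h.2.2.2.1] at hsum
  have hby := mul_le_mul_of_nonneg_left (neg_dotProduct_le_norm_mul_sum b h.2.1) hK.le
  have hyK := mul_le_mul_of_nonneg_right hKle (Fintype.sum_nonneg h.2.1)
  have hfar' := mul_lt_mul_of_pos_left (lt_neg_of_lt_neg hfar) hK
  rw [mul_inv_cancel₀ hK.ne'] at hfar'
  exact absurd hfar' (by nlinarith [mul_nonneg hK.le (Fintype.sum_nonneg h.2.1)])

lemma exists_normalized_ray_of_slack {x₀ : Fin n → ℝ} {δ : ℝ} (hδ : 0 < δ)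
    (hslack : ∀ i, b i + δ ≤ (A *ᵥ x₀) i) {r₀ : Fin m → ℝ} (hr₀ : ∀ i, 0 ≤ r₀ i)
    (hr₀A : Aᵀ *ᵥ r₀ = 0) (hne : r₀ ≠ 0) :
    ∃ r, (∀ i, 0 ≤ r i) ∧ Aᵀ *ᵥ r = 0 ∧ b ⬝ᵥ r = -1 := by
  have key := add_mul_sum_le_of_slack hslack hr₀
  rw [hr₀A, zero_dotProduct] at key
  have hsum : 0 < ∑ i, r₀ i := Fintype.sum_pos (lt_of_le_of_ne hr₀ hne.symm)
  have hb : 0 < -(b ⬝ᵥ r₀) := by nlinarith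
  refine ⟨(-(b ⬝ᵥ r₀))⁻¹ • r₀, fun i => mul_nonneg (inv_pos.mpr hb).le (hr₀ i),
    by rw [mulVec_smul, hr₀A, smul_zero], ?_⟩
  rw [dotProduct_smul, smul_eq_mul, inv_neg, neg_mul, inv_mul_cancel₀ (neg_pos.mp hb).ne]

lemma exists_boundsFarPoints (hN₁ : ∀ x y, N (x + y) ≤ N x + N y)
    (hN₂ : ∀ (a : ℝ) (x : Fin n → ℝ), N (a • x) = |a| * N x) (hN₃ : ∀ x, x ≠ 0 → 0 < N x)
    (hrows : ∀ i, A i ≠ 0) {x₀ : Fin n → ℝ} {δ : ℝ} (hδ : 0 < δ)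
    (hslack : ∀ i, b i + δ ≤ (A *ᵥ x₀) i) :
    ∃ K₀ > 0, ∀ K, 0 < K → K ≤ K₀ → BoundsFarPoints A b N xhat K := by
  by_cases hray : ∃ r₀, (∀ i, 0 ≤ r₀ i) ∧ Aᵀ *ᵥ r₀ = 0 ∧ r₀ ≠ 0
  · obtain ⟨r₀, hr₀, hr₀A, hne⟩ := hray
    obtain ⟨r, hr, hrA, hrb⟩ := exists_normalized_ray_of_slack hδ hslack hr₀ hr₀A hne
    by_cases hneg : ∃ y₁, (∀ i, 0 ≤ y₁ i) ∧ (Aᵀ *ᵥ y₁) ⬝ᵥ ∑ q, xhat q < 0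
    · obtain ⟨y₁, hy₁, hneg⟩ := hneg
      exact exists_boundsFarPoints_of_ray_of_neg hN₁ hN₂ hN₃ hr hrA hrb hy₁ hneg
    · push Not at hneg
      exact exists_boundsFarPoints_of_ray_of_nonneg hN₂ hN₃ hrows hr hrA hrb hneg
  · push Not at hray
    exact exists_boundsFarPoints_of_no_ray hN₁ hN₂ hN₃ hray

end GIO

theorem stmt_8_general
    (m n Q : ℕ)
    (A : Matrix (Fin m) (Fin n) ℝ) (b : Fin m → ℝ)
    (hrows : ∀ i, A i ≠ 0)
    (hPint : (interior {x : Fin n → ℝ | ∀ i, b i ≤ A.mulVec x i}).Nonempty)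
    -- the normalization norm ‖·‖'
    (N : (Fin n → ℝ) → ℝ)
    (hN₁ : ∀ x y, N (x + y) ≤ N x + N y)
    (hN₂ : ∀ (a : ℝ) (x : Fin n → ℝ), N (a • x) = |a| * N x)
    (hN₃ : ∀ x, x ≠ 0 → 0 < N x)
    -- the data set X̂
    (xhat : Fin Q → Fin n → ℝ) :
    ∃ K : ℝ, 0 < K ∧
      -- the optimal value of GIO_R(X̂) equals min{z⁺, z⁻, z⁰}
      sInf {v : ℝ≥0∞ | ∃ (c : Fin n → ℝ) (y : Fin m → ℝ) (ε : Fin Q → ℝ),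
          FeasR A b N xhat c y ε ∧ v = ENNReal.ofReal (∑ q, |ε q - 1|)} =
        min (min (zP A b N xhat K) (zN A b N xhat K)) (zZ A b N xhat K) ∧
      -- any optimal solution of a sub-problem attaining this minimum, once
      -- normalized, is an optimal solution of GIO_R(X̂)
      ∀ (cstar : Fin n → ℝ) (ystar : Fin m → ℝ) (εstar : Fin Q → ℝ),
        ((FeasP A b N xhat K cstar ystar εstar ∧
            (∀ c y ε, FeasP A b N xhat K c y ε →
              ∑ q, |εstar q - 1| ≤ ∑ q, |ε q - 1|) ∧
            ENNReal.ofReal (∑ q, |εstar q - 1|) =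
              min (min (zP A b N xhat K) (zN A b N xhat K)) (zZ A b N xhat K)) ∨
         (FeasNg A b N xhat K cstar ystar εstar ∧
            (∀ c y ε, FeasNg A b N xhat K c y ε →
              ∑ q, |εstar q - 1| ≤ ∑ q, |ε q - 1|) ∧
            ENNReal.ofReal (∑ q, |εstar q - 1|) =
              min (min (zP A b N xhat K) (zN A b N xhat K)) (zZ A b N xhat K)) ∨
         (FeasZ A b N xhat K cstar ystar ∧ (∀ q, εstar q = 1) ∧
            zZ A b N xhat K =
              min (min (zP A b N xhat K) (zN A b N xhat K)) (zZ A b N xhat K))) →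
        (FeasR A b N xhat ((N cstar)⁻¹ • cstar) ((N cstar)⁻¹ • ystar) εstar ∧
          ∀ c y ε, FeasR A b N xhat c y ε →
            ∑ q, |εstar q - 1| ≤ ∑ q, |ε q - 1|) := by
  obtain ⟨x₀, δ, hδ, hslack⟩ := exists_slack hrows hPint
  obtain ⟨L, hL, hbound⟩ := exists_bound_of_slack hN₁ hN₂ hN₃ hδ hslack
  obtain ⟨K₀, hK₀, hfar⟩ := exists_boundsFarPoints (xhat := xhat) hN₁ hN₂ hN₃ hrows hδ hslack
  set K := min K₀ L⁻¹
  have hK : 0 < K := lt_min hK₀ (inv_pos.mpr hL)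
  have hLK : L ≤ K⁻¹ := (le_inv_comm₀ hK hL).mp (min_le_right _ _)
  have hlow : ∀ c y ε, FeasR A b N xhat c y ε →
      zMin A b N xhat K ≤ ENNReal.ofReal (∑ q, |ε q - 1|) := fun c y ε h =>
    zMin_le_of_feasR hN₂ hK
      (fun y hy hNy hby => (hbound y hy hNy hby).imp (·.trans hLK) (·.trans hLK))
      (hfar K hK (min_le_left _ _)) h
  have hopt : ∀ εstar : Fin Q → ℝ,
      ENNReal.ofReal (∑ q, |εstar q - 1|) = zMin A b N xhat K →
      ∀ c y ε, FeasR A b N xhat c y ε → ∑ q, |εstar q - 1| ≤ ∑ q, |ε q - 1| :=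
    fun εstar hval c y ε h => (ENNReal.ofReal_le_ofReal_iff
      (Fintype.sum_nonneg fun q => abs_nonneg (ε q - 1))).mp (hval ▸ hlow c y ε h)
  refine ⟨K, hK, zR_eq_zMin hN₂ hK hlow, ?_⟩
  rintro cstar ystar εstar (⟨h, -, hval⟩ | ⟨h, -, hval⟩ | ⟨h, hε, -⟩)
  · exact ⟨h.normalize hN₂ hK, hopt εstar hval⟩
  · exact ⟨h.normalize hN₂ hK, hopt εstar hval⟩
  · refine ⟨h.normalize hN₂ hK hε, fun c y ε _ => ?_⟩
    simpa [hε] using Fintype.sum_nonneg fun q => abs_nonneg (ε q - 1)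

theorem stmt_8
    (m n Q : ℕ) (hm : 0 < m) (hn : 0 < n) (hQ : 0 < Q)
    (A : Matrix (Fin m) (Fin n) ℝ) (b : Fin m → ℝ) (hb : b ≠ 0)
    (hrows : ∀ i, A i ≠ 0)
    (hPint : (interior {x : Fin n → ℝ | ∀ i, b i ≤ A.mulVec x i}).Nonempty)
    -- the normalization norm ‖·‖'
    (N : (Fin n → ℝ) → ℝ)
    (hN₁ : ∀ x y, N (x + y) ≤ N x + N y)
    (hN₂ : ∀ (a : ℝ) (x : Fin n → ℝ), N (a • x) = |a| * N x)
    (hN₃ : ∀ x, x ≠ 0 → 0 < N x)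
    -- the data set X̂
    (xhat : Fin Q → Fin n → ℝ) :
    ∃ K : ℝ, 0 < K ∧
      -- the optimal value of GIO_R(X̂) equals min{z⁺, z⁻, z⁰}
      sInf {v : ℝ≥0∞ | ∃ (c : Fin n → ℝ) (y : Fin m → ℝ) (ε : Fin Q → ℝ),
          FeasR A b N xhat c y ε ∧ v = ENNReal.ofReal (∑ q, |ε q - 1|)} =
        min (min (zP A b N xhat K) (zN A b N xhat K)) (zZ A b N xhat K) ∧
      -- any optimal solution of a sub-problem attaining this minimum, once
      -- normalized, is an optimal solution of GIO_R(X̂)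
      ∀ (cstar : Fin n → ℝ) (ystar : Fin m → ℝ) (εstar : Fin Q → ℝ),
        ((FeasP A b N xhat K cstar ystar εstar ∧
            (∀ c y ε, FeasP A b N xhat K c y ε →
              ∑ q, |εstar q - 1| ≤ ∑ q, |ε q - 1|) ∧
            ENNReal.ofReal (∑ q, |εstar q - 1|) =
              min (min (zP A b N xhat K) (zN A b N xhat K)) (zZ A b N xhat K)) ∨
         (FeasNg A b N xhat K cstar ystar εstar ∧
            (∀ c y ε, FeasNg A b N xhat K c y ε →
              ∑ q, |εstar q - 1| ≤ ∑ q, |ε q - 1|) ∧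
            ENNReal.ofReal (∑ q, |εstar q - 1|) =
              min (min (zP A b N xhat K) (zN A b N xhat K)) (zZ A b N xhat K)) ∨
         (FeasZ A b N xhat K cstar ystar ∧ (∀ q, εstar q = 1) ∧
            zZ A b N xhat K =
              min (min (zP A b N xhat K) (zN A b N xhat K)) (zZ A b N xhat K))) →
        (FeasR A b N xhat ((N cstar)⁻¹ • cstar) ((N cstar)⁻¹ • ystar) εstar ∧
          ∀ c y ε, FeasR A b N xhat c y ε →
            ∑ q, |εstar q - 1| ≤ ∑ q, |ε q - 1|) :=
  stmt_8_general m n Q A b hrows hPint N hN₁ hN₂ hN₃ xhat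
end

section
/- Assume x̂_q ∈ P for all q ∈ {1, …, Q} and let x̄ = (1/Q) Σ_{q=1}^Q x̂_q. Then every feasible solution (c, y, ε_1, …, ε_Q) of GIO_R(X̂) with bᵀ y ≠ 0 satisfies Σ_{q=1}^Q |ε_q − 1| = Q · (cᵀ x̄ − bᵀ y)/|bᵀ y|. Consequently, the optimal value of GIO_R(X̂) equals Q times the optimal value of the single-point problem GIO_R({x̄}), and a pair (c, y) is part of an optimal solution of GIO_R(X̂) if and only if it is part of an optimal solution of GIO_R({x̄}). -/
open Matrix Pointwise




/-- Optimality for `GIO_R(X̂)`. -/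
def OptR {m n Q : ℕ} (A : Matrix (Fin m) (Fin n) ℝ) (b : Fin m → ℝ)
    (N : (Fin n → ℝ) → ℝ) (xhat : Fin Q → Fin n → ℝ)
    (c : Fin n → ℝ) (y : Fin m → ℝ) (ε : Fin Q → ℝ) : Prop :=
  FeasR A b N xhat c y ε ∧
    ∀ c' y' ε', FeasR A b N xhat c' y' ε' → ∑ q, |ε q - 1| ≤ ∑ q, |ε' q - 1|

lemma abs_eps (ε t s : ℝ) (hs : s = ε * t) (hts : t ≤ s) (ht : t ≠ 0) :
    |ε - 1| = (s - t) / |t| := by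
  rw [eq_div_iff (abs_ne_zero.mpr ht)]
  rcases lt_or_gt_of_ne ht with h | h
  · have hε : ε ≤ 1 := by nlinarith
    rw [abs_of_neg h, abs_of_nonpos (by linarith : ε - 1 ≤ 0)]
    nlinarith
  · have hε : 1 ≤ ε := by nlinarith
    rw [abs_of_pos h, abs_of_nonneg (by linarith : (0:ℝ) ≤ ε - 1)]
    nlinarith

theorem stmt_9
    (m n Q : ℕ) (hm : 0 < m) (hn : 0 < n) (hQ : 0 < Q)
    (A : Matrix (Fin m) (Fin n) ℝ) (b : Fin m → ℝ) (hb : b ≠ 0)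
    (hrows : ∀ i, A i ≠ 0)
    (hPint : (interior {x : Fin n → ℝ | ∀ i, b i ≤ A.mulVec x i}).Nonempty)
    -- the normalization norm ‖·‖'
    (N : (Fin n → ℝ) → ℝ)
    (hN₁ : ∀ x y, N (x + y) ≤ N x + N y)
    (hN₂ : ∀ (a : ℝ) (x : Fin n → ℝ), N (a • x) = |a| * N x)
    (hN₃ : ∀ x, x ≠ 0 → 0 < N x)
    -- all observed decisions are feasible: x̂_q ∈ P
    (xhat : Fin Q → Fin n → ℝ)
    (hfeasX : ∀ q i, b i ≤ A.mulVec (xhat q) i)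
    -- the centroid x̄
    (xbar : Fin n → ℝ) (hxbar : xbar = (Q : ℝ)⁻¹ • ∑ q, xhat q) :
    -- 1. every feasible solution with bᵀ y ≠ 0 satisfies
    --    Σ|ε_q − 1| = Q (cᵀ x̄ − bᵀ y)/|bᵀ y|
    (∀ c y ε, FeasR A b N xhat c y ε → b ⬝ᵥ y ≠ 0 →
      ∑ q, |ε q - 1| = (Q : ℝ) * ((c ⬝ᵥ xbar - b ⬝ᵥ y) / |b ⬝ᵥ y|)) ∧
    -- 2. the optimal value of GIO_R(X̂) is Q times that of GIO_R({x̄})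
    sInf {v : ℝ | ∃ c y ε, FeasR A b N xhat c y ε ∧ v = ∑ q, |ε q - 1|} =
      (Q : ℝ) * sInf {v : ℝ | ∃ (c : Fin n → ℝ) (y : Fin m → ℝ) (ε : Fin 1 → ℝ),
        FeasR A b N (fun _ : Fin 1 => xbar) c y ε ∧ v = ∑ q, |ε q - 1|} ∧
    -- 3. (c, y) is part of an optimal solution of GIO_R(X̂) iff of GIO_R({x̄})
    ∀ c y, (∃ ε, OptR A b N xhat c y ε) ↔
      (∃ ε : Fin 1 → ℝ, OptR A b N (fun _ : Fin 1 => xbar) c y ε) := by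
  have hQR : (0:ℝ) < Q := Nat.cast_pos.mpr hQ
  have hQne : (Q:ℝ) ≠ 0 := ne_of_gt hQR
  -- centroid dot products
  have hdot : ∀ c : Fin n → ℝ, c ⬝ᵥ xbar = (Q:ℝ)⁻¹ * ∑ q, c ⬝ᵥ xhat q := by
    intro c
    have hx : ∀ j, xbar j = (Q:ℝ)⁻¹ * ∑ q, xhat q j := by
      intro j; simp [hxbar]
    simp only [dotProduct, hx, Finset.mul_sum]
    rw [Finset.sum_comm]
    congr 1; ext q; congr 1; ext j; ring
  -- the centroid is feasible
  have hxbarP : ∀ i, b i ≤ A.mulVec xbar i := by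
    intro i
    have h1 : A.mulVec xbar i = (Q:ℝ)⁻¹ * ∑ q, A.mulVec (xhat q) i := hdot (A i)
    have h2 : (Q:ℝ) * b i ≤ ∑ q, A.mulVec (xhat q) i := by
      calc (Q:ℝ) * b i = ∑ _q : Fin Q, b i := by
            simp [Finset.sum_const, Finset.card_univ, nsmul_eq_mul]
        _ ≤ ∑ q, A.mulVec (xhat q) i := Finset.sum_le_sum fun q _ => hfeasX q i
    have h3 := mul_le_mul_of_nonneg_left h2 (inv_nonneg.mpr hQR.le)
    rw [← mul_assoc, inv_mul_cancel₀ hQne, one_mul] at h3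
    rw [h1]; exact h3
  -- weak duality
  have wd : ∀ (c : Fin n → ℝ) (y : Fin m → ℝ), Aᵀ.mulVec y = c → (∀ i, 0 ≤ y i) →
      ∀ x, (∀ i, b i ≤ A.mulVec x i) → b ⬝ᵥ y ≤ c ⬝ᵥ x := by
    intro c y hA hy x hx
    have h1 : c ⬝ᵥ x = y ⬝ᵥ A.mulVec x := by
      rw [← hA, Matrix.mulVec_transpose, ← Matrix.dotProduct_mulVec]
    rw [h1, dotProduct_comm b y]
    simp only [dotProduct]
    exact Finset.sum_le_sum fun i _ => mul_le_mul_of_nonneg_left (hx i) (hy i)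
  -- part 1
  have part1 : ∀ c y ε, FeasR A b N xhat c y ε → b ⬝ᵥ y ≠ 0 →
      ∑ q, |ε q - 1| = (Q : ℝ) * ((c ⬝ᵥ xbar - b ⬝ᵥ y) / |b ⬝ᵥ y|) := by
    rintro c y ε ⟨hA, hy, hεq, -, -⟩ ht
    have key : ∀ q, |ε q - 1| = (c ⬝ᵥ xhat q - b ⬝ᵥ y) / |b ⬝ᵥ y| :=
      fun q => abs_eps _ _ _ (hεq q) (wd c y hA hy _ (hfeasX q)) ht
    rw [Finset.sum_congr rfl fun q _ => key q, hdot c, ← Finset.sum_div]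
    have hs : ∑ q, (c ⬝ᵥ xhat q - b ⬝ᵥ y) = (∑ q, c ⬝ᵥ xhat q) - (Q:ℝ) * (b ⬝ᵥ y) := by
      rw [Finset.sum_sub_distrib]
      simp [Finset.sum_const, Finset.card_univ, nsmul_eq_mul]
    rw [hs]
    have habs : |b ⬝ᵥ y| ≠ 0 := abs_ne_zero.mpr ht
    field_simp
  -- value functions
  have valX : ∀ c y ε, FeasR A b N xhat c y ε →
      ∑ q, |ε q - 1| = (Q:ℝ) *
        (if b ⬝ᵥ y = 0 then 0 else (c ⬝ᵥ xbar - b ⬝ᵥ y) / |b ⬝ᵥ y|) := by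
    intro c y ε hf
    by_cases ht : b ⬝ᵥ y = 0
    · simp [ht, hf.2.2.2.2 ht]
    · rw [if_neg ht]; exact part1 c y ε hf ht
  have val1 : ∀ c y (ε : Fin 1 → ℝ), FeasR A b N (fun _ : Fin 1 => xbar) c y ε →
      ∑ q, |ε q - 1| =
        (if b ⬝ᵥ y = 0 then 0 else (c ⬝ᵥ xbar - b ⬝ᵥ y) / |b ⬝ᵥ y|) := by
    rintro c y ε ⟨hA, hy, hεq, -, hz⟩
    by_cases ht : b ⬝ᵥ y = 0
    · simp [ht, hz ht]
    · rw [if_neg ht, Fin.sum_univ_one,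
        abs_eps _ _ _ (hεq 0) (wd c y hA hy xbar hxbarP) ht]
  -- transfers
  have toSingle : ∀ c y ε, FeasR A b N xhat c y ε →
      ∃ ε', FeasR A b N (fun _ : Fin 1 => xbar) c y ε' := by
    rintro c y ε ⟨hA, hy, hεq, hNc, hz⟩
    refine ⟨fun _ => if b ⬝ᵥ y = 0 then 1 else c ⬝ᵥ xbar / (b ⬝ᵥ y),
      hA, hy, ?_, hNc, fun ht q => by simp [ht]⟩
    intro q
    by_cases ht : b ⬝ᵥ y = 0
    · have h0 : ∀ q, c ⬝ᵥ xhat q = 0 := fun q => by rw [hεq q, ht, mul_zero]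
      simp [ht, hdot c, h0]
    · simp [ht, div_mul_cancel₀ _ ht]
  have toX : ∀ c y (ε' : Fin 1 → ℝ), FeasR A b N (fun _ : Fin 1 => xbar) c y ε' →
      ∃ ε, FeasR A b N xhat c y ε := by
    rintro c y ε' ⟨hA, hy, hεq, hNc, hz⟩
    refine ⟨fun q => if b ⬝ᵥ y = 0 then 1 else c ⬝ᵥ xhat q / (b ⬝ᵥ y),
      hA, hy, ?_, hNc, fun ht q => by simp [ht]⟩
    intro q
    by_cases ht : b ⬝ᵥ y = 0
    · have hx0 : c ⬝ᵥ xbar = 0 := by rw [hεq 0, ht, mul_zero]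
      have hsum : ∑ q, c ⬝ᵥ xhat q = 0 := by
        have := hdot c
        rw [hx0] at this
        field_simp at this
        linarith [this]
      have hnn : ∀ q ∈ Finset.univ, (0:ℝ) ≤ c ⬝ᵥ xhat q := by
        intro q _
        have := wd c y hA hy _ (hfeasX q)
        rw [ht] at this; exact this
      have h0 := (Finset.sum_eq_zero_iff_of_nonneg hnn).mp hsum q (Finset.mem_univ q)
      simp [ht, h0]
    · simp [ht, div_mul_cancel₀ _ ht]
  refine ⟨part1, ?_, ?_⟩
  · -- part 2
    have hset : {v : ℝ | ∃ c y ε, FeasR A b N xhat c y ε ∧ v = ∑ q, |ε q - 1|} =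
        (Q:ℝ) • {v : ℝ | ∃ (c : Fin n → ℝ) (y : Fin m → ℝ) (ε : Fin 1 → ℝ),
          FeasR A b N (fun _ : Fin 1 => xbar) c y ε ∧ v = ∑ q, |ε q - 1|} := by
      ext v
      simp only [Set.mem_smul_set, Set.mem_setOf_eq]
      constructor
      · rintro ⟨c, y, ε, hf, rfl⟩
        obtain ⟨ε', hf'⟩ := toSingle c y ε hf
        exact ⟨∑ q, |ε' q - 1|, ⟨c, y, ε', hf', rfl⟩, by
          rw [smul_eq_mul, val1 c y ε' hf', ← valX c y ε hf]⟩
      · rintro ⟨w, ⟨c, y, ε', hf', rfl⟩, rfl⟩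
        obtain ⟨ε, hf⟩ := toX c y ε' hf'
        exact ⟨c, y, ε, hf, by rw [smul_eq_mul, val1 c y ε' hf', valX c y ε hf]⟩
    rw [hset, Real.sInf_smul_of_nonneg hQR.le, smul_eq_mul]
  · -- part 3
    intro c y
    constructor
    · rintro ⟨ε, hf, hopt⟩
      obtain ⟨ε', hf'⟩ := toSingle c y ε hf
      refine ⟨ε', hf', ?_⟩
      intro c'' y'' ε'' hf''
      obtain ⟨ε₂, hf₂⟩ := toX c'' y'' ε'' hf''
      have h1 := hopt c'' y'' ε₂ hf₂
      rw [valX c y ε hf, valX c'' y'' ε₂ hf₂] at h1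
      rw [val1 c y ε' hf', val1 c'' y'' ε'' hf'']
      exact le_of_mul_le_mul_left h1 hQR
    · rintro ⟨ε', hf', hopt⟩
      obtain ⟨ε, hf⟩ := toX c y ε' hf'
      refine ⟨ε, hf, ?_⟩
      intro c'' y'' ε₂ hf₂
      obtain ⟨ε'', hf''⟩ := toSingle c'' y'' ε₂ hf₂
      have h1 := hopt c'' y'' ε'' hf''
      rw [val1 c y ε' hf', val1 c'' y'' ε'' hf''] at h1
      rw [valX c y ε hf, valX c'' y'' ε₂ hf₂]
      exact mul_le_mul_of_nonneg_left h1 hQR.le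
end

section
/- Suppose x̂ ∉ P and there exists i ∈ I with a_iᵀ x̂ > b_i. Then for such an i there exists i* ∈ I with a_{i*}ᵀ x̂ < b_{i*} such that, defining ỹ ∈ ℝ^m by ỹ_i = 1/(a_iᵀ x̂ − b_i), ỹ_{i*} = 1/(b_{i*} − a_{i*}ᵀ x̂), and ỹ_k = 0 for k ∉ {i, i*}, and setting c̃ = Aᵀ ỹ, one has c̃ ≠ 0 and the normalized triple (c̃/‖c̃‖', ỹ/‖c̃‖') together with ε = 1 is an optimal solution of GIO_R({x̂}); in particular, the optimal value of GIO_R({x̂}) is 0. -/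
/-! For `c = Aᵀ y` one has `cᵀ x - bᵀ y = yᵀ (A x - b)`. The weights of `ỹ`
are the reciprocals of the residuals of `x̂` at `i` and `i*`, which have opposite signs, so
`ỹᵀ (A x̂ - b) = 1 - 1 = 0`: the pair has zero duality gap at `x̂`, and `ε = 1` is feasible after
normalization. At an interior point `x₀` of `P` the residual at row `i` is positive, so
`c̃ᵀ x₀ > bᵀ ỹ = c̃ᵀ x̂`, which forces `c̃ ≠ 0`. -/

open Matrix

/-- Feasibility for the single-point relative duality gap inverse problem
`GIO_R({x̂})`, including the convention that `bᵀ y = 0` forces `ε = 1`. -/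
def FeasR1 {m n : ℕ} (A : Matrix (Fin m) (Fin n) ℝ) (b : Fin m → ℝ)
    (N : (Fin n → ℝ) → ℝ) (xhat : Fin n → ℝ)
    (c : Fin n → ℝ) (y : Fin m → ℝ) (ε : ℝ) : Prop :=
  Aᵀ.mulVec y = c ∧ (∀ i, 0 ≤ y i) ∧ c ⬝ᵥ xhat = ε * (b ⬝ᵥ y) ∧ N c = 1 ∧
    (b ⬝ᵥ y = 0 → ε = 1)

theorem lt_dotProduct_of_mem_interior_s10 {ι : Type*} [Fintype ι] [DecidableEq ι] {v : ι → ℝ}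
    (hv : v ≠ 0) {r : ℝ} {x : ι → ℝ} (hx : x ∈ interior {x | r ≤ v ⬝ᵥ x}) : r < v ⬝ᵥ x := by
  let f : StrongDual ℝ (ι → ℝ) := LinearMap.toContinuousLinearMap (dotProductEquiv ℝ ι v)
  have hf : f ≠ 0 := fun h => hv <| (dotProductEquiv ℝ ι).map_eq_zero_iff.mp <|
    LinearMap.toContinuousLinearMap.map_eq_zero_iff.mp h
  have := (f.isOpenMap_of_ne_zero hf).interior_preimage_subset_preimage_interior
    (s := Set.Ici r) hx
  rwa [interior_Ici] at this

theorem lt_mulVec_of_mem_interior {m n : Type*} [Fintype n] [DecidableEq n] {A : Matrix m n ℝ}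
    {b : m → ℝ} {x : n → ℝ} (hx : x ∈ interior {x | ∀ k, b k ≤ (A *ᵥ x) k}) {i : m}
    (hi : A i ≠ 0) : b i < (A *ᵥ x) i := by
  have hsub : {x | ∀ k, b k ≤ (A *ᵥ x) k} ⊆ {x | b i ≤ A i ⬝ᵥ x} := fun _ hx => hx i
  exact lt_dotProduct_of_mem_interior_s10 hi (interior_mono hsub hx)

theorem transpose_mulVec_dotProduct_sub {R m n : Type*} [CommRing R] [Fintype m] [Fintype n]
    (A : Matrix m n R) (b y : m → R) (x : n → R) :
    (Aᵀ *ᵥ y) ⬝ᵥ x - b ⬝ᵥ y = y ⬝ᵥ (A *ᵥ x - b) := by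
  rw [mulVec_transpose, ← dotProduct_mulVec, dotProduct_sub, dotProduct_comm b]

theorem ite_ite_dotProduct {R ι : Type*} [NonUnitalNonAssocSemiring R] [Fintype ι]
    [DecidableEq ι] {i j : ι} (hij : i ≠ j) (a c : R) (w : ι → R) :
    (fun k => if k = i then a else if k = j then c else 0) ⬝ᵥ w = a * w i + c * w j := by
  have : (fun k => if k = i then a else if k = j then c else 0) =
      Pi.single i a + Pi.single j c := by
    ext k
    by_cases hki : k = i
    · subst hki; simp [hij]
    · by_cases hkj : k = j
      · subst hkj; simp [hki]
      · simp [hki, hkj]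
  rw [this, add_dotProduct, single_dotProduct, single_dotProduct]

theorem feasR1_inv_smul {m n : ℕ} {A : Matrix (Fin m) (Fin n) ℝ} {b : Fin m → ℝ}
    {N : (Fin n → ℝ) → ℝ} (hN : ∀ (a : ℝ) (x : Fin n → ℝ), N (a • x) = |a| * N x)
    {xhat c : Fin n → ℝ} {y : Fin m → ℝ} (hc : Aᵀ *ᵥ y = c) (hy : ∀ k, 0 ≤ y k)
    (hgap : c ⬝ᵥ xhat = b ⬝ᵥ y) (hNc : 0 < N c) :
    FeasR1 A b N xhat ((N c)⁻¹ • c) ((N c)⁻¹ • y) 1 := by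
  have hs : 0 < (N c)⁻¹ := inv_pos.mpr hNc
  refine ⟨by rw [mulVec_smul, hc], fun k => mul_nonneg hs.le (hy k), ?_, ?_, fun _ => rfl⟩
  · rw [smul_dotProduct, dotProduct_smul, hgap, one_mul]
  · rw [hN, abs_of_pos hs, inv_mul_cancel₀ hNc.ne']

theorem sInf_abs_sub_one_eq_zero_of_feasR1 {m n : ℕ} {A : Matrix (Fin m) (Fin n) ℝ}
    {b : Fin m → ℝ} {N : (Fin n → ℝ) → ℝ} {xhat c : Fin n → ℝ} {y : Fin m → ℝ}
    (h : FeasR1 A b N xhat c y 1) :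
    sInf {v : ℝ | ∃ (c : Fin n → ℝ) (y : Fin m → ℝ) (ε : ℝ),
      FeasR1 A b N xhat c y ε ∧ v = |ε - 1|} = 0 := by
  refine IsLeast.csInf_eq ⟨⟨c, y, 1, h, by simp⟩, ?_⟩
  rintro _ ⟨-, -, ε, -, rfl⟩
  positivity

theorem ne_of_lt_dotProduct_of_dotProduct_lt {m n : Type*} [Fintype n] {A : Matrix m n ℝ}
    {b : m → ℝ} {x : n → ℝ} {i j : m} (hi : b i < A i ⬝ᵥ x) (hj : A j ⬝ᵥ x < b j) : i ≠ j := by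
  rintro rfl
  exact hj.not_gt hi

section ResidualWeights

variable {m n : Type*} [Fintype n] [DecidableEq m] (A : Matrix m n ℝ) (b : m → ℝ)

/-- The vector `ỹ` of the theorem, with `x = x̂` and `j = i*`. -/
noncomputable def residualWeights (x : n → ℝ) (i j : m) : m → ℝ :=
  fun k => if k = i then 1 / (A i ⬝ᵥ x - b i) else if k = j then 1 / (b j - A j ⬝ᵥ x) else 0

variable {A b} {x : n → ℝ} {i j : m}

theorem residualWeights_nonneg (hi : b i < A i ⬝ᵥ x) (hj : A j ⬝ᵥ x < b j) (k : m) :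
    0 ≤ residualWeights A b x i j k := by
  have : 0 < A i ⬝ᵥ x - b i := sub_pos.mpr hi
  have : 0 < b j - A j ⬝ᵥ x := sub_pos.mpr hj
  unfold residualWeights
  split_ifs <;> positivity

theorem transpose_mulVec_residualWeights_dotProduct_sub [Fintype m] (hij : i ≠ j) (x' : n → ℝ) :
    (Aᵀ *ᵥ residualWeights A b x i j) ⬝ᵥ x' - b ⬝ᵥ residualWeights A b x i j =
      1 / (A i ⬝ᵥ x - b i) * (A *ᵥ x' - b) i + 1 / (b j - A j ⬝ᵥ x) * (A *ᵥ x' - b) j := by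
  rw [transpose_mulVec_dotProduct_sub]
  unfold residualWeights
  rw [ite_ite_dotProduct hij]

theorem transpose_mulVec_residualWeights_dotProduct_self [Fintype m] (hi : b i < A i ⬝ᵥ x)
    (hj : A j ⬝ᵥ x < b j) :
    (Aᵀ *ᵥ residualWeights A b x i j) ⬝ᵥ x = b ⬝ᵥ residualWeights A b x i j := by
  have h := transpose_mulVec_residualWeights_dotProduct_sub (A := A) (b := b) (x := x)
    (ne_of_lt_dotProduct_of_dotProduct_lt hi hj) x
  rw [show (A *ᵥ x - b) i = A i ⬝ᵥ x - b i from rfl,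
    show (A *ᵥ x - b) j = -(b j - A j ⬝ᵥ x) from (neg_sub _ _).symm,
    one_div_mul_cancel (sub_pos.mpr hi).ne', mul_neg, one_div_mul_cancel (sub_pos.mpr hj).ne',
    add_neg_cancel, sub_eq_zero] at h
  exact h

theorem dotProduct_residualWeights_lt [Fintype m] (hi : b i < A i ⬝ᵥ x) (hj : A j ⬝ᵥ x < b j)
    {x₀ : n → ℝ} (hx₀i : b i < (A *ᵥ x₀) i) (hx₀j : b j ≤ (A *ᵥ x₀) j) :
    b ⬝ᵥ residualWeights A b x i j < (Aᵀ *ᵥ residualWeights A b x i j) ⬝ᵥ x₀ := by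
  have h := transpose_mulVec_residualWeights_dotProduct_sub (A := A) (b := b) (x := x)
    (ne_of_lt_dotProduct_of_dotProduct_lt hi hj) x₀
  have : 0 < A i ⬝ᵥ x - b i := sub_pos.mpr hi
  have : 0 < b j - A j ⬝ᵥ x := sub_pos.mpr hj
  have : 0 < (A *ᵥ x₀ - b) i := sub_pos.mpr hx₀i
  have : 0 ≤ (A *ᵥ x₀ - b) j := sub_nonneg.mpr hx₀j
  have : 0 < 1 / (A i ⬝ᵥ x - b i) * (A *ᵥ x₀ - b) i + 1 / (b j - A j ⬝ᵥ x) * (A *ᵥ x₀ - b) j := by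
    positivity
  linarith

end ResidualWeights

theorem stmt_10_general
    (m n : ℕ)
    (A : Matrix (Fin m) (Fin n) ℝ) (b : Fin m → ℝ)
    (hrows : ∀ i, A i ≠ 0)
    (hPint : (interior {x : Fin n → ℝ | ∀ i, b i ≤ A.mulVec x i}).Nonempty)
    -- the normalization norm ‖·‖'
    (N : (Fin n → ℝ) → ℝ)
    (hN₂ : ∀ (a : ℝ) (x : Fin n → ℝ), N (a • x) = |a| * N x)
    (hN₃ : ∀ x, x ≠ 0 → 0 < N x)
    -- x̂ ∉ P and some constraint strictly satisfied
    (xhat : Fin n → ℝ) (hxnotP : ¬ ∀ i, b i ≤ A.mulVec xhat i)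
    (i : Fin m) (hi : b i < A i ⬝ᵥ xhat) :
    ∃ istar : Fin m, A istar ⬝ᵥ xhat < b istar ∧
      ∀ ytil : Fin m → ℝ,
        ytil = (fun k => if k = i then 1 / (A i ⬝ᵥ xhat - b i)
                else if k = istar then 1 / (b istar - A istar ⬝ᵥ xhat) else 0) →
        ∀ ctil : Fin n → ℝ, ctil = Aᵀ.mulVec ytil →
          ctil ≠ 0 ∧
          -- (c̃/‖c̃‖', ỹ/‖c̃‖') together with ε = 1 is optimal for GIO_R({x̂})
          FeasR1 A b N xhat ((N ctil)⁻¹ • ctil) ((N ctil)⁻¹ • ytil) 1 ∧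
          (∀ c y ε, FeasR1 A b N xhat c y ε → |(1 : ℝ) - 1| ≤ |ε - 1|) ∧
          -- in particular the optimal value of GIO_R({x̂}) is 0
          sInf {v : ℝ | ∃ (c : Fin n → ℝ) (y : Fin m → ℝ) (ε : ℝ),
            FeasR1 A b N xhat c y ε ∧ v = |ε - 1|} = 0 := by
  push Not at hxnotP
  obtain ⟨istar, histar⟩ := hxnotP
  refine ⟨istar, histar, fun ytil hytil ctil hctil => ?_⟩
  obtain ⟨x₀, hx₀⟩ := hPint
  change ytil = residualWeights A b xhat i istar at hytil
  subst hytil hctil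
  have hzero := transpose_mulVec_residualWeights_dotProduct_self hi histar
  have hpos := dotProduct_residualWeights_lt hi histar
    (lt_mulVec_of_mem_interior hx₀ (hrows i)) (interior_subset hx₀ istar)
  have hc : Aᵀ *ᵥ residualWeights A b xhat i istar ≠ 0 := by
    intro h
    rw [h, zero_dotProduct] at hzero hpos
    linarith
  have hfeas := feasR1_inv_smul hN₂ rfl (residualWeights_nonneg hi histar) hzero (hN₃ _ hc)
  exact ⟨hc, hfeas, fun _ _ _ _ => by simp, sInf_abs_sub_one_eq_zero_of_feasR1 hfeas⟩

theorem stmt_10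
    (m n : ℕ) (hm : 0 < m) (hn : 0 < n)
    (A : Matrix (Fin m) (Fin n) ℝ) (b : Fin m → ℝ) (hb : b ≠ 0)
    (hrows : ∀ i, A i ≠ 0)
    (hPint : (interior {x : Fin n → ℝ | ∀ i, b i ≤ A.mulVec x i}).Nonempty)
    -- the normalization norm ‖·‖'
    (N : (Fin n → ℝ) → ℝ)
    (hN₁ : ∀ x y, N (x + y) ≤ N x + N y)
    (hN₂ : ∀ (a : ℝ) (x : Fin n → ℝ), N (a • x) = |a| * N x)
    (hN₃ : ∀ x, x ≠ 0 → 0 < N x)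
    -- x̂ ∉ P and some constraint strictly satisfied
    (xhat : Fin n → ℝ) (hxnotP : ¬ ∀ i, b i ≤ A.mulVec xhat i)
    (i : Fin m) (hi : b i < A i ⬝ᵥ xhat) :
    ∃ istar : Fin m, A istar ⬝ᵥ xhat < b istar ∧
      ∀ ytil : Fin m → ℝ,
        ytil = (fun k => if k = i then 1 / (A i ⬝ᵥ xhat - b i)
                else if k = istar then 1 / (b istar - A istar ⬝ᵥ xhat) else 0) →
        ∀ ctil : Fin n → ℝ, ctil = Aᵀ.mulVec ytil →
          ctil ≠ 0 ∧
          -- (c̃/‖c̃‖', ỹ/‖c̃‖') together with ε = 1 is optimal for GIO_R({x̂})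
          FeasR1 A b N xhat ((N ctil)⁻¹ • ctil) ((N ctil)⁻¹ • ytil) 1 ∧
          (∀ c y ε, FeasR1 A b N xhat c y ε → |(1 : ℝ) - 1| ≤ |ε - 1|) ∧
          -- in particular the optimal value of GIO_R({x̂}) is 0
          sInf {v : ℝ | ∃ (c : Fin n → ℝ) (y : Fin m → ℝ) (ε : ℝ),
            FeasR1 A b N xhat c y ε ∧ v = |ε - 1|} = 0 :=
  stmt_10_general m n A b hrows hPint N hN₂ hN₃ xhat hxnotP i hi
end

section
/- Suppose A x̂_q ≤ b (componentwise) and x̂_q ∉ P for all q ∈ {1, …, Q}, and let x̄ = (1/Q) Σ_{q=1}^Q x̂_q. Then every feasible solution (c, y, ε_1, …, ε_Q) of GIO_R(X̂) with bᵀ y ≠ 0 satisfies Σ_{q=1}^Q |ε_q − 1| = Q · |cᵀ x̄ − bᵀ y| / |bᵀ y|. Consequently, the optimal value of GIO_R(X̂) equals Q times the optimal value of the single-point problem GIO_R({x̄}) (which coincides with the relative duality gap inverse problem for the alternate forward problem min{−cᵀ x : A x ≤ b} with observed decision x̄), and a pair (c, y) is part of an optimal solution of GIO_R(X̂) if and only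 if it is part of an optimal solution of GIO_R({x̄}). -/
open Matrix

/-!
Every observation satisfies `A x̂_q ≤ b`, so weak duality for the alternate forward problem
`min {-cᵀ x : A x ≤ b}` gives `cᵀ x̂_q ≤ bᵀ y` for every dual feasible `(c, y)`. Hence, when
`bᵀ y ≠ 0`, each term `|ε_q - 1| = |cᵀ x̂_q - bᵀ y| / |bᵀ y|` equals `(bᵀ y - cᵀ x̂_q) / |bᵀ y|`
without any sign cancellation, and the sum of these affine expressions is `Q` times its value at
the centroid `x̄`. When `bᵀ y = 0`, the numbers `cᵀ x̂_q` are all nonpositive, so they vanish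
exactly when their mean `cᵀ x̄` does. Thus for each `(c, y)` feasibility for `X̂` and for `{x̄}`
coincide and the objective values differ by the factor `Q`, which transfers the optimal value and
the optimal pairs `(c, y)`.
-/

theorem dotProduct_le_of_mulVec_le {R ι κ : Type*} [CommSemiring R] [PartialOrder R]
    [IsOrderedRing R] [Fintype ι] [Fintype κ] {A : Matrix ι κ R} {b y : ι → R} {x : κ → R}
    (hy : 0 ≤ y) (hx : A *ᵥ x ≤ b) : (Aᵀ *ᵥ y) ⬝ᵥ x ≤ b ⬝ᵥ y := by
  rw [mulVec_transpose, ← dotProduct_mulVec, dotProduct_comm b]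
  exact dotProduct_le_dotProduct_of_nonneg_left hx hy

theorem dotProduct_inv_smul_sum {K ι : Type*} [Field K] [Fintype ι] {Q : ℕ} (c : ι → K)
    (x : Fin Q → ι → K) : c ⬝ᵥ ((Q : K)⁻¹ • ∑ q, x q) = (Q : K)⁻¹ * ∑ q, c ⬝ᵥ x q := by
  rw [dotProduct_smul, dotProduct_sum, smul_eq_mul]

theorem abs_div_sub_one_of_le {K : Type*} [Field K] [LinearOrder K] [IsStrictOrderedRing K]
    {s β : K} (hs : s ≤ β) (hβ : β ≠ 0) :
    |s / β - 1| = (β - s) / |β| := by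
  rw [div_sub_one hβ, abs_div, abs_of_nonpos (sub_nonpos.mpr hs), neg_sub]

section Feasibility

variable {m n Q : ℕ} {A : Matrix (Fin m) (Fin n) ℝ} {b : Fin m → ℝ} {N : (Fin n → ℝ) → ℝ}
  {xhat : Fin Q → Fin n → ℝ} {c : Fin n → ℝ} {y : Fin m → ℝ} {ε : Fin Q → ℝ}

theorem FeasR.eps_eq (h : FeasR A b N xhat c y ε) (h0 : b ⬝ᵥ y ≠ 0) (q : Fin Q) :
    ε q = c ⬝ᵥ xhat q / b ⬝ᵥ y :=
  (eq_div_iff h0).mpr (h.2.2.1 q).symm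

theorem FeasR.dotProduct_eq_zero (h : FeasR A b N xhat c y ε) (h0 : b ⬝ᵥ y = 0) (q : Fin Q) :
    c ⬝ᵥ xhat q = 0 := by
  rw [h.2.2.1 q, h0, mul_zero]

theorem FeasR.dotProduct_le (h : FeasR A b N xhat c y ε) {x : Fin n → ℝ} (hx : A *ᵥ x ≤ b) :
    c ⬝ᵥ x ≤ b ⬝ᵥ y :=
  h.1 ▸ dotProduct_le_of_mulVec_le h.2.1 hx

theorem feasR_div_of_ne_zero {xs : Fin Q → Fin n → ℝ} (hc : Aᵀ *ᵥ y = c) (hy : ∀ i, 0 ≤ y i)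
    (hN : N c = 1) (h0 : b ⬝ᵥ y ≠ 0) :
    FeasR A b N xs c y (fun q => c ⬝ᵥ xs q / b ⬝ᵥ y) :=
  ⟨hc, hy, fun _ => (div_mul_cancel₀ _ h0).symm, hN, fun h => absurd h h0⟩

theorem feasR_one_of_eq_zero {xs : Fin Q → Fin n → ℝ} (hc : Aᵀ *ᵥ y = c) (hy : ∀ i, 0 ≤ y i)
    (hN : N c = 1) (h0 : b ⬝ᵥ y = 0) (hxs : ∀ q, c ⬝ᵥ xs q = 0) :
    FeasR A b N xs c y 1 :=
  ⟨hc, hy, fun q => by rw [hxs q, h0, mul_zero], hN, fun _ _ => rfl⟩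

end Feasibility

section Transfer

open scoped Pointwise

variable {m n Q Q' : ℕ} {A : Matrix (Fin m) (Fin n) ℝ} {b : Fin m → ℝ} {N : (Fin n → ℝ) → ℝ}
  {xhat : Fin Q → Fin n → ℝ} {xhat' : Fin Q' → Fin n → ℝ} {k : ℝ}

theorem setOf_feasR_value_eq_smul
    (fwd : ∀ c y ε, FeasR A b N xhat c y ε →
      ∃ ε', FeasR A b N xhat' c y ε' ∧ ∑ q, |ε q - 1| = k * ∑ q, |ε' q - 1|)
    (bwd : ∀ c y ε', FeasR A b N xhat' c y ε' →
      ∃ ε, FeasR A b N xhat c y ε ∧ ∑ q, |ε q - 1| = k * ∑ q, |ε' q - 1|) :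
    {v : ℝ | ∃ c y ε, FeasR A b N xhat c y ε ∧ v = ∑ q, |ε q - 1|} =
      k • {v : ℝ | ∃ c y ε', FeasR A b N xhat' c y ε' ∧ v = ∑ q, |ε' q - 1|} := by
  ext v
  simp only [Set.mem_smul_set, Set.mem_ofPred_eq, smul_eq_mul]
  constructor
  · rintro ⟨c, y, ε, hf, rfl⟩
    obtain ⟨ε', hf', hval⟩ := fwd c y ε hf
    exact ⟨_, ⟨c, y, ε', hf', rfl⟩, hval.symm⟩
  · rintro ⟨_, ⟨c, y, ε', hf', rfl⟩, rfl⟩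
    obtain ⟨ε, hf, hval⟩ := bwd c y ε' hf'
    exact ⟨c, y, ε, hf, hval.symm⟩

theorem exists_optR_iff_of_scaled (hk : 0 < k)
    (fwd : ∀ c y ε, FeasR A b N xhat c y ε →
      ∃ ε', FeasR A b N xhat' c y ε' ∧ ∑ q, |ε q - 1| = k * ∑ q, |ε' q - 1|)
    (bwd : ∀ c y ε', FeasR A b N xhat' c y ε' →
      ∃ ε, FeasR A b N xhat c y ε ∧ ∑ q, |ε q - 1| = k * ∑ q, |ε' q - 1|)
    (c : Fin n → ℝ) (y : Fin m → ℝ) :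
    (∃ ε, OptR A b N xhat c y ε) ↔ ∃ ε', OptR A b N xhat' c y ε' := by
  constructor
  · rintro ⟨ε, hf, hopt⟩
    obtain ⟨ε', hf', hval⟩ := fwd c y ε hf
    refine ⟨ε', hf', fun c₁ y₁ ε₁' hf₁' => ?_⟩
    obtain ⟨ε₁, hf₁, hval₁⟩ := bwd c₁ y₁ ε₁' hf₁'
    have := hopt c₁ y₁ ε₁ hf₁
    rw [hval, hval₁] at this
    exact le_of_mul_le_mul_left this hk
  · rintro ⟨ε', hf', hopt⟩
    obtain ⟨ε, hf, hval⟩ := bwd c y ε' hf'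
    refine ⟨ε, hf, fun c₁ y₁ ε₁ hf₁ => ?_⟩
    obtain ⟨ε₁', hf₁', hval₁⟩ := fwd c₁ y₁ ε₁ hf₁
    rw [hval, hval₁]
    exact mul_le_mul_of_nonneg_left (hopt c₁ y₁ ε₁' hf₁') hk.le

end Transfer

section Centroid

variable {m n Q : ℕ} {A : Matrix (Fin m) (Fin n) ℝ} {b : Fin m → ℝ} {N : (Fin n → ℝ) → ℝ}
  {xhat : Fin Q → Fin n → ℝ} {c : Fin n → ℝ} {y : Fin m → ℝ}

theorem forall_dotProduct_eq_zero_iff_centroid (hQ : 0 < Q) (hs : ∀ q, c ⬝ᵥ xhat q ≤ 0) :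
    (∀ q, c ⬝ᵥ xhat q = 0) ↔ c ⬝ᵥ ((Q : ℝ)⁻¹ • ∑ q, xhat q) = 0 := by
  rw [dotProduct_inv_smul_sum, mul_eq_zero, inv_eq_zero, Nat.cast_eq_zero,
    or_iff_right hQ.ne', Finset.sum_eq_zero_iff_of_nonpos fun q _ => hs q]
  simp only [Finset.mem_univ, true_implies]

theorem FeasR.sum_abs_sub_one_eq {ε : Fin Q → ℝ} (h : FeasR A b N xhat c y ε)
    (hxle : ∀ q, A *ᵥ xhat q ≤ b) (hQ : 0 < Q) (h0 : b ⬝ᵥ y ≠ 0) :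
    ∑ q, |ε q - 1| = Q * (|c ⬝ᵥ ((Q : ℝ)⁻¹ • ∑ q, xhat q) - b ⬝ᵥ y| / |b ⬝ᵥ y|) := by
  have hle q : c ⬝ᵥ xhat q ≤ b ⬝ᵥ y := h.dotProduct_le (hxle q)
  have hsum : ∑ q, c ⬝ᵥ xhat q ≤ Q * b ⬝ᵥ y := by
    simpa using Finset.sum_le_card_nsmul Finset.univ _ _ fun q _ => hle q
  have hQ' : (0 : ℝ) < Q := Nat.cast_pos.mpr hQ
  calc ∑ q, |ε q - 1| = ∑ q, (b ⬝ᵥ y - c ⬝ᵥ xhat q) / |b ⬝ᵥ y| :=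
        Finset.sum_congr rfl fun q _ => h.eps_eq h0 q ▸ abs_div_sub_one_of_le (hle q) h0
    _ = (Q * b ⬝ᵥ y - ∑ q, c ⬝ᵥ xhat q) / |b ⬝ᵥ y| := by
        rw [← Finset.sum_div, Finset.sum_sub_distrib]
        simp
    _ = Q * (|c ⬝ᵥ ((Q : ℝ)⁻¹ • ∑ q, xhat q) - b ⬝ᵥ y| / |b ⬝ᵥ y|) := by
        have hmean : (Q : ℝ)⁻¹ * ∑ q, c ⬝ᵥ xhat q ≤ b ⬝ᵥ y := (inv_mul_le_iff₀ hQ').mpr hsum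
        rw [dotProduct_inv_smul_sum, abs_of_nonpos (sub_nonpos.mpr hmean), mul_div_assoc']
        field_simp
        ring

theorem FeasR.exists_feasR_centroid {ε : Fin Q → ℝ} (h : FeasR A b N xhat c y ε)
    (hxle : ∀ q, A *ᵥ xhat q ≤ b) (hQ : 0 < Q) :
    ∃ ε' : Fin 1 → ℝ, FeasR A b N (fun _ => (Q : ℝ)⁻¹ • ∑ q, xhat q) c y ε' ∧
      ∑ q, |ε q - 1| = Q * ∑ q, |ε' q - 1| := by
  have ⟨hc, hy, _, hN, hconv⟩ := h
  by_cases h0 : b ⬝ᵥ y = 0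
  · have hbar := (forall_dotProduct_eq_zero_iff_centroid hQ fun q =>
      h0 ▸ h.dotProduct_le (hxle q)).mp (h.dotProduct_eq_zero h0)
    exact ⟨1, feasR_one_of_eq_zero hc hy hN h0 fun _ => hbar, by simp [hconv h0]⟩
  · refine ⟨_, feasR_div_of_ne_zero hc hy hN h0, ?_⟩
    rw [h.sum_abs_sub_one_eq hxle hQ h0, Fin.sum_univ_one, div_sub_one h0, abs_div]

theorem FeasR.exists_feasR_of_centroid {ε' : Fin 1 → ℝ}
    (h : FeasR A b N (fun _ => (Q : ℝ)⁻¹ • ∑ q, xhat q) c y ε')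
    (hxle : ∀ q, A *ᵥ xhat q ≤ b) (hQ : 0 < Q) :
    ∃ ε : Fin Q → ℝ, FeasR A b N xhat c y ε ∧ ∑ q, |ε q - 1| = Q * ∑ q, |ε' q - 1| := by
  have ⟨hc, hy, _, hN, hconv⟩ := h
  by_cases h0 : b ⬝ᵥ y = 0
  · have hxs := (forall_dotProduct_eq_zero_iff_centroid hQ fun q =>
      h0 ▸ h.dotProduct_le (hxle q)).mpr (h.dotProduct_eq_zero h0 0)
    exact ⟨1, feasR_one_of_eq_zero hc hy hN h0 hxs, by simp [hconv h0]⟩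
  · have hF := feasR_div_of_ne_zero (xs := xhat) hc hy hN h0
    refine ⟨_, hF, ?_⟩
    rw [hF.sum_abs_sub_one_eq hxle hQ h0, Fin.sum_univ_one, h.eps_eq h0 0, div_sub_one h0,
      abs_div]

end Centroid

theorem stmt_11_general
    (m n Q : ℕ) (hQ : 0 < Q)
    (A : Matrix (Fin m) (Fin n) ℝ) (b : Fin m → ℝ)
    -- the normalization norm ‖·‖'
    (N : (Fin n → ℝ) → ℝ)
    -- all observed decisions satisfy A x̂_q ≤ b and x̂_q ∉ P
    (xhat : Fin Q → Fin n → ℝ)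
    (hxle : ∀ q i, A.mulVec (xhat q) i ≤ b i)
    -- the centroid x̄
    (xbar : Fin n → ℝ) (hxbar : xbar = (Q : ℝ)⁻¹ • ∑ q, xhat q) :
    -- 1. every feasible solution with bᵀ y ≠ 0 satisfies
    --    Σ|ε_q − 1| = Q |cᵀ x̄ − bᵀ y| / |bᵀ y|
    (∀ c y ε, FeasR A b N xhat c y ε → b ⬝ᵥ y ≠ 0 →
      ∑ q, |ε q - 1| = (Q : ℝ) * (|c ⬝ᵥ xbar - b ⬝ᵥ y| / |b ⬝ᵥ y|)) ∧
    -- 2. the optimal value of GIO_R(X̂) is Q times that of GIO_R({x̄})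
    sInf {v : ℝ | ∃ c y ε, FeasR A b N xhat c y ε ∧ v = ∑ q, |ε q - 1|} =
      (Q : ℝ) * sInf {v : ℝ | ∃ (c : Fin n → ℝ) (y : Fin m → ℝ) (ε : Fin 1 → ℝ),
        FeasR A b N (fun _ : Fin 1 => xbar) c y ε ∧ v = ∑ q, |ε q - 1|} ∧
    -- 3. (c, y) is part of an optimal solution of GIO_R(X̂) iff of GIO_R({x̄})
    ∀ c y, (∃ ε, OptR A b N xhat c y ε) ↔
      (∃ ε : Fin 1 → ℝ, OptR A b N (fun _ : Fin 1 => xbar) c y ε) := by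
  subst hxbar
  have fwd c y ε (h : FeasR A b N xhat c y ε) := h.exists_feasR_centroid hxle hQ
  have bwd c y ε' (h : FeasR A b N (fun _ : Fin 1 => (Q : ℝ)⁻¹ • ∑ q, xhat q) c y ε') :=
    h.exists_feasR_of_centroid hxle hQ
  refine ⟨fun c y ε h h0 => h.sum_abs_sub_one_eq hxle hQ h0, ?_,
    exists_optR_iff_of_scaled (Nat.cast_pos.mpr hQ) fwd bwd⟩
  rw [setOf_feasR_value_eq_smul fwd bwd, Real.sInf_smul_of_nonneg (Nat.cast_nonneg Q),
    smul_eq_mul]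

theorem stmt_11
    (m n Q : ℕ) (hm : 0 < m) (hn : 0 < n) (hQ : 0 < Q)
    (A : Matrix (Fin m) (Fin n) ℝ) (b : Fin m → ℝ) (hb : b ≠ 0)
    (hrows : ∀ i, A i ≠ 0)
    (hPint : (interior {x : Fin n → ℝ | ∀ i, b i ≤ A.mulVec x i}).Nonempty)
    -- the normalization norm ‖·‖'
    (N : (Fin n → ℝ) → ℝ)
    (hN₁ : ∀ x y, N (x + y) ≤ N x + N y)
    (hN₂ : ∀ (a : ℝ) (x : Fin n → ℝ), N (a • x) = |a| * N x)
    (hN₃ : ∀ x, x ≠ 0 → 0 < N x)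
    -- all observed decisions satisfy A x̂_q ≤ b and x̂_q ∉ P
    (xhat : Fin Q → Fin n → ℝ)
    (hxle : ∀ q i, A.mulVec (xhat q) i ≤ b i)
    (hxnotP : ∀ q, ¬ ∀ i, b i ≤ A.mulVec (xhat q) i)
    -- the centroid x̄
    (xbar : Fin n → ℝ) (hxbar : xbar = (Q : ℝ)⁻¹ • ∑ q, xhat q) :
    -- 1. every feasible solution with bᵀ y ≠ 0 satisfies
    --    Σ|ε_q − 1| = Q |cᵀ x̄ − bᵀ y| / |bᵀ y|
    (∀ c y ε, FeasR A b N xhat c y ε → b ⬝ᵥ y ≠ 0 →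
      ∑ q, |ε q - 1| = (Q : ℝ) * (|c ⬝ᵥ xbar - b ⬝ᵥ y| / |b ⬝ᵥ y|)) ∧
    -- 2. the optimal value of GIO_R(X̂) is Q times that of GIO_R({x̄})
    sInf {v : ℝ | ∃ c y ε, FeasR A b N xhat c y ε ∧ v = ∑ q, |ε q - 1|} =
      (Q : ℝ) * sInf {v : ℝ | ∃ (c : Fin n → ℝ) (y : Fin m → ℝ) (ε : Fin 1 → ℝ),
        FeasR A b N (fun _ : Fin 1 => xbar) c y ε ∧ v = ∑ q, |ε q - 1|} ∧
    -- 3. (c, y) is part of an optimal solution of GIO_R(X̂) iff of GIO_R({x̄})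
    ∀ c y, (∃ ε, OptR A b N xhat c y ε) ↔
      (∃ ε : Fin 1 → ℝ, OptR A b N (fun _ : Fin 1 => xbar) c y ε) :=
  stmt_11_general m n Q hQ A b N xhat hxle xbar hxbar
end

section
/- Assume that for every i ∈ I the set F_i = {x ∈ ℝ^n : A x ≥ b, a_iᵀ x = b_i} is nonempty, and for x̂ ∈ ℝ^n let P_i(x̂) denote a point of F_i minimizing ‖x̂ − x‖_p over F_i. Then there exists i ∈ I such that (c*, y*, ε_1*, …, ε_Q*) = (a_i/‖a_i‖', e_i/‖a_i‖', x̂_1 − P_i(x̂_1), …, x̂_Q − P_i(x̂_Q)) is an optimal solution of GIO_p(X̂). -/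
open Matrix
open scoped ENNReal

/-- The `p`-norm on `Fin n → ℝ` (for `p ∈ [1, ∞]`), via the `PiLp` norm. -/
noncomputable def pnorm (n : ℕ) (p : ℝ≥0∞) (x : Fin n → ℝ) : ℝ :=
  ‖(WithLp.equiv p (Fin n → ℝ)).symm x‖

/-- Feasibility for the decision space inverse problem `GIO_p(X̂)`. -/
def FeasD {m n Q : ℕ} (A : Matrix (Fin m) (Fin n) ℝ) (b : Fin m → ℝ)
    (N : (Fin n → ℝ) → ℝ) (xhat : Fin Q → Fin n → ℝ)
    (c : Fin n → ℝ) (y : Fin m → ℝ) (ε : Fin Q → Fin n → ℝ) : Prop :=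
  Aᵀ.mulVec y = c ∧ (∀ i, 0 ≤ y i) ∧ (∀ q, c ⬝ᵥ xhat q = b ⬝ᵥ y + c ⬝ᵥ ε q) ∧
    (∀ q i, b i ≤ A.mulVec (xhat q - ε q) i) ∧ N c = 1

theorem stmt_12
    (m n Q : ℕ) (hm : 0 < m) (hn : 0 < n) (hQ : 0 < Q)
    (A : Matrix (Fin m) (Fin n) ℝ) (b : Fin m → ℝ)
    (hrows : ∀ i, A i ≠ 0)
    (hPint : (interior {x : Fin n → ℝ | ∀ i, b i ≤ A.mulVec x i}).Nonempty)
    -- the normalization norm ‖·‖'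
    (N : (Fin n → ℝ) → ℝ)
    (hN₁ : ∀ x y, N (x + y) ≤ N x + N y)
    (hN₂ : ∀ (a : ℝ) (x : Fin n → ℝ), N (a • x) = |a| * N x)
    (hN₃ : ∀ x, x ≠ 0 → 0 < N x)
    -- p ∈ [1, ∞]
    (p : ℝ≥0∞) (hp : 1 ≤ p)
    -- the data set X̂
    (xhat : Fin Q → Fin n → ℝ)
    -- every set F_i = {x : A x ≥ b, a_iᵀ x = b_i} is nonempty
    (hFi : ∀ i : Fin m, ∃ x : Fin n → ℝ, (∀ j, b j ≤ A.mulVec x j) ∧ A i ⬝ᵥ x = b i)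
    -- P_i(x̂): a point of F_i of minimal p-norm distance to x̂
    (Pproj : Fin m → (Fin n → ℝ) → (Fin n → ℝ))
    (hPproj : ∀ (i : Fin m) (x : Fin n → ℝ),
      ((∀ j, b j ≤ A.mulVec (Pproj i x) j) ∧ A i ⬝ᵥ Pproj i x = b i) ∧
      ∀ z : Fin n → ℝ, (∀ j, b j ≤ A.mulVec z j) → A i ⬝ᵥ z = b i →
        pnorm n p (x - Pproj i x) ≤ pnorm n p (x - z)) :
    -- conclusion: for some i the prescribed tuple is optimal for GIO_p(X̂)
    ∃ i : Fin m,
      FeasD A b N xhat ((N (A i))⁻¹ • A i) ((N (A i))⁻¹ • (Pi.single i 1 : Fin m → ℝ))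
        (fun q => xhat q - Pproj i (xhat q)) ∧
      ∀ c y ε, FeasD A b N xhat c y ε →
        ∑ q, pnorm n p (xhat q - Pproj i (xhat q)) ≤ ∑ q, pnorm n p (ε q) := by

  obtain ⟨i, -, hi⟩ := Finset.exists_min_image Finset.univ
    (fun i => ∑ q, pnorm n p (xhat q - Pproj i (xhat q))) ⟨⟨0, hm⟩, Finset.mem_univ _⟩
  have hNA : ∀ k : Fin m, 0 < N (A k) := fun k => hN₃ _ (hrows k)
  refine ⟨i, ⟨?_, ?_, ?_, ?_, ?_⟩, ?_⟩
  · ext j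
    simp [Matrix.mulVec, dotProduct, Pi.single_apply, Finset.mul_sum,
      mul_ite, Finset.sum_ite_eq, mul_comm]
  · intro k
    simp only [Pi.smul_apply, smul_eq_mul]
    refine mul_nonneg (inv_nonneg.mpr (hNA i).le) ?_
    rcases eq_or_ne k i with rfl | h
    · simp
    · simp [Pi.single_apply, h]
  · intro q
    have hP := (hPproj i (xhat q)).1.2
    have h1 : (A i) ⬝ᵥ (xhat q - (xhat q - Pproj i (xhat q))) = b i := by
      rw [sub_sub_cancel]; exact hP
    have hb : b ⬝ᵥ ((N (A i))⁻¹ • (Pi.single i 1 : Fin m → ℝ)) = (N (A i))⁻¹ * b i := by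
      simp [dotProduct, Pi.single_apply, mul_ite, Finset.sum_ite_eq, mul_comm]
    rw [hb]
    simp only [smul_dotProduct, smul_eq_mul, dotProduct_sub, hP]
    ring
  · intro q k
    have := (hPproj i (xhat q)).1.1 k
    simpa [sub_sub_cancel] using this
  · rw [hN₂]
    rw [abs_of_nonneg (inv_nonneg.mpr (hNA i).le)]
    rw [inv_mul_cancel₀ (hNA i).ne']
  · rintro c y ε ⟨hAy, hy, heq, hfeas, hNc⟩
    have hN0 : N (0 : Fin n → ℝ) = 0 := by
      have := hN₂ 0 0
      simpa using this
    have hc0 : c ≠ 0 := by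
      rintro rfl
      rw [hN0] at hNc
      norm_num at hNc
    have hy0 : y ≠ 0 := by
      rintro rfl
      rw [Matrix.mulVec_zero] at hAy
      exact hc0 hAy.symm
    obtain ⟨j, hj⟩ := Function.ne_iff.mp hy0
    have hyj : 0 < y j := (hy j).lt_of_ne (Ne.symm hj)
    have key : ∀ q, A j ⬝ᵥ (xhat q - ε q) = b j := by
      intro q
      have h1 : y ⬝ᵥ A.mulVec (xhat q - ε q) = c ⬝ᵥ (xhat q - ε q) := by
        rw [Matrix.dotProduct_mulVec, ← Matrix.mulVec_transpose, hAy]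
      have h2 : c ⬝ᵥ (xhat q - ε q) = b ⬝ᵥ y := by
        rw [dotProduct_sub]
        have := heq q
        linarith
      have hsum : ∑ k, y k * (A.mulVec (xhat q - ε q) k - b k) = 0 := by
        have : ∑ k, y k * (A.mulVec (xhat q - ε q) k - b k)
            = y ⬝ᵥ A.mulVec (xhat q - ε q) - y ⬝ᵥ b := by
          simp [dotProduct, mul_sub, Finset.sum_sub_distrib]
        rw [this, h1, h2, dotProduct_comm]
        ring
      have hterm : y j * (A.mulVec (xhat q - ε q) j - b j) = 0 :=
        (Finset.sum_eq_zero_iff_of_nonneg (fun k _ =>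
          mul_nonneg (hy k) (sub_nonneg.mpr (hfeas q k)))).mp hsum j (Finset.mem_univ j)
      have hz : A.mulVec (xhat q - ε q) j = b j := by
        rcases mul_eq_zero.mp hterm with h | h
        · exact absurd h hj
        · linarith
      simpa [Matrix.mulVec] using hz
    calc ∑ q, pnorm n p (xhat q - Pproj i (xhat q))
        ≤ ∑ q, pnorm n p (xhat q - Pproj j (xhat q)) := hi j (Finset.mem_univ j)
      _ ≤ ∑ q, pnorm n p (ε q) := by
          refine Finset.sum_le_sum fun q _ => ?_
          have h := (hPproj j (xhat q)).2 (xhat q - ε q) (hfeas q) (key q)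
          simpa [sub_sub_cancel] using h
end

section
/- Assume that for every i ∈ I the set {x ∈ ℝ^n : A x ≥ b, a_iᵀ x = b_i} is nonempty. For each i ∈ I let (ε_{1,i}*, …, ε_{Q,i}*) be an optimal solution of the inner problem: minimize Σ_{q=1}^Q ‖ε_{q,i}‖_p over (ε_{1,i}, …, ε_{Q,i}) ∈ (ℝ^n)^Q subject to A (x̂_q − ε_{q,i}) ≥ b and a_iᵀ (x̂_q − ε_{q,i}) = b_i for all q. Let i* ∈ argmin_{i ∈ I} Σ_{q=1}^Q ‖ε_{q,i}*‖_p. Then (a_{i*}/‖a_{i*}‖', e_{i*}/‖a_{i*}‖', ε_{1,i*}*, …, ε_{Q,i*}*) is an optimal solution of GIO_p(X̂); in particular, the optimal value of GIO_p(X̂) equals min_{i ∈ I} Σ_{q=1}^Q ‖ε_{q,i}*‖_p. -/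
open Matrix
open scoped ENNReal

/-- Feasibility for the inner problem indexed by `i`: every perturbed point
`x̂_q − ε_q` is feasible and lies on the hyperplane `a_iᵀ x = b_i`. -/
def InnerFeas {m n Q : ℕ} (A : Matrix (Fin m) (Fin n) ℝ) (b : Fin m → ℝ)
    (xhat : Fin Q → Fin n → ℝ) (i : Fin m) (ε : Fin Q → Fin n → ℝ) : Prop :=
  ∀ q, (∀ j, b j ≤ A.mulVec (xhat q - ε q) j) ∧ A i ⬝ᵥ (xhat q - ε q) = b i

theorem stmt_13
    (m n Q : ℕ) (hm : 0 < m) (hn : 0 < n) (hQ : 0 < Q)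
    (A : Matrix (Fin m) (Fin n) ℝ) (b : Fin m → ℝ)
    (hrows : ∀ i, A i ≠ 0)
    (hPint : (interior {x : Fin n → ℝ | ∀ i, b i ≤ A.mulVec x i}).Nonempty)
    -- the normalization norm ‖·‖'
    (N : (Fin n → ℝ) → ℝ)
    (hN₁ : ∀ x y, N (x + y) ≤ N x + N y)
    (hN₂ : ∀ (a : ℝ) (x : Fin n → ℝ), N (a • x) = |a| * N x)
    (hN₃ : ∀ x, x ≠ 0 → 0 < N x)
    -- p ∈ [1, ∞]
    (p : ℝ≥0∞) (hp : 1 ≤ p)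
    -- the data set X̂
    (xhat : Fin Q → Fin n → ℝ)
    -- every set {x : A x ≥ b, a_iᵀ x = b_i} is nonempty
    (hFi : ∀ i : Fin m, ∃ x : Fin n → ℝ, (∀ j, b j ≤ A.mulVec x j) ∧ A i ⬝ᵥ x = b i)
    -- for each i, an optimal solution of the inner problem
    (εopt : Fin m → Fin Q → Fin n → ℝ)
    (hεopt : ∀ i : Fin m, InnerFeas A b xhat i (εopt i) ∧
      ∀ ε : Fin Q → Fin n → ℝ, InnerFeas A b xhat i ε →
        ∑ q, pnorm n p (εopt i q) ≤ ∑ q, pnorm n p (ε q))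
    -- i* an optimal index of the outer problem
    (istar : Fin m)
    (histar : ∀ i : Fin m, ∑ q, pnorm n p (εopt istar q) ≤ ∑ q, pnorm n p (εopt i q)) :
    -- the prescribed tuple is optimal for GIO_p(X̂)
    (FeasD A b N xhat ((N (A istar))⁻¹ • A istar)
        ((N (A istar))⁻¹ • (Pi.single istar 1 : Fin m → ℝ)) (εopt istar) ∧
      ∀ c y ε, FeasD A b N xhat c y ε →
        ∑ q, pnorm n p (εopt istar q) ≤ ∑ q, pnorm n p (ε q)) ∧
    -- in particular, the optimal value of GIO_p(X̂) equals min_i Σ_q ‖ε_{q,i}*‖_p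
    sInf {v : ℝ | ∃ (c : Fin n → ℝ) (y : Fin m → ℝ) (ε : Fin Q → Fin n → ℝ),
        FeasD A b N xhat c y ε ∧ v = ∑ q, pnorm n p (ε q)} =
      ∑ q, pnorm n p (εopt istar q) := by

  have hNA : 0 < N (A istar) := hN₃ _ (hrows istar)
  set s : ℝ := (N (A istar))⁻¹ with hs
  have hspos : 0 < s := inv_pos.mpr hNA
  have hN0 : N (0 : Fin n → ℝ) = 0 := by
    have h := hN₂ 0 0
    simpa using h
  obtain ⟨hinner, hopt⟩ := hεopt istar
  have hfeasD : FeasD A b N xhat (s • A istar) (s • (Pi.single istar 1 : Fin m → ℝ))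
      (εopt istar) := by
    refine ⟨?_, ?_, ?_, ?_, ?_⟩
    · rw [Matrix.mulVec_smul]
      congr 1
      funext j
      simp [Matrix.mulVec, dotProduct, Pi.single_apply, Matrix.transpose_apply,
        mul_comm]
    · intro i
      by_cases h : i = istar <;>
        simp [h, Pi.single_apply, le_of_lt hspos]
    · intro q
      have h1 := (hinner q).2
      rw [dotProduct_sub] at h1
      have hb : b ⬝ᵥ (s • (Pi.single istar 1 : Fin m → ℝ)) = s * b istar := by
        rw [dotProduct_smul, dotProduct_single]
        simp [smul_eq_mul]
      rw [hb, smul_dotProduct, smul_dotProduct]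
      simp only [smul_eq_mul]
      nlinarith [h1]
    · intro q i
      exact (hinner q).1 i
    · rw [hN₂, abs_of_pos hspos]
      exact inv_mul_cancel₀ (ne_of_gt hNA)
  have key : ∀ c y ε, FeasD A b N xhat c y ε →
      ∑ q, pnorm n p (εopt istar q) ≤ ∑ q, pnorm n p (ε q) := by
    rintro c y ε ⟨hcy, hy, heq, hfe, hNc⟩
    have hcne : c ≠ 0 := by
      intro h
      rw [h, hN0] at hNc
      norm_num at hNc
    have hyne : y ≠ 0 := by
      rintro rfl
      rw [Matrix.mulVec_zero] at hcy
      exact hcne hcy.symm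
    obtain ⟨i, hi0⟩ := Function.ne_iff.mp hyne
    have hi : y i ≠ 0 := by simpa using hi0
    have hipos : 0 < y i := lt_of_le_of_ne (hy i) (Ne.symm hi)
    have hinner' : InnerFeas A b xhat i ε := by
      intro q
      refine ⟨hfe q, ?_⟩
      have hsum : ∑ j, y j * (A.mulVec (xhat q - ε q) j - b j) = 0 := by
        have h2 : c ⬝ᵥ (xhat q - ε q) = b ⬝ᵥ y := by
          rw [dotProduct_sub]
          have := heq q
          linarith
        rw [← hcy, Matrix.mulVec_transpose, ← Matrix.dotProduct_mulVec] at h2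
        have h3 : y ⬝ᵥ A.mulVec (xhat q - ε q) = y ⬝ᵥ b := by
          rw [h2, dotProduct_comm]
        simp only [dotProduct] at h3
        have hsplit : ∑ j, y j * (A.mulVec (xhat q - ε q) j - b j)
            = ∑ j, y j * A.mulVec (xhat q - ε q) j - ∑ j, y j * b j := by
          rw [← Finset.sum_sub_distrib]
          apply Finset.sum_congr rfl; intro j _; ring
        rw [hsplit, h3]; ring
      have hzero : ∀ j ∈ Finset.univ, y j * (A.mulVec (xhat q - ε q) j - b j) = 0 := by
        rw [← Finset.sum_eq_zero_iff_of_nonneg]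
        · exact hsum
        · intro j _
          exact mul_nonneg (hy j) (sub_nonneg.mpr (hfe q j))
      have h4 := hzero i (Finset.mem_univ i)
      have h5 : A.mulVec (xhat q - ε q) i = b i := by
        rcases mul_eq_zero.mp h4 with h | h
        · exact absurd h hi
        · linarith
      exact h5
    calc ∑ q, pnorm n p (εopt istar q) ≤ ∑ q, pnorm n p (εopt i q) := histar i
      _ ≤ ∑ q, pnorm n p (ε q) := (hεopt i).2 ε hinner'
  refine ⟨⟨hfeasD, key⟩, ?_⟩
  have hmem : (∑ q, pnorm n p (εopt istar q)) ∈
      {v : ℝ | ∃ (c : Fin n → ℝ) (y : Fin m → ℝ) (ε : Fin Q → Fin n → ℝ),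
        FeasD A b N xhat c y ε ∧ v = ∑ q, pnorm n p (ε q)} :=
    ⟨_, _, _, hfeasD, rfl⟩
  have hlb : ∀ v ∈ {v : ℝ | ∃ (c : Fin n → ℝ) (y : Fin m → ℝ) (ε : Fin Q → Fin n → ℝ),
      FeasD A b N xhat c y ε ∧ v = ∑ q, pnorm n p (ε q)},
      (∑ q, pnorm n p (εopt istar q)) ≤ v := by
    rintro v ⟨c, y, ε, hf, rfl⟩
    exact key c y ε hf
  exact le_antisymm (csInf_le ⟨_, hlb⟩ hmem) (le_csInf ⟨_, hmem⟩ hlb)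
end

section
/- Assume x̂_q ∈ P for all q ∈ {1, …, Q}, that for every i ∈ I the set {x ∈ ℝ^n : A x ≥ b, a_iᵀ x = b_i} is nonempty, and that the normalization norm is ‖·‖' = ‖·‖_1. Let p ∈ [1, ∞], let z_p* denote the optimal value of GIO_p(X̂), and let z_A* denote the optimal value of GIO_A(X̂). Then z_p* ≥ z_A*. -/
open Matrix
open scoped ENNReal

lemma abs_apply_le_pnorm {n : ℕ} {p : ℝ≥0∞} (hp : 1 ≤ p) (x : Fin n → ℝ) (j : Fin n) :
    |x j| ≤ pnorm n p x := by
  unfold pnorm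
  rcases eq_or_ne p ∞ with rfl | hpt
  · rw [PiLp.norm_eq_ciSup]
    have : |x j| = ‖((WithLp.equiv ∞ (Fin n → ℝ)).symm x) j‖ := rfl
    rw [this]
    exact le_ciSup (f := fun i => ‖((WithLp.equiv ∞ (Fin n → ℝ)).symm x) i‖)
      (Finite.bddAbove_range _) j
  · have hr : 0 < p.toReal := ENNReal.toReal_pos (by intro h; rw [h] at hp; simp at hp) hpt
    rw [PiLp.norm_eq_sum hr]
    have h1 : |x j| ^ p.toReal ≤ ∑ i, ‖((WithLp.equiv p (Fin n → ℝ)).symm x) i‖ ^ p.toReal := by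
      have : |x j| ^ p.toReal = ‖((WithLp.equiv p (Fin n → ℝ)).symm x) j‖ ^ p.toReal := rfl
      rw [this]
      exact Finset.single_le_sum (fun i _ => Real.rpow_nonneg (norm_nonneg _) _)
        (Finset.mem_univ j)
    calc |x j| = (|x j| ^ p.toReal) ^ (1 / p.toReal) := by
          rw [one_div, Real.rpow_rpow_inv (abs_nonneg _) hr.ne']
      _ ≤ _ := Real.rpow_le_rpow (Real.rpow_nonneg (abs_nonneg _) _) h1
          (by positivity)

lemma abs_dot_le_pnorm {n : ℕ} {p : ℝ≥0∞} (hp : 1 ≤ p) (c x : Fin n → ℝ)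
    (hc : ∑ j, |c j| = 1) : |c ⬝ᵥ x| ≤ pnorm n p x := by
  calc |c ⬝ᵥ x| ≤ ∑ j, |c j * x j| := Finset.abs_sum_le_sum_abs _ _
    _ = ∑ j, |c j| * |x j| := by simp [abs_mul]
    _ ≤ ∑ j, |c j| * pnorm n p x := by
        refine Finset.sum_le_sum fun j _ => ?_
        exact mul_le_mul_of_nonneg_left (abs_apply_le_pnorm hp x j) (abs_nonneg _)
    _ = pnorm n p x := by rw [← Finset.sum_mul, hc, one_mul]

theorem stmt_14
    (m n Q : ℕ) (hm : 0 < m) (hn : 0 < n) (hQ : 0 < Q)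
    (A : Matrix (Fin m) (Fin n) ℝ) (b : Fin m → ℝ)
    (hrows : ∀ i, A i ≠ 0)
    (hPint : (interior {x : Fin n → ℝ | ∀ i, b i ≤ A.mulVec x i}).Nonempty)
    -- p ∈ [1, ∞]
    (p : ℝ≥0∞) (hp : 1 ≤ p)
    -- all observed decisions are feasible: x̂_q ∈ P
    (xhat : Fin Q → Fin n → ℝ)
    (hfeasX : ∀ q i, b i ≤ A.mulVec (xhat q) i)
    -- every set {x : A x ≥ b, a_iᵀ x = b_i} is nonempty
    (hFi : ∀ i : Fin m, ∃ x : Fin n → ℝ, (∀ j, b j ≤ A.mulVec x j) ∧ A i ⬝ᵥ x = b i) :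
    -- with ‖·‖' = ‖·‖₁, the optimal value of GIO_A(X̂) is at most that of GIO_p(X̂)
    sInf {v : ℝ≥0∞ | ∃ (c : Fin n → ℝ) (y : Fin m → ℝ) (ε : Fin Q → ℝ),
        FeasA A b (fun u => ∑ j, |u j|) xhat c y ε ∧
          v = ENNReal.ofReal (∑ q, |ε q|)} ≤
      sInf {v : ℝ≥0∞ | ∃ (c : Fin n → ℝ) (y : Fin m → ℝ) (ε : Fin Q → Fin n → ℝ),
        FeasD A b (fun u => ∑ j, |u j|) xhat c y ε ∧
          v = ENNReal.ofReal (∑ q, pnorm n p (ε q))} := by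
  refine le_sInf ?_
  rintro v ⟨c, y, ε, ⟨h1, h2, h3, h4, h5⟩, rfl⟩
  have hmem : ENNReal.ofReal (∑ q, |c ⬝ᵥ ε q|) ∈
      {v : ℝ≥0∞ | ∃ (c : Fin n → ℝ) (y : Fin m → ℝ) (ε : Fin Q → ℝ),
        FeasA A b (fun u => ∑ j, |u j|) xhat c y ε ∧
          v = ENNReal.ofReal (∑ q, |ε q|)} :=
    ⟨c, y, fun q => c ⬝ᵥ ε q, ⟨h1, h2, h3, h5⟩, rfl⟩
  refine le_trans (sInf_le hmem) ?_
  refine ENNReal.ofReal_le_ofReal ?_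
  exact Finset.sum_le_sum fun q _ => abs_dot_le_pnorm hp c (ε q) h5
end

section
/- Let z⁺_LP be the optimal value (+∞ if infeasible) of: minimize Σ_{q=1}^Q |ε_q − 1| over (c, y, ε_1, …, ε_Q) subject to Aᵀ y = c, y ≥ 0, cᵀ x̂_q = ε_q for all q, and bᵀ y = 1. Let z⁻_LP be the optimal value (+∞ if infeasible) of the analogous problem with cᵀ x̂_q = −ε_q for all q and bᵀ y = −1. Let z⁰_LP = 0 if there exist (c, y) with Aᵀ y = c, y ≥ 0, cᵀ x̂_q = 0 for all q, bᵀ y = 0, and yᵀ 1 = 1 (with ε_q := 1 for all q in this sub-problem), and z⁰_LP = +∞ otherwise. Let z*_LP = min{z⁺_LP, z⁻_LP, z⁰_LP} and let (c*, y*, ε_1*, …, ε_Q*) be an optimal solution of the sub-problem attaining z*_LP. If c* ≠ 0, then z*_LP equals the optimal value of GIO_R(X̂) and (c*/‖c*‖', y*/‖c*‖', ε_1*, …, ε_Q*) is an optimal solution of GIO_R(X̂). -/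
open Matrix
open scoped ENNReal

/-- Feasibility for the LP relaxation `GIO_R⁺_LP(X̂)`. -/
def FeasPLP {m n Q : ℕ} (A : Matrix (Fin m) (Fin n) ℝ) (b : Fin m → ℝ)
    (xhat : Fin Q → Fin n → ℝ)
    (c : Fin n → ℝ) (y : Fin m → ℝ) (ε : Fin Q → ℝ) : Prop :=
  Aᵀ.mulVec y = c ∧ (∀ i, 0 ≤ y i) ∧ (∀ q, c ⬝ᵥ xhat q = ε q) ∧ b ⬝ᵥ y = 1

/-- Feasibility for the LP relaxation `GIO_R⁻_LP(X̂)`. -/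
def FeasNLP {m n Q : ℕ} (A : Matrix (Fin m) (Fin n) ℝ) (b : Fin m → ℝ)
    (xhat : Fin Q → Fin n → ℝ)
    (c : Fin n → ℝ) (y : Fin m → ℝ) (ε : Fin Q → ℝ) : Prop :=
  Aᵀ.mulVec y = c ∧ (∀ i, 0 ≤ y i) ∧ (∀ q, c ⬝ᵥ xhat q = -(ε q)) ∧ b ⬝ᵥ y = -1

/-- Feasibility for the LP relaxation `GIO_R⁰_LP(X̂)`. -/
def FeasZLP {m n Q : ℕ} (A : Matrix (Fin m) (Fin n) ℝ) (b : Fin m → ℝ)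
    (xhat : Fin Q → Fin n → ℝ)
    (c : Fin n → ℝ) (y : Fin m → ℝ) : Prop :=
  Aᵀ.mulVec y = c ∧ (∀ i, 0 ≤ y i) ∧ (∀ q, c ⬝ᵥ xhat q = 0) ∧ b ⬝ᵥ y = 0 ∧
    (∑ i, y i) = 1

/-- Optimal value (`+∞` if infeasible) of `GIO_R⁺_LP(X̂)`. -/
noncomputable def zPLP {m n Q : ℕ} (A : Matrix (Fin m) (Fin n) ℝ) (b : Fin m → ℝ)
    (xhat : Fin Q → Fin n → ℝ) : ℝ≥0∞ :=
  sInf {v : ℝ≥0∞ | ∃ (c : Fin n → ℝ) (y : Fin m → ℝ) (ε : Fin Q → ℝ),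
    FeasPLP A b xhat c y ε ∧ v = ENNReal.ofReal (∑ q, |ε q - 1|)}

/-- Optimal value (`+∞` if infeasible) of `GIO_R⁻_LP(X̂)`. -/
noncomputable def zNLP {m n Q : ℕ} (A : Matrix (Fin m) (Fin n) ℝ) (b : Fin m → ℝ)
    (xhat : Fin Q → Fin n → ℝ) : ℝ≥0∞ :=
  sInf {v : ℝ≥0∞ | ∃ (c : Fin n → ℝ) (y : Fin m → ℝ) (ε : Fin Q → ℝ),
    FeasNLP A b xhat c y ε ∧ v = ENNReal.ofReal (∑ q, |ε q - 1|)}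

/-- Optimal value (`0` if feasible, `+∞` otherwise) of `GIO_R⁰_LP(X̂)`. -/
noncomputable def zZLP {m n Q : ℕ} (A : Matrix (Fin m) (Fin n) ℝ) (b : Fin m → ℝ)
    (xhat : Fin Q → Fin n → ℝ) : ℝ≥0∞ :=
  sInf {v : ℝ≥0∞ | ∃ (c : Fin n → ℝ) (y : Fin m → ℝ),
    FeasZLP A b xhat c y ∧ v = 0}

/- Proof idea: the constraints of `GIO_R(X̂)` are invariant under positive scaling of `(c, y)`
except for the normalization `‖c‖' = 1`.  Rescaling a feasible point by `1 / |bᵀ y|` (or by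
`1 / yᵀ 1` when `bᵀ y = 0`) therefore gives a point of one of the three LP sub-problems with the
same `ε`, so `z*_LP` is a lower bound for `GIO_R(X̂)`; conversely, rescaling `(c*, y*)` by
`1 / ‖c*‖'` gives a point of `GIO_R(X̂)` of value `z*_LP`. -/

noncomputable def zLP {m n Q : ℕ} (A : Matrix (Fin m) (Fin n) ℝ) (b : Fin m → ℝ)
    (xhat : Fin Q → Fin n → ℝ) : ℝ≥0∞ :=
  min (min (zPLP A b xhat) (zNLP A b xhat)) (zZLP A b xhat)

section

variable {m n Q : ℕ} {A : Matrix (Fin m) (Fin n) ℝ} {b : Fin m → ℝ}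
  {N : (Fin n → ℝ) → ℝ} {xhat : Fin Q → Fin n → ℝ}
  {c : Fin n → ℝ} {y : Fin m → ℝ} {ε : Fin Q → ℝ}

namespace FeasR

theorem inv_smul_feasPLP (h : FeasR A b N xhat c y ε) (hby : 0 < b ⬝ᵥ y) :
    FeasPLP A b xhat ((b ⬝ᵥ y)⁻¹ • c) ((b ⬝ᵥ y)⁻¹ • y) ε := by
  obtain ⟨hc, hy, hgap, -, -⟩ := h
  refine ⟨by rw [mulVec_smul, hc], fun i => mul_nonneg (inv_nonneg.2 hby.le) (hy i),
    fun q => ?_, ?_⟩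
  · rw [smul_dotProduct, hgap q, smul_eq_mul]
    field_simp
  · rw [dotProduct_smul, smul_eq_mul, inv_mul_cancel₀ hby.ne']

theorem inv_smul_feasNLP (h : FeasR A b N xhat c y ε) (hby : b ⬝ᵥ y < 0) :
    FeasNLP A b xhat ((-(b ⬝ᵥ y))⁻¹ • c) ((-(b ⬝ᵥ y))⁻¹ • y) ε := by
  obtain ⟨hc, hy, hgap, -, -⟩ := h
  refine ⟨by rw [mulVec_smul, hc],
    fun i => mul_nonneg (inv_nonneg.2 (neg_nonneg.2 hby.le)) (hy i), fun q => ?_, ?_⟩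
  · have hne := hby.ne
    rw [smul_dotProduct, hgap q, smul_eq_mul]
    field_simp
  · have hne := hby.ne
    rw [dotProduct_smul, smul_eq_mul]
    field_simp

theorem y_ne_zero (hN0 : N 0 = 0) (h : FeasR A b N xhat c y ε) : y ≠ 0 := by
  rintro rfl
  obtain ⟨hc, -, -, hNc, -⟩ := h
  rw [← hc, mulVec_zero, hN0] at hNc
  exact zero_ne_one hNc

theorem inv_smul_feasZLP (hN0 : N 0 = 0) (h : FeasR A b N xhat c y ε) (hby : b ⬝ᵥ y = 0) :
    FeasZLP A b xhat ((∑ i, y i)⁻¹ • c) ((∑ i, y i)⁻¹ • y) := by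
  have hsum : 0 < ∑ i, y i := by
    obtain ⟨i, hi⟩ := Function.ne_iff.mp (h.y_ne_zero hN0)
    exact Finset.sum_pos' (fun j _ => h.2.1 j) ⟨i, Finset.mem_univ i, (h.2.1 i).lt_of_ne' hi⟩
  obtain ⟨hc, hy, hgap, -, -⟩ := h
  refine ⟨by rw [mulVec_smul, hc], fun i => mul_nonneg (inv_nonneg.2 hsum.le) (hy i),
    fun q => ?_, ?_, ?_⟩
  · rw [smul_dotProduct, hgap q, hby, mul_zero, smul_zero]
  · rw [dotProduct_smul, hby, smul_zero]
  · simp only [Pi.smul_apply, smul_eq_mul, ← Finset.mul_sum, inv_mul_cancel₀ hsum.ne']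

theorem zLP_le (hN0 : N 0 = 0) (h : FeasR A b N xhat c y ε) :
    zLP A b xhat ≤ ENNReal.ofReal (∑ q, |ε q - 1|) := by
  rcases lt_trichotomy (b ⬝ᵥ y) 0 with hby | hby | hby
  · exact (min_le_left _ _).trans <| (min_le_right _ _).trans <|
      sInf_le ⟨_, _, ε, h.inv_smul_feasNLP hby, rfl⟩
  · have hε : ∑ q, |ε q - 1| = 0 := by simp [h.2.2.2.2 hby]
    rw [hε, ENNReal.ofReal_zero]
    exact (min_le_right _ _).trans (sInf_le ⟨_, _, h.inv_smul_feasZLP hN0 hby, rfl⟩)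
  · exact (min_le_left _ _).trans <| (min_le_left _ _).trans <|
      sInf_le ⟨_, _, ε, h.inv_smul_feasPLP hby, rfl⟩

end FeasR

theorem FeasPLP.smul_feasR (h : FeasPLP A b xhat c y ε) {t : ℝ} (ht : 0 < t)
    (hN : N (t • c) = 1) : FeasR A b N xhat (t • c) (t • y) ε := by
  obtain ⟨hc, hy, hgap, hby⟩ := h
  refine ⟨by rw [mulVec_smul, hc], fun i => mul_nonneg ht.le (hy i), fun q => ?_, hN, ?_⟩
  · simp only [smul_dotProduct, dotProduct_smul, smul_eq_mul, hgap q, hby]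
    ring
  · rw [dotProduct_smul, hby, smul_eq_mul, mul_one]
    exact fun h0 => absurd h0 ht.ne'

theorem FeasNLP.smul_feasR (h : FeasNLP A b xhat c y ε) {t : ℝ} (ht : 0 < t)
    (hN : N (t • c) = 1) : FeasR A b N xhat (t • c) (t • y) ε := by
  obtain ⟨hc, hy, hgap, hby⟩ := h
  refine ⟨by rw [mulVec_smul, hc], fun i => mul_nonneg ht.le (hy i), fun q => ?_, hN, ?_⟩
  · simp only [smul_dotProduct, dotProduct_smul, smul_eq_mul, hgap q, hby]
    ring
  · rw [dotProduct_smul, hby, smul_eq_mul, mul_neg_one, neg_eq_zero]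
    exact fun h0 => absurd h0 ht.ne'

theorem FeasZLP.smul_feasR (h : FeasZLP A b xhat c y) {t : ℝ} (ht : 0 ≤ t)
    (hN : N (t • c) = 1) (hε : ∀ q, ε q = 1) : FeasR A b N xhat (t • c) (t • y) ε := by
  obtain ⟨hc, hy, hgap, hby, -⟩ := h
  refine ⟨by rw [mulVec_smul, hc], fun i => mul_nonneg ht (hy i), fun q => ?_, hN,
    fun _ => hε⟩
  simp only [smul_dotProduct, dotProduct_smul, hgap q, hby, smul_zero, mul_zero]

theorem FeasZLP.zZLP_eq_zero (h : FeasZLP A b xhat c y) : zZLP A b xhat = 0 :=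
  le_antisymm (sInf_le ⟨c, y, h, rfl⟩) zero_le

end

theorem stmt_19_general
    (m n Q : ℕ)
    (A : Matrix (Fin m) (Fin n) ℝ) (b : Fin m → ℝ)
    -- the normalization norm ‖·‖'
    (N : (Fin n → ℝ) → ℝ)
    (hN₂ : ∀ (a : ℝ) (x : Fin n → ℝ), N (a • x) = |a| * N x)
    (hN₃ : ∀ x, x ≠ 0 → 0 < N x)
    -- the data set X̂
    (xhat : Fin Q → Fin n → ℝ)
    -- (c*, y*, ε*) is an optimal solution of a sub-problem attaining
    -- z*_LP = min{z⁺_LP, z⁻_LP, z⁰_LP}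
    (cstar : Fin n → ℝ) (ystar : Fin m → ℝ) (εstar : Fin Q → ℝ)
    (hattain :
      (FeasPLP A b xhat cstar ystar εstar ∧
        (∀ c y ε, FeasPLP A b xhat c y ε →
          ∑ q, |εstar q - 1| ≤ ∑ q, |ε q - 1|) ∧
        ENNReal.ofReal (∑ q, |εstar q - 1|) =
          min (min (zPLP A b xhat) (zNLP A b xhat)) (zZLP A b xhat)) ∨
      (FeasNLP A b xhat cstar ystar εstar ∧
        (∀ c y ε, FeasNLP A b xhat c y ε →
          ∑ q, |εstar q - 1| ≤ ∑ q, |ε q - 1|) ∧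
        ENNReal.ofReal (∑ q, |εstar q - 1|) =
          min (min (zPLP A b xhat) (zNLP A b xhat)) (zZLP A b xhat)) ∨
      (FeasZLP A b xhat cstar ystar ∧ (∀ q, εstar q = 1) ∧
        zZLP A b xhat =
          min (min (zPLP A b xhat) (zNLP A b xhat)) (zZLP A b xhat)))
    -- assume c* ≠ 0
    (hc : cstar ≠ 0) :
    -- then z*_LP equals the optimal value of GIO_R(X̂) ...
    min (min (zPLP A b xhat) (zNLP A b xhat)) (zZLP A b xhat) =
      sInf {v : ℝ≥0∞ | ∃ (c : Fin n → ℝ) (y : Fin m → ℝ) (ε : Fin Q → ℝ),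
        FeasR A b N xhat c y ε ∧ v = ENNReal.ofReal (∑ q, |ε q - 1|)} ∧
    -- ... and the normalized tuple is an optimal solution of GIO_R(X̂)
    (FeasR A b N xhat ((N cstar)⁻¹ • cstar) ((N cstar)⁻¹ • ystar) εstar ∧
      ∀ c y ε, FeasR A b N xhat c y ε →
        ∑ q, |εstar q - 1| ≤ ∑ q, |ε q - 1|) := by
  have hN0 : N 0 = 0 := by simpa using hN₂ 0 0
  have ht : 0 < (N cstar)⁻¹ := inv_pos.2 (hN₃ _ hc)
  have hnorm : N ((N cstar)⁻¹ • cstar) = 1 := by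
    rw [hN₂, abs_of_pos ht, inv_mul_cancel₀ (hN₃ _ hc).ne']
  obtain ⟨hfeas, hval⟩ :
      FeasR A b N xhat ((N cstar)⁻¹ • cstar) ((N cstar)⁻¹ • ystar) εstar ∧
        zLP A b xhat = ENNReal.ofReal (∑ q, |εstar q - 1|) := by
    rcases hattain with ⟨h, -, hz⟩ | ⟨h, -, hz⟩ | ⟨h, hε, -⟩
    · exact ⟨h.smul_feasR ht hnorm, hz.symm⟩
    · exact ⟨h.smul_feasR ht hnorm, hz.symm⟩
    · refine ⟨h.smul_feasR ht.le hnorm hε, ?_⟩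
      simp [zLP, h.zZLP_eq_zero, hε]
  have hleast : IsLeast {v | ∃ c y ε, FeasR A b N xhat c y ε ∧
      v = ENNReal.ofReal (∑ q, |ε q - 1|)} (zLP A b xhat) :=
    ⟨⟨_, _, _, hfeas, hval⟩, by rintro v ⟨c, y, ε, hf, rfl⟩; exact hf.zLP_le hN0⟩
  refine ⟨hleast.isGLB.sInf_eq.symm, hfeas, fun c y ε hf => ?_⟩
  have hle := hval ▸ hf.zLP_le hN0
  exact (ENNReal.ofReal_le_ofReal_iff (Finset.sum_nonneg fun q _ => abs_nonneg _)).1 hle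

theorem stmt_19
    (m n Q : ℕ) (hm : 0 < m) (hn : 0 < n) (hQ : 0 < Q)
    (A : Matrix (Fin m) (Fin n) ℝ) (b : Fin m → ℝ) (hb : b ≠ 0)
    (hrows : ∀ i, A i ≠ 0)
    (hPint : (interior {x : Fin n → ℝ | ∀ i, b i ≤ A.mulVec x i}).Nonempty)
    -- the normalization norm ‖·‖'
    (N : (Fin n → ℝ) → ℝ)
    (hN₁ : ∀ x y, N (x + y) ≤ N x + N y)
    (hN₂ : ∀ (a : ℝ) (x : Fin n → ℝ), N (a • x) = |a| * N x)
    (hN₃ : ∀ x, x ≠ 0 → 0 < N x)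
    -- the data set X̂
    (xhat : Fin Q → Fin n → ℝ)
    -- (c*, y*, ε*) is an optimal solution of a sub-problem attaining
    -- z*_LP = min{z⁺_LP, z⁻_LP, z⁰_LP}
    (cstar : Fin n → ℝ) (ystar : Fin m → ℝ) (εstar : Fin Q → ℝ)
    (hattain :
      (FeasPLP A b xhat cstar ystar εstar ∧
        (∀ c y ε, FeasPLP A b xhat c y ε →
          ∑ q, |εstar q - 1| ≤ ∑ q, |ε q - 1|) ∧
        ENNReal.ofReal (∑ q, |εstar q - 1|) =
          min (min (zPLP A b xhat) (zNLP A b xhat)) (zZLP A b xhat)) ∨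
      (FeasNLP A b xhat cstar ystar εstar ∧
        (∀ c y ε, FeasNLP A b xhat c y ε →
          ∑ q, |εstar q - 1| ≤ ∑ q, |ε q - 1|) ∧
        ENNReal.ofReal (∑ q, |εstar q - 1|) =
          min (min (zPLP A b xhat) (zNLP A b xhat)) (zZLP A b xhat)) ∨
      (FeasZLP A b xhat cstar ystar ∧ (∀ q, εstar q = 1) ∧
        zZLP A b xhat =
          min (min (zPLP A b xhat) (zNLP A b xhat)) (zZLP A b xhat)))
    -- assume c* ≠ 0
    (hc : cstar ≠ 0) :
    -- then z*_LP equals the optimal value of GIO_R(X̂) ...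
    min (min (zPLP A b xhat) (zNLP A b xhat)) (zZLP A b xhat) =
      sInf {v : ℝ≥0∞ | ∃ (c : Fin n → ℝ) (y : Fin m → ℝ) (ε : Fin Q → ℝ),
        FeasR A b N xhat c y ε ∧ v = ENNReal.ofReal (∑ q, |ε q - 1|)} ∧
    -- ... and the normalized tuple is an optimal solution of GIO_R(X̂)
    (FeasR A b N xhat ((N cstar)⁻¹ • cstar) ((N cstar)⁻¹ • ystar) εstar ∧
      ∀ c y ε, FeasR A b N xhat c y ε →
        ∑ q, |εstar q - 1| ≤ ∑ q, |ε q - 1|) :=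
  stmt_19_general m n Q A b N hN₂ hN₃ xhat cstar ystar εstar hattain hc
end
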